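/- arXiv:2009.05035 — 12 statements merged into one kernel-verified Lean document; each statement's English description precedes it below -/
import Mathlib

section
/- Let A be a subset of ℝ such that the additive subgroup of ℝ generated by A is dense in ℝ. Then for every x > 0 and every ε > 0 there exists g ∈ A such that the set xℤ + gℤ is ε-dense in ℝ; that is, for every r ∈ ℝ there exist integers m, n with |r − (m·x + n·g)| ≤ ε. (Observation 6.2 of the paper.) -/
/-- Observation 6.2: if the additive subgroup generated by `A ⊆ ℝ` is dense in `ℝ`,
then for every `x > 0` and `ε > 0` there is `g ∈ A` such that `xℤ + gℤ` is `ε`-dense. -/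
theorem obs_6_2 (A : Set ℝ) (hA : Dense ((AddSubgroup.closure A : AddSubgroup ℝ) : Set ℝ))
    (x ε : ℝ) (hx : 0 < x) (hε : 0 < ε) :
    ∃ g ∈ A, ∀ r : ℝ, ∃ m n : ℤ, |r - ((m : ℝ) * x + (n : ℝ) * g)| ≤ ε := by
  by_contra h
  push_neg at h
  -- h : ∀ g ∈ A, ∃ r, ∀ m n, ε < |r - (m x + n g)|
  set N : ℕ := ⌈x / (2 * ε)⌉₊ with hN
  have hNf : (0 : ℝ) < (N.factorial : ℝ) := by positivity
  set c : ℝ := x / (N.factorial : ℝ) with hc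
  have hcpos : 0 < c := div_pos hx hNf
  -- every g ∈ A lies in (x / N!) ℤ
  have key : ∀ g ∈ A, g ∈ AddSubgroup.zmultiples c := by
    intro g hg
    obtain ⟨r, hr⟩ := h g hg
    rcases AddSubgroup.dense_or_cyclic (AddSubgroup.closure ({x, g} : Set ℝ)) with hd | ⟨a, ha⟩
    · -- dense case: contradicts hr
      obtain ⟨s, hs, hsd⟩ := hd.exists_dist_lt r hε
      obtain ⟨m, n, hmn⟩ := AddSubgroup.mem_closure_pair.mp hs
      exfalso
      have := hr m n
      rw [Real.dist_eq] at hsd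
      simp only [zsmul_eq_mul] at hmn
      rw [← hmn] at hsd
      exact absurd hsd (not_lt.mpr this.le)
    · -- cyclic case
      have hxS : x ∈ AddSubgroup.closure ({x, g} : Set ℝ) :=
        AddSubgroup.subset_closure (by simp)
      have hgS : g ∈ AddSubgroup.closure ({x, g} : Set ℝ) :=
        AddSubgroup.subset_closure (by simp)
      rw [ha, AddSubgroup.mem_closure_singleton] at hxS hgS
      obtain ⟨k, hk⟩ := hxS
      obtain ⟨j, hj⟩ := hgS
      simp only [zsmul_eq_mul] at hk hj
      have ha0 : a ≠ 0 := by
        rintro rfl; rw [mul_zero] at hk; exact hx.ne' hk.symm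
      set b : ℝ := |a| with hb
      have hbpos : 0 < b := abs_pos.mpr ha0
      -- x = l * b for a positive integer l
      have hxb : x = |k| * b := by
        have : |(k : ℝ) * a| = x := by rw [hk]; exact abs_of_pos hx
        rw [← this, abs_mul, Int.cast_abs]
      -- g = j' * b for an integer j'
      obtain ⟨j', hj'⟩ : ∃ j' : ℤ, g = (j' : ℝ) * b := by
        rcases abs_choice a with hba | hba
        · exact ⟨j, by rw [hb, hba, hj]⟩
        · exact ⟨-j, by push_cast; rw [hb, hba, neg_mul_neg, hj]⟩
      by_cases hble : b ≤ 2 * ε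
      · -- b small: the cyclic group is ε-dense, contradicting hr
        exfalso
        set n' : ℤ := round (r / b) with hn'
        have hclose : |r - (n' : ℝ) * b| ≤ ε := by
          have h1 : |r / b - (n' : ℝ)| ≤ 1 / 2 := abs_sub_round (r / b)
          have h2 : |r - (n' : ℝ) * b| = |(r / b - (n' : ℝ)) * b| := by
            congr 1
            field_simp
          rw [h2, abs_mul, abs_of_pos hbpos]
          calc |r / b - (n' : ℝ)| * b ≤ (1 / 2) * b := by
                exact mul_le_mul_of_nonneg_right h1 hbpos.le
            _ ≤ (1 / 2) * (2 * ε) := by nlinarith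
            _ = ε := by ring
        -- n' * b ∈ closure {x, g}
        have hmem : (n' : ℝ) * b ∈ AddSubgroup.closure ({x, g} : Set ℝ) := by
          rw [ha, AddSubgroup.mem_closure_singleton]
          rcases abs_choice a with hba | hba
          · exact ⟨n', by rw [zsmul_eq_mul, hb, hba]⟩
          · exact ⟨-n', by rw [zsmul_eq_mul, hb, hba]; push_cast; ring⟩
        obtain ⟨m, n, hmn⟩ := AddSubgroup.mem_closure_pair.mp hmem
        simp only [zsmul_eq_mul] at hmn
        rw [← hmn] at hclose
        exact absurd hclose (not_le.mpr (hr m n))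
      · -- b large: l is small, so b is a multiple of c
        push_neg at hble
        set l : ℕ := k.natAbs with hl
        have hxb' : x = (l : ℝ) * b := by
          rw [hxb]; congr 1; rw [hl, Nat.cast_natAbs, Int.cast_abs]
        have hlpos : 0 < l := by
          by_contra hl0
          push_neg at hl0
          interval_cases l
          simp at hxb'
          exact hx.ne' hxb'
        have hlleN : l ≤ N := by
          have h1 : (l : ℝ) = x / b := by
            rw [hxb', mul_div_cancel_right₀ _ hbpos.ne']
          have h2 : x / b < x / (2 * ε) := by
            apply div_lt_div_of_pos_left hx (by positivity) hble
          have h3 : x / (2 * ε) ≤ (N : ℝ) := Nat.le_ceil _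
          have : (l : ℝ) ≤ (N : ℝ) := by linarith
          exact_mod_cast this
        have hdvd : l ∣ N.factorial := Nat.dvd_factorial hlpos hlleN
        obtain ⟨t, ht⟩ := hdvd
        -- b = t * c
        have hbc : b = (t : ℝ) * c := by
          have hlne : (l : ℝ) ≠ 0 := Nat.cast_ne_zero.mpr hlpos.ne'
          have : (N.factorial : ℝ) = (l : ℝ) * (t : ℝ) := by exact_mod_cast ht
          have htne : (t : ℝ) ≠ 0 := by
            intro h0
            rw [h0, mul_zero] at this
            exact hNf.ne' this
          rw [hc, this, hxb']
          field_simp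
        rw [AddSubgroup.mem_zmultiples_iff]
        refine ⟨j' * (t : ℤ), ?_⟩
        rw [zsmul_eq_mul, hj', hbc]
        push_cast
        ring
  -- closure A ≤ zmultiples c, contradicting density
  have hle : (AddSubgroup.closure A : AddSubgroup ℝ) ≤ AddSubgroup.zmultiples c :=
    (AddSubgroup.closure_le _).mpr key
  obtain ⟨s, hs, hsd⟩ := hA.exists_dist_lt (c / 2) (half_pos hcpos)
  obtain ⟨t, ht⟩ := AddSubgroup.mem_zmultiples_iff.mp (hle hs)
  rw [zsmul_eq_mul] at ht
  rw [Real.dist_eq, ← ht] at hsd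
  rcases le_or_gt t 0 with htle | htpos
  · have : (t : ℝ) * c ≤ 0 := mul_nonpos_of_nonpos_of_nonneg (by exact_mod_cast htle) hcpos.le
    rw [abs_lt] at hsd
    linarith [hsd.2]
  · have ht1 : (1 : ℤ) ≤ t := htpos
    have : c ≤ (t : ℝ) * c := by
      nlinarith [(by exact_mod_cast ht1 : (1:ℝ) ≤ (t:ℝ))]
    rw [abs_lt] at hsd
    linarith [hsd.1]
end

section
/- For real numbers p < u < v < q define D(p, q; u, v) = (1/2)·log( ((v − p)·(q − u)) / ((u − p)·(q − v)) ) (the Hilbert distance between u and v in the interval (p, q)). Then for all real numbers a < a' < x < y < z < b one has D(a, b; x, y) / D(a, b; x, z) ≤ D(a', b; x, y) / D(a', b; x, z); equivalently, since all four quantities are positive, D(a, b; x, y)·D(a', b; x, z) ≤ D(a', b; x, y)·D(a, b; x, z). (The lemma proved in the Appendix.) -/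
/-!
Write `D(p, q; u, v) = φ(v) - φ(u)` with `φ(t) = ½ (log (t - p) - log (q - t))`.
With `F = φ_{a,b}` and `G = φ_{a',b}` the claim reads
`(F(y) - F(x)) / (G(y) - G(x)) ≤ (F(z) - F(x)) / (G(z) - G(x))`,
an instance of the monotone L'Hôpital rule: the ratio of derivatives
`F'/G' = (b - a)(t - a') / ((b - a')(t - a))` is nondecreasing because `a < a'`.
-/

open Real Set

lemma monotoneOn_of_hasDerivAt_nonneg {D : Set ℝ} (hD : Convex ℝ D) {f f' : ℝ → ℝ}
    (hf : ∀ t ∈ D, HasDerivAt f (f' t) t) (hf' : ∀ t ∈ D, 0 ≤ f' t) : MonotoneOn f D :=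
  monotoneOn_of_hasDerivWithinAt_nonneg hD (fun t ht => (hf t ht).continuousAt.continuousWithinAt)
    (fun t ht => (hf t (interior_subset ht)).hasDerivWithinAt)
    (fun t ht => hf' t (interior_subset ht))

/-- Monotone L'Hôpital rule, in cross-multiplied form. -/
theorem sub_mul_sub_le_of_monotoneOn_deriv_div {F G F' G' : ℝ → ℝ} {x y z : ℝ}
    (hxy : x ≤ y) (hyz : y ≤ z)
    (hF : ∀ t ∈ Icc x z, HasDerivAt F (F' t) t) (hG : ∀ t ∈ Icc x z, HasDerivAt G (G' t) t)
    (hG' : ∀ t ∈ Icc x z, 0 < G' t) (hρ : MonotoneOn (fun t => F' t / G' t) (Icc x z)) :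
    (F y - F x) * (G z - G x) ≤ (F z - F x) * (G y - G x) := by
  have hy : y ∈ Icc x z := ⟨hxy, hyz⟩
  set r := F' y / G' y
  -- `F - r G` decreases up to `y` and increases after it, since its derivative is `G' (F'/G' - r)`.
  have hderiv : ∀ t ∈ Icc x z, F' t - r * G' t = G' t * (F' t / G' t - r) := fun t ht => by
    field_simp [(hG' t ht).ne']
  have hleft : MonotoneOn (fun t => r * G t - F t) (Icc x y) :=
    monotoneOn_of_hasDerivAt_nonneg (convex_Icc x y)
      (fun t ht => (((hG t (Icc_subset_Icc_right hyz ht)).const_mul r).sub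
        (hF t (Icc_subset_Icc_right hyz ht))))
      (fun t ht => by
        have ht' := Icc_subset_Icc_right hyz ht
        rw [show r * G' t - F' t = -(F' t - r * G' t) by ring, hderiv t ht', neg_nonneg]
        exact mul_nonpos_of_nonneg_of_nonpos (hG' t ht').le (sub_nonpos.2 (hρ ht' hy ht.2)))
  have hright : MonotoneOn (fun t => F t - r * G t) (Icc y z) :=
    monotoneOn_of_hasDerivAt_nonneg (convex_Icc y z)
      (fun t ht => (hF t (Icc_subset_Icc_left hxy ht)).sub
        ((hG t (Icc_subset_Icc_left hxy ht)).const_mul r))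
      (fun t ht => by
        have ht' := Icc_subset_Icc_left hxy ht
        rw [hderiv t ht']
        exact mul_nonneg (hG' t ht').le (sub_nonneg.2 (hρ hy ht' ht.1)))
  have hGmono : MonotoneOn G (Icc x z) :=
    monotoneOn_of_hasDerivAt_nonneg (convex_Icc x z) hG (fun t ht => (hG' t ht).le)
  have h₁ : F y - F x ≤ r * (G y - G x) := by
    have := hleft (left_mem_Icc.2 hxy) (right_mem_Icc.2 hxy) hxy
    simp only at this
    linarith
  have h₂ : r * (G z - G y) ≤ F z - F y := by
    have := hright (left_mem_Icc.2 hyz) (right_mem_Icc.2 hyz) hyz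
    simp only at this
    linarith
  have hGxy : 0 ≤ G y - G x := sub_nonneg.2 (hGmono (left_mem_Icc.2 (hxy.trans hyz)) hy hxy)
  have hGyz : 0 ≤ G z - G y := sub_nonneg.2 (hGmono hy (right_mem_Icc.2 (hxy.trans hyz)) hyz)
  linarith [mul_le_mul_of_nonneg_right h₁ hGyz, mul_le_mul_of_nonneg_left h₂ hGxy]

noncomputable def hilbertDist (p q u v : ℝ) : ℝ :=
  (1 / 2) * log (((v - p) * (q - u)) / ((u - p) * (q - v)))

noncomputable def hilbertCoord (p q t : ℝ) : ℝ := (1 / 2) * (log (t - p) - log (q - t))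

noncomputable def hilbertCoordDeriv (p q t : ℝ) : ℝ := (q - p) / (2 * ((t - p) * (q - t)))

lemma hilbertDist_eq_sub {p q u v : ℝ} (hu : u ∈ Ioo p q) (hv : v ∈ Ioo p q) :
    hilbertDist p q u v = hilbertCoord p q v - hilbertCoord p q u := by
  obtain ⟨hpu, huq⟩ := hu
  obtain ⟨hpv, hvq⟩ := hv
  rw [hilbertDist, hilbertCoord, hilbertCoord,
    log_div (mul_pos (by linarith) (by linarith)).ne' (mul_pos (by linarith) (by linarith)).ne',
    log_mul (by linarith) (by linarith), log_mul (by linarith) (by linarith)]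
  ring

lemma hasDerivAt_hilbertCoord {p q t : ℝ} (ht : t ∈ Ioo p q) :
    HasDerivAt (hilbertCoord p q) (hilbertCoordDeriv p q t) t := by
  obtain ⟨hpt, htq⟩ := ht
  have hlog_left : HasDerivAt (fun s => log (s - p)) (1 / (t - p)) t := by
    simpa using ((hasDerivAt_id' t).sub_const p).log (by linarith)
  have hlog_right : HasDerivAt (fun s => log (q - s)) (-(1 / (q - t))) t := by
    simpa [neg_div] using ((hasDerivAt_id' t).const_sub q).log (by linarith)
  refine ((hlog_left.sub hlog_right).const_mul (1 / 2 : ℝ)).congr_deriv ?_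
  unfold hilbertCoordDeriv
  field_simp [(sub_pos.2 hpt).ne', (sub_pos.2 htq).ne']
  ring

lemma hilbertCoordDeriv_pos {p q t : ℝ} (ht : t ∈ Ioo p q) : 0 < hilbertCoordDeriv p q t := by
  obtain ⟨hpt, htq⟩ := ht
  unfold hilbertCoordDeriv
  have : 0 < q - p := by linarith
  have : 0 < t - p := by linarith
  have : 0 < q - t := by linarith
  positivity

lemma hilbertCoordDeriv_div_eq {a a' b t : ℝ} (ht : t ∈ Ioo a' b) (ha : a < t) :
    hilbertCoordDeriv a b t / hilbertCoordDeriv a' b t =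
      (b - a) / (b - a') * ((t - a') / (t - a)) := by
  obtain ⟨ha't, htb⟩ := ht
  have : t - a ≠ 0 := by linarith
  have : t - a' ≠ 0 := by linarith
  have : b - t ≠ 0 := by linarith
  have : b - a' ≠ 0 := by linarith
  unfold hilbertCoordDeriv
  field_simp

lemma monotoneOn_hilbertCoordDeriv_div {a a' b : ℝ} (h : a < a') :
    MonotoneOn (fun t => hilbertCoordDeriv a b t / hilbertCoordDeriv a' b t) (Ioo a' b) := by
  intro s hs t ht hst
  have has : a < s := h.trans hs.1
  have hat : a < t := h.trans ht.1
  simp only [hilbertCoordDeriv_div_eq hs has, hilbertCoordDeriv_div_eq ht hat]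
  have hfrac : (s - a') / (s - a) ≤ (t - a') / (t - a) := by
    rw [div_le_div_iff₀ (by linarith) (by linarith)]
    nlinarith
  exact mul_le_mul_of_nonneg_left hfrac (div_nonneg (by linarith [hs.2]) (by linarith [hs.1, hs.2]))

open Real in
/-- The lemma in the Appendix: with `D(p, q; u, v) = (1/2)·log(((v−p)(q−u))/((u−p)(q−v)))`
the Hilbert distance in the interval `(p, q)`, for all `a < a' < x < y < z < b` one has
`D(a,b;x,y)·D(a',b;x,z) ≤ D(a',b;x,y)·D(a,b;x,z)`. -/
theorem appendix_lemma (a a' x y z b : ℝ)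
    (h1 : a < a') (h2 : a' < x) (h3 : x < y) (h4 : y < z) (h5 : z < b) :
    ((1 / 2) * Real.log (((y - a) * (b - x)) / ((x - a) * (b - y)))) *
      ((1 / 2) * Real.log (((z - a') * (b - x)) / ((x - a') * (b - z)))) ≤
    ((1 / 2) * Real.log (((y - a') * (b - x)) / ((x - a') * (b - y)))) *
      ((1 / 2) * Real.log (((z - a) * (b - x)) / ((x - a) * (b - z)))) := by
  change hilbertDist a b x y * hilbertDist a' b x z ≤ hilbertDist a' b x y * hilbertDist a b x z
  have hsub' : Icc x z ⊆ Ioo a' b := Icc_subset_Ioo h2 h5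
  have hsub : Icc x z ⊆ Ioo a b := hsub'.trans (Ioo_subset_Ioo_left h1.le)
  have hx : x ∈ Icc x z := left_mem_Icc.2 (h3.trans h4).le
  have hy : y ∈ Icc x z := ⟨h3.le, h4.le⟩
  have hz : z ∈ Icc x z := right_mem_Icc.2 (h3.trans h4).le
  rw [hilbertDist_eq_sub (hsub hx) (hsub hy), hilbertDist_eq_sub (hsub' hx) (hsub' hz),
    hilbertDist_eq_sub (hsub' hx) (hsub' hy), hilbertDist_eq_sub (hsub hx) (hsub hz)]
  have := sub_mul_sub_le_of_monotoneOn_deriv_div h3.le h4.le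
    (fun t ht => hasDerivAt_hilbertCoord (hsub ht))
    (fun t ht => hasDerivAt_hilbertCoord (hsub' ht))
    (fun t ht => hilbertCoordDeriv_pos (hsub' ht))
    ((monotoneOn_hilbertCoordDeriv_div h1).mono hsub')
  linarith
end

section
/- Fix a real number z > 1 and define f(a) = log(1 − 1/a) / log(1 − z/a) for a < 0. Then f is monotone non-decreasing on (−∞, 0): for all real numbers a, a' with a ≤ a' < 0 one has f(a) ≤ f(a'). (The explicit computation concluding the Appendix; note that for a < 0 both 1 − 1/a > 1 and 1 − z/a > 1, so both logarithms are positive.) -/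
/-!
Substituting `t = -1/a` and `u = log (1 + t)` turns `1 - 1/a` into `e^u` and `1 - z/a` into
`1 + z (e^u - 1)`, so the reciprocal of the ratio is the secant slope `ψ u / u` through the origin
of `ψ u = log (1 + z (e^u - 1))`. For `z ≥ 1` the derivative `ψ' u = z / (z - (z - 1) e^{-u})` is
decreasing, so `ψ` is concave on `[0, ∞)` and its secant slopes through `0` decrease.
-/

open Real Set

section

variable {z : ℝ}

theorem one_add_mul_exp_sub_one_pos (hz : 0 ≤ z) {u : ℝ} (hu : 0 ≤ u) :
    0 < 1 + z * (exp u - 1) := by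
  have := one_le_exp hu
  positivity

theorem hasDerivAt_log_one_add_mul_exp_sub_one (hz : 0 ≤ z) {u : ℝ} (hu : 0 ≤ u) :
    HasDerivAt (fun v => log (1 + z * (exp v - 1)))
      (z * exp u / (1 + z * (exp u - 1))) u := by
  have hinner : HasDerivAt (fun v => 1 + z * (exp v - 1)) (z * exp u) u := by
    simpa using ((hasDerivAt_exp u).sub_const 1).const_mul z |>.const_add 1
  exact hinner.log (one_add_mul_exp_sub_one_pos hz hu).ne'

theorem concaveOn_log_one_add_mul_exp_sub_one (hz : 1 ≤ z) :
    ConcaveOn ℝ (Ici 0) (fun u => log (1 + z * (exp u - 1))) := by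
  have hderiv {u : ℝ} (hu : 0 ≤ u) :=
    hasDerivAt_log_one_add_mul_exp_sub_one (z := z) (by linarith) hu
  refine AntitoneOn.concaveOn_of_deriv (convex_Ici 0)
    (fun u hu => (hderiv hu).continuousAt.continuousWithinAt)
    (fun u hu => (hderiv (interior_subset hu)).differentiableAt.differentiableWithinAt) ?_
  rw [interior_Ici]
  intro u hu v hv huv
  rw [(hderiv (le_of_lt hu)).deriv, (hderiv (le_of_lt hv)).deriv,
    div_le_div_iff₀ (one_add_mul_exp_sub_one_pos (by linarith) (le_of_lt hv))
      (one_add_mul_exp_sub_one_pos (by linarith) (le_of_lt hu))]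
  have hexp : exp u ≤ exp v := exp_le_exp.mpr huv
  nlinarith [mul_nonneg (mul_nonneg (zero_le_one.trans hz) (sub_nonneg.mpr hz)) (sub_nonneg.mpr hexp)]

theorem antitoneOn_log_one_add_mul_div_log_one_add (hz : 1 ≤ z) :
    AntitoneOn (fun t => log (1 + z * t) / log (1 + t)) (Ioi 0) := by
  have hslope : AntitoneOn (slope (fun u => log (1 + z * (exp u - 1))) 0) (Ioi 0) := by
    refine ((concaveOn_log_one_add_mul_exp_sub_one hz).antitoneOn_slope_gt self_mem_Ici).mono ?_
    exact fun u (hu : 0 < u) => ⟨le_of_lt hu, hu⟩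
  have hlog_pos {t : ℝ} (ht : 0 < t) : 0 < log (1 + t) := log_pos (by linarith)
  have hslope_log {t : ℝ} (ht : 0 < t) :
      slope (fun u => log (1 + z * (exp u - 1))) 0 (log (1 + t)) =
        log (1 + z * t) / log (1 + t) := by
    simp [slope_def_field, exp_log (by linarith : (0 : ℝ) < 1 + t)]
  intro t (ht : 0 < t) t' (ht' : 0 < t') htt'
  dsimp only
  rw [← hslope_log ht, ← hslope_log ht']
  exact hslope (hlog_pos ht) (hlog_pos ht') (log_le_log (by linarith) (by linarith))

end

/-- The explicit computation concluding the Appendix: for `z > 1`, the function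
`a ↦ log(1 − 1/a) / log(1 − z/a)` is monotone non-decreasing on `(−∞, 0)`. -/
theorem appendix_monotone (z : ℝ) (hz : 1 < z) (a a' : ℝ) (h : a ≤ a') (h' : a' < 0) :
    Real.log (1 - 1 / a) / Real.log (1 - z / a) ≤
      Real.log (1 - 1 / a') / Real.log (1 - z / a') := by
  have hsub (c b : ℝ) : 1 - c / b = 1 + c * (-b)⁻¹ := by rw [inv_neg]; ring
  rw [hsub 1 a, hsub z a, hsub 1 a', hsub z a', one_mul, one_mul,
    ← inv_div, ← inv_div (log (1 + z * (-a')⁻¹))]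
  have ht : 0 < (-a)⁻¹ := inv_pos.mpr (neg_pos.mpr (h.trans_lt h'))
  have ht' : 0 < (-a')⁻¹ := inv_pos.mpr (neg_pos.mpr h')
  have hratio_pos : 0 < log (1 + z * (-a')⁻¹) / log (1 + (-a')⁻¹) :=
    div_pos (log_pos (by nlinarith)) (log_pos (by linarith))
  exact inv_anti₀ hratio_pos (antitoneOn_log_one_add_mul_div_log_one_add hz.le ht ht'
    (inv_anti₀ (neg_pos.mpr h') (neg_le_neg h)))
end

section
/- Let i, j be natural numbers with 1 ≤ i ≤ N and 1 ≤ j ≤ N. Then there exist N×N positive semi-definite Hermitian matrices S and T over 𝕂 with S + T = 1, rank S = i and rank T = j, if and only if i + j ≥ N. (The matrix form of Proposition 7.1(1): the stratum T¹Ω_{i,j} of the unit tangent bundle of the symmetric cone is non-empty if and only if i + j ≥ N.) -/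
open scoped ComplexOrder

lemma matrix_rank_add_le {N : ℕ} {𝕂 : Type*} [RCLike 𝕂] (A B : Matrix (Fin N) (Fin N) 𝕂) :
    (A + B).rank ≤ A.rank + B.rank := by
  have hle : LinearMap.range (A + B).mulVecLin ≤
      LinearMap.range A.mulVecLin ⊔ LinearMap.range B.mulVecLin := by
    rintro x ⟨v, rfl⟩
    rw [Matrix.mulVecLin_add]
    exact Submodule.add_mem_sup ⟨v, rfl⟩ ⟨v, rfl⟩
  calc (A + B).rank ≤ Module.finrank 𝕂
        (LinearMap.range A.mulVecLin ⊔ LinearMap.range B.mulVecLin : Submodule 𝕂 _) :=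
        Submodule.finrank_mono hle
    _ ≤ A.rank + B.rank := Submodule.finrank_add_le_finrank_add_finrank _ _

lemma card_fin_lt {N m : ℕ} (h : m ≤ N) :
    Fintype.card {k : Fin N // (k : ℕ) < m} = m := by
  have e : {k : Fin N // (k : ℕ) < m} ≃ Fin m :=
    { toFun := fun k => ⟨k.1, k.2⟩
      invFun := fun x => ⟨⟨x.1, lt_of_lt_of_le x.2 h⟩, x.2⟩
      left_inv := fun k => rfl
      right_inv := fun x => rfl }
  rw [Fintype.card_congr e, Fintype.card_fin]

/-- The matrix form of Proposition 7.1(1): for `1 ≤ i, j ≤ N`, there exist positive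
semi-definite Hermitian matrices `S`, `T` with `S + T = 1`, `rank S = i` and `rank T = j`
if and only if `i + j ≥ N`. -/
theorem stratum_nonempty_iff {N : ℕ} (hN : 1 ≤ N) (𝕂 : Type*) [RCLike 𝕂]
    (i j : ℕ) (hi : 1 ≤ i) (hiN : i ≤ N) (hj : 1 ≤ j) (hjN : j ≤ N) :
    (∃ S T : Matrix (Fin N) (Fin N) 𝕂, S.PosSemidef ∧ T.PosSemidef ∧ S + T = 1 ∧
      S.rank = i ∧ T.rank = j) ↔ N ≤ i + j := by
  constructor
  · rintro ⟨S, T, hS, hT, hsum, hrS, hrT⟩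
    have := matrix_rank_add_le S T
    rw [hsum, Matrix.rank_one, Fintype.card_fin, hrS, hrT] at this
    exact this
  · intro hij
    set r : Fin N → ℝ := fun k =>
      if (k : ℕ) < N - j then 1 else if (k : ℕ) < i then (1/2 : ℝ) else 0 with hr
    set d : Fin N → 𝕂 := fun k => ((r k : ℝ) : 𝕂) with hd
    have hNji : N - j ≤ i := by omega
    refine ⟨Matrix.diagonal d, Matrix.diagonal (fun k => 1 - d k), ?_, ?_, ?_, ?_, ?_⟩
    · refine Matrix.posSemidef_diagonal_iff.mpr fun k => ?_
      rw [hd]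
      refine RCLike.ofReal_nonneg.mpr ?_
      simp only [hr]
      split_ifs <;> norm_num
    · refine Matrix.posSemidef_diagonal_iff.mpr fun k => ?_
      have : (1 : 𝕂) - d k = ((1 - r k : ℝ) : 𝕂) := by push_cast; ring
      rw [this]
      refine RCLike.ofReal_nonneg.mpr ?_
      simp only [hr]
      split_ifs <;> norm_num
    · rw [Matrix.diagonal_add, ← Matrix.diagonal_one]
      congr 1
      funext k
      simp
    · rw [Matrix.rank_diagonal]
      have hne : ∀ k : Fin N, d k ≠ 0 ↔ (k : ℕ) < i := by
        intro k
        simp only [hd, hr, ne_eq, RCLike.ofReal_eq_zero]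
        split_ifs with h1 h2 <;> norm_num <;> omega
      rw [Fintype.card_eq.mpr ⟨Equiv.subtypeEquivRight hne⟩]
      exact card_fin_lt hiN
    · rw [Matrix.rank_diagonal]
      have hne : ∀ k : Fin N, 1 - d k ≠ 0 ↔ ¬ ((k : ℕ) < N - j) := by
        intro k
        have : (1 : 𝕂) - d k = ((1 - r k : ℝ) : 𝕂) := by push_cast; ring
        rw [this]
        simp only [hr, ne_eq, RCLike.ofReal_eq_zero]
        split_ifs with h1 h2 <;> norm_num <;> omega
      rw [Fintype.card_eq.mpr ⟨Equiv.subtypeEquivRight hne⟩,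
        Fintype.card_subtype_compl, card_fin_lt (by omega), Fintype.card_fin]
      omega
end

section
/- Let T be an N×N matrix over 𝕂 such that both T and 1 − T are positive semi-definite Hermitian, and such that rank T + rank (1 − T) = N. Then T is an orthogonal projection: T·T = T. (The normal-form step in the proof of Proposition 7.1(2): representatives of attracting and repelling boundary points summing to the identity are orthogonal projections.) -/
/-!
Since `x = T x + (1 - T) x`, the kernels of `T` and `1 - T` meet trivially. By rank–nullity the
rank condition says their dimensions add up to `N`, so together they span the whole space; as
`T (1 - T) = (1 - T) T` vanishes on both kernels, `T - T * T = 0`.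
-/

open Module

theorem LinearMap.disjoint_ker_ker_one_sub {R M : Type*} [Ring R] [AddCommGroup M] [Module R M]
    (f : M →ₗ[R] M) : Disjoint (ker f) (ker (1 - f)) := by
  rw [Submodule.disjoint_def]
  intro x hx hx'
  simpa [mem_ker.mp hx] using mem_ker.mp hx'

theorem LinearMap.isIdempotentElem_of_finrank_range_add_finrank_range_one_sub
    {K V : Type*} [DivisionRing K] [AddCommGroup V] [Module K V] [FiniteDimensional K V]
    (f : V →ₗ[K] V) (h : finrank K (range f) + finrank K (range (1 - f)) = finrank K V) :
    IsIdempotentElem f := by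
  have hdim : finrank K V ≤ finrank K (ker f) + finrank K (ker (1 - f)) := by
    have := f.finrank_range_add_finrank_ker
    have := (1 - f).finrank_range_add_finrank_ker
    omega
  have hsup : ker f ⊔ ker (1 - f) = ⊤ :=
    Submodule.eq_top_of_disjoint _ _ hdim f.disjoint_ker_ker_one_sub
  have hcomm : f * (1 - f) = (1 - f) * f := by rw [mul_sub, sub_mul, mul_one, one_mul]
  have hzero : f * (1 - f) = 0 := by
    rw [← ker_eq_top, eq_top_iff, ← hsup]
    refine sup_le ?_ (ker_le_ker_comp _ _)
    rw [hcomm]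
    exact ker_le_ker_comp _ _
  rw [mul_sub, mul_one, sub_eq_zero] at hzero
  exact hzero.symm

theorem Matrix.isIdempotentElem_of_rank_add_rank_one_sub {n K : Type*} [Fintype n]
    [DecidableEq n] [Field K] (A : Matrix n n K)
    (h : A.rank + (1 - A).rank = Fintype.card n) : IsIdempotentElem A := by
  have hlin : IsIdempotentElem (toLinAlgEquiv' A) := by
    apply LinearMap.isIdempotentElem_of_finrank_range_add_finrank_range_one_sub
    rwa [← map_one toLinAlgEquiv', ← map_sub, finrank_fintype_fun_eq_card]
  simpa using hlin.map toLinAlgEquiv'.symm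

open scoped ComplexOrder

theorem projection_normal_form_general {N : ℕ} (𝕂 : Type*) [RCLike 𝕂]
    (T : Matrix (Fin N) (Fin N) 𝕂)
    (hrank : T.rank + (1 - T).rank = N) :
    T * T = T :=
  T.isIdempotentElem_of_rank_add_rank_one_sub (by rwa [Fintype.card_fin])

/-- The normal-form step in the proof of Proposition 7.1(2): if `T` and `1 − T` are
positive semi-definite Hermitian with `rank T + rank (1 − T) = N`, then `T` is an
orthogonal projection. -/
theorem projection_normal_form {N : ℕ} (hN : 1 ≤ N) (𝕂 : Type*) [RCLike 𝕂]
    (T : Matrix (Fin N) (Fin N) 𝕂) (hT : T.PosSemidef) (hT' : (1 - T).PosSemidef)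
    (hrank : T.rank + (1 - T).rank = N) :
    T * T = T :=
  projection_normal_form_general 𝕂 T hrank
end

section
/- Let 1 ≤ i ≤ N − 1 and let S, T be N×N positive semi-definite Hermitian matrices over 𝕂 with rank S = i, rank T = N − i, and S + T positive definite. Then there exists an invertible N×N matrix g over 𝕂 such that g·S·gᴴ is the diagonal matrix with the first i diagonal entries equal to 1 and the rest equal to 0, and g·T·gᴴ is the complementary diagonal projection (first i entries 0, last N − i entries 1). (The matrix content of Proposition 7.1(2): the automorphism group acts transitively on the stratum T¹Ω_{i,N−i}.) -/
/-!
A congruence `X ↦ g X gᴴ` with `g (S + T) gᴴ = 1` reduces the problem to `S + T = 1`. Then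
`M := S` is Hermitian with `rank M + rank (1 - M) = N`. The first rank counts the
eigenvalues `λ ≠ 0` of `M`, the second those with `λ ≠ 1`; every eigenvalue is counted at least
once, so the total `N` is only reached if every eigenvalue is `0` or `1`. Unitarily
diagonalizing `M` and permuting the eigenvalues into the order `1, …, 1, 0, …, 0` brings `M`
and `1 - M` to the two complementary diagonal projections simultaneously.
-/

open scoped ComplexOrder

open Matrix Equiv

lemma Equiv.Perm.exists_forall_apply_iff_of_card_eq {α : Type*} [Fintype α] {p q : α → Prop}
    [DecidablePred p] [DecidablePred q] (h : Fintype.card {a // p a} = Fintype.card {a // q a}) :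
    ∃ σ : Perm α, ∀ a, q (σ a) ↔ p a := by
  have hcompl : Fintype.card {a // ¬p a} = Fintype.card {a // ¬q a} := by
    rw [Fintype.card_subtype_compl, Fintype.card_subtype_compl, h]
  refine ⟨Equiv.subtypeCongr (Fintype.equivOfCardEq h) (Fintype.equivOfCardEq hcompl),
    fun a => ?_⟩
  by_cases ha : p a
  · simpa [Equiv.subtypeCongr, sumCompl, ha] using ((Fintype.equivOfCardEq h) ⟨a, ha⟩).2
  · simpa [Equiv.subtypeCongr, sumCompl, ha] using ((Fintype.equivOfCardEq hcompl) ⟨a, ha⟩).2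

namespace Matrix

section CommRing

variable {n R : Type*} [Fintype n] [DecidableEq n] [CommRing R] [StarRing R]

lemma rank_mul_mul_conjTranspose_of_isUnit {g : Matrix n n R} (hg : IsUnit g)
    (A : Matrix n n R) :
    (g * A * gᴴ).rank = A.rank := by
  have hdet : IsUnit g.det := (isUnit_iff_isUnit_det g).mp hg
  rw [rank_mul_eq_left_of_isUnit_det _ _ (by simpa [det_conjTranspose] using hdet.star),
    rank_mul_eq_right_of_isUnit_det _ _ hdet]

lemma permMatrix_mul_diagonal_mul_conjTranspose (σ : Perm n) (d : n → R) :
    σ.permMatrix R * diagonal d * (σ.permMatrix R)ᴴ = diagonal (d ∘ σ) := by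
  rw [conjTranspose_permMatrix, PEquiv.toMatrix_toPEquiv_mul, PEquiv.mul_toMatrix_toPEquiv]
  exact submatrix_diagonal_equiv d σ

lemma permMatrix_mem_unitaryGroup (σ : Perm n) : σ.permMatrix R ∈ unitaryGroup n R := by
  rw [mem_unitaryGroup_iff, star_eq_conjTranspose, conjTranspose_permMatrix, ← permMatrix_mul,
    inv_mul_cancel, permMatrix_one]

end CommRing

variable {n 𝕂 : Type*} [Fintype n] [DecidableEq n] [RCLike 𝕂]

lemma PosDef.exists_isUnit_mul_mul_conjTranspose_eq_one {A : Matrix n n 𝕂} (hA : A.PosDef) :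
    ∃ g : Matrix n n 𝕂, IsUnit g ∧ g * A * gᴴ = 1 := by
  open scoped MatrixOrder in
  obtain ⟨y, hy, rfl⟩ :=
    CStarAlgebra.isStrictlyPositive_iff_eq_star_mul_self.mp hA.isStrictlyPositive
  lift y to (Matrix n n 𝕂)ˣ using hy
  refine ⟨star ↑y⁻¹, (Units.isUnit _).star, ?_⟩
  rw [← star_eq_conjTranspose, star_star, ← mul_assoc, ← star_mul, Units.mul_inv, star_one,
    one_mul, Units.mul_inv]

lemma rank_conjStarAlgAut (u : unitaryGroup n 𝕂) (X : Matrix n n 𝕂) :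
    (Unitary.conjStarAlgAut 𝕂 _ u X).rank = X.rank := by
  rw [Unitary.conjStarAlgAut_apply, star_eq_conjTranspose]
  exact rank_mul_mul_conjTranspose_of_isUnit Unitary.isUnit_coe X

namespace IsHermitian

section

variable {M : Matrix n n 𝕂} (hM : M.IsHermitian)
include hM

lemma rank_one_sub : (1 - M).rank = Fintype.card {k // hM.eigenvalues k ≠ 1} := by
  conv_lhs => rw [hM.spectral_theorem,
    ← map_one (Unitary.conjStarAlgAut 𝕂 _ hM.eigenvectorUnitary), ← map_sub, rank_conjStarAlgAut,
    ← diagonal_one, diagonal_sub, rank_diagonal]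
  refine Fintype.card_congr (Equiv.subtypeEquivRight fun k => ?_)
  rw [Function.comp_apply, sub_ne_zero, ne_comm]
  exact_mod_cast Iff.rfl

lemma eigenvalues_eq_zero_or_one_of_rank_add_rank_one_sub_le
    (h : M.rank + (1 - M).rank ≤ Fintype.card n) (k : n) :
    hM.eigenvalues k = 0 ∨ hM.eigenvalues k = 1 := by
  classical
  set s : Finset n := {k | hM.eigenvalues k ≠ 0}
  set t : Finset n := {k | hM.eigenvalues k ≠ 1}
  have hcover : s ∪ t = Finset.univ := by
    ext j
    simp only [s, t, Finset.mem_union, Finset.mem_filter, Finset.mem_univ, true_and, iff_true]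
    by_contra! hj
    exact zero_ne_one (hj.1.symm.trans hj.2)
  have hst := Finset.card_union_add_card_inter s t
  have hs : s.card = M.rank := by rw [hM.rank_eq_card_non_zero_eigs, Fintype.card_subtype]
  have ht : t.card = (1 - M).rank := by rw [hM.rank_one_sub, Fintype.card_subtype]
  rw [hcover, Finset.card_univ] at hst
  by_contra! hk
  have hinter : 0 < (s ∩ t).card := Finset.card_pos.mpr ⟨k, by simp [s, t, hk]⟩
  omega

end

lemma exists_unitary_mul_mul_star_eq_diagonal {N : ℕ} {M : Matrix (Fin N) (Fin N) 𝕂}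
    (hM : M.IsHermitian) (h01 : ∀ k, hM.eigenvalues k = 0 ∨ hM.eigenvalues k = 1) :
    ∃ U ∈ unitaryGroup (Fin N) 𝕂,
      U * M * star U = diagonal (fun k : Fin N => if (k : ℕ) < M.rank then 1 else 0) := by
  classical
  set V : Matrix (Fin N) (Fin N) 𝕂 := ↑hM.eigenvectorUnitary
  have hcard : Fintype.card {k : Fin N // (k : ℕ) < M.rank} =
      Fintype.card {k // hM.eigenvalues k = 1} := by
    rw [Fintype.card_subtype, Fin.card_filter_val_lt, min_eq_right M.rank_le_width,
      hM.rank_eq_card_non_zero_eigs]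
    exact Fintype.card_congr <| Equiv.subtypeEquivRight fun k => by
      rcases h01 k with h | h <;> simp [h]
  obtain ⟨σ, hσ⟩ := Equiv.Perm.exists_forall_apply_iff_of_card_eq hcard
  refine ⟨σ.permMatrix 𝕂 * star V,
    mul_mem (permMatrix_mem_unitaryGroup σ) (Unitary.star_mem hM.eigenvectorUnitary.2), ?_⟩
  have hdiag : star V * M * V = diagonal (RCLike.ofReal ∘ hM.eigenvalues) := by
    rw [← Unitary.conjStarAlgAut_star_apply (S := 𝕂), hM.conjStarAlgAut_star_eigenvectorUnitary]
  calc σ.permMatrix 𝕂 * star V * M * star (σ.permMatrix 𝕂 * star V)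
      = σ.permMatrix 𝕂 * (star V * M * V) * (σ.permMatrix 𝕂)ᴴ := by
        simp only [star_mul, star_eq_conjTranspose, conjTranspose_conjTranspose, mul_assoc]
    _ = _ := by
      rw [hdiag, permMatrix_mul_diagonal_mul_conjTranspose]
      congr 1
      funext k
      rcases h01 (σ k) with h | h <;> simp [h, ← hσ k]

end IsHermitian

end Matrix

theorem transitivity_on_stratum_general {N : ℕ} (𝕂 : Type*) [RCLike 𝕂] (i : ℕ)
    (S T : Matrix (Fin N) (Fin N) 𝕂) (hS : S.PosSemidef)
    (hrS : S.rank = i) (hrT : T.rank = N - i) (hST : (S + T).PosDef) :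
    ∃ g : Matrix (Fin N) (Fin N) 𝕂, IsUnit g ∧
      g * S * g.conjTranspose =
        Matrix.diagonal (fun k : Fin N => if (k : ℕ) < i then (1 : 𝕂) else 0) ∧
      g * T * g.conjTranspose =
        Matrix.diagonal (fun k : Fin N => if (k : ℕ) < i then (0 : 𝕂) else 1) := by
  obtain ⟨g, hg, hgST⟩ := hST.exists_isUnit_mul_mul_conjTranspose_eq_one
  set M := g * S * gᴴ with hMdef
  have hgT : g * T * gᴴ = 1 - M := by rw [eq_sub_iff_add_eq', ← hgST, mul_add, add_mul]
  have hM : M.IsHermitian := (hS.mul_mul_conjTranspose_same g).isHermitian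
  have hrM : M.rank = i := by rw [hMdef, rank_mul_mul_conjTranspose_of_isUnit hg, hrS]
  have hr1M : (1 - M).rank = N - i := by rw [← hgT, rank_mul_mul_conjTranspose_of_isUnit hg, hrT]
  have h01 := hM.eigenvalues_eq_zero_or_one_of_rank_add_rank_one_sub_le <| by
    have := M.rank_le_width
    rw [hrM, hr1M, Fintype.card_fin]
    omega
  obtain ⟨U, hU, hUM⟩ := hM.exists_unitary_mul_mul_star_eq_diagonal h01
  rw [hrM] at hUM
  have hconj (X : Matrix (Fin N) (Fin N) 𝕂) :
      U * g * X * (U * g)ᴴ = U * (g * X * gᴴ) * star U := by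
    simp only [conjTranspose_mul, star_eq_conjTranspose, mul_assoc]
  refine ⟨U * g, (Unitary.isUnit_coe (U := ⟨U, hU⟩)).mul hg, by rw [hconj, hUM], ?_⟩
  rw [hconj, hgT, mul_sub, sub_mul, mul_one, mem_unitaryGroup_iff.mp hU, hUM, ← diagonal_one,
    diagonal_sub]
  congr 1
  funext k
  split_ifs <;> simp

/-- The matrix content of Proposition 7.1(2): for `1 ≤ i ≤ N − 1`, if `S`, `T` are
positive semi-definite Hermitian with `rank S = i`, `rank T = N − i` and `S + T`
positive definite, then some invertible `g` simultaneously conjugates `S` and `T`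
(via `X ↦ g·X·gᴴ`) to the complementary diagonal projections of ranks `i` and `N − i`. -/
theorem transitivity_on_stratum {N : ℕ} (hN : 1 ≤ N) (𝕂 : Type*) [RCLike 𝕂]
    (i : ℕ) (hi : 1 ≤ i) (hiN : i ≤ N - 1)
    (S T : Matrix (Fin N) (Fin N) 𝕂) (hS : S.PosSemidef) (hT : T.PosSemidef)
    (hrS : S.rank = i) (hrT : T.rank = N - i) (hST : (S + T).PosDef) :
    ∃ g : Matrix (Fin N) (Fin N) 𝕂, IsUnit g ∧
      g * S * g.conjTranspose =
        Matrix.diagonal (fun k : Fin N => if (k : ℕ) < i then (1 : 𝕂) else 0) ∧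
      g * T * g.conjTranspose =
        Matrix.diagonal (fun k : Fin N => if (k : ℕ) < i then (0 : 𝕂) else 1) :=
  transitivity_on_stratum_general 𝕂 i S T hS hrS hrT hST
end

section
/- Let V be a finite-dimensional real normed vector space, let k ≥ 2, and let γ₁, …, γ_k ∈ GL(V) be biproximal with data (L_i⁺, L_i⁻, W_i) for i = 1, …, k. Assume: (a) the span of all the lines L_i⁺, L_i⁻ (1 ≤ i ≤ k) is all of V; (b) the intersection ⋂_{1≤i≤k} W_i is {0}; (c) for all i ≠ j and all signs α, β ∈ {+, −}, the line L_i^α is not contained in L_j^β + W_j. Then the subgroup Γ of GL(V) generated by γ₁, …, γ_k acts strongly irreducibly on V: for every finite-index subgroup Γ₁ of Γ and every linear subspace U of V with U ≠ {0} and U ≠ V, there exists γ ∈ Γ₁ with γ(U) ≠ U. (Lemma 4.5.) -/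
open Filter

/-- `g ∈ GL(V)` is biproximal with attracting line `Lp`, repelling line `Lm` and
invariant complement `W`. -/
structure IsBiproximal {V : Type*} [NormedAddCommGroup V] [NormedSpace ℝ V]
    (g : V ≃ₗ[ℝ] V) (Lp Lm W : Submodule ℝ V) : Prop where
  finrank_Lp : Module.finrank ℝ Lp = 1
  finrank_Lm : Module.finrank ℝ Lm = 1
  ne : Lp ≠ Lm
  inf_lines : Lp ⊓ Lm = ⊥
  inf_W : (Lp ⊔ Lm) ⊓ W = ⊥
  sup_top : Lp ⊔ Lm ⊔ W = ⊤
  map_Lp : Lp.map (g : V →ₗ[ℝ] V) = Lp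
  map_Lm : Lm.map (g : V →ₗ[ℝ] V) = Lm
  map_W : W.map (g : V →ₗ[ℝ] V) = W
  attract : ∀ w : V, w ∉ Lm ⊔ W →
    Tendsto (fun n : ℕ => Metric.infDist (‖(g ^ n) w‖⁻¹ • (g ^ n) w) (Lp : Set V))
      atTop (nhds 0)
  repel : ∀ w : V, w ∉ Lp ⊔ W →
    Tendsto (fun n : ℕ => Metric.infDist (‖(g⁻¹ ^ n) w‖⁻¹ • (g⁻¹ ^ n) w) (Lm : Set V))
      atTop (nhds 0)

/-!
Suppose a finite-index subgroup `Γ₁` preserves `U`. It contains a positive power of each `γᵢ`,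
which preserves `U` and has the same attracting and repelling lines. A nonzero vector of `U`
lies outside some `Wᵢ`, hence outside `Lᵢ⁻ ⊕ Wᵢ` or `Lᵢ⁺ ⊕ Wᵢ`, and iterating that power pulls
its direction onto `Lᵢ⁺` or `Lᵢ⁻`; as `U` is closed, this line lies in `U`. By (c) the line is
in general position with respect to every `γⱼ`, `j ≠ i`, so both lines of `γⱼ` lie in `U`;
going back once more (here `k ≥ 2`) gives both lines of every `γᵢ`, and (a) forces `U = V`.
-/

open Metric Module Filter Topology

section ModularLattice

variable {α : Type*} [Lattice α] [OrderBot α] [IsModularLattice α]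

theorem sup_inf_sup_eq_right_of_inf_eq_bot {a b c : α} (hab : a ⊓ b = ⊥)
    (habc : (a ⊔ b) ⊓ c = ⊥) : (a ⊔ c) ⊓ (b ⊔ c) = c := by
  have ha : a ⊓ (b ⊔ c) = ⊥ := by
    calc a ⊓ (b ⊔ c) = a ⊓ ((a ⊔ b) ⊓ (b ⊔ c)) := by rw [← inf_assoc, inf_sup_self]
      _ = a ⊓ (b ⊔ c ⊓ (a ⊔ b)) := by
        rw [inf_comm (a ⊔ b), sup_inf_assoc_of_le c le_sup_right]
      _ = ⊥ := by rw [inf_comm c, habc, sup_bot_eq, hab]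
  rw [sup_comm a c, sup_inf_assoc_of_le a le_sup_right, ha, sup_bot_eq]

end ModularLattice

namespace Submodule

theorem eq_span_singleton_of_finrank_eq_one {K V : Type*} [DivisionRing K] [AddCommGroup V]
    [Module K V] {L : Submodule K V} (hL : finrank K L = 1) {x : V} (hx : x ∈ L)
    (hx0 : x ≠ 0) : L = span K {x} :=
  have : Module.Finite K L := finite_of_finrank_eq_succ hL
  (eq_of_le_of_finrank_eq ((span_singleton_le_iff_mem x L).2 hx)
    (by rw [finrank_span_singleton hx0, hL])).symm

section Invariant

variable {R M : Type*} [Semiring R] [AddCommMonoid M] [Module R M] {g : M ≃ₗ[R] M}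
  {U : Submodule R M}

theorem pow_apply_mem_of_map_eq (hU : U.map (g : M →ₗ[R] M) = U) (n : ℕ) {x : M}
    (hx : x ∈ U) : (g ^ n) x ∈ U := by
  induction n with
  | zero => simpa using hx
  | succ n ih =>
    rw [pow_succ', LinearEquiv.mul_apply, ← hU]
    exact mem_map_of_mem ih

theorem map_inv_eq_of_map_eq (hU : U.map (g : M →ₗ[R] M) = U) :
    U.map ((g⁻¹ : M ≃ₗ[R] M) : M →ₗ[R] M) = U :=
  (map_symm_eq_iff g).2 hU

end Invariant

variable {V : Type*} [NormedAddCommGroup V] [NormedSpace ℝ V] [FiniteDimensional ℝ V]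

theorem le_of_tendsto_infDist_normalize {L U : Submodule ℝ V} (hL : finrank ℝ L = 1)
    {v : ℕ → V} (hvU : ∀ n, v n ∈ U) (hv0 : ∀ n, v n ≠ 0)
    (hlim : Tendsto (fun n => infDist (‖v n‖⁻¹ • v n) (L : Set V)) atTop (𝓝 0)) : L ≤ U := by
  have hsphere : ∀ n, ‖v n‖⁻¹ • v n ∈ sphere (0 : V) 1 := fun n => by
    simp [norm_smul, hv0 n]
  obtain ⟨x, hx1, φ, hφ, hx⟩ := (isCompact_sphere (0 : V) 1).tendsto_subseq hsphere
  have hxU : x ∈ U := U.closed_of_finiteDimensional.mem_of_tendsto hx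
    (Eventually.of_forall fun n => U.smul_mem _ (hvU (φ n)))
  have hxL : x ∈ L := by
    refine (L.closed_of_finiteDimensional.mem_iff_infDist_zero ⟨0, L.zero_mem⟩).2 ?_
    exact tendsto_nhds_unique (((continuous_infDist_pt _).tendsto x).comp hx)
      (hlim.comp hφ.tendsto_atTop)
  have hx0 : x ≠ 0 := ne_zero_of_mem_sphere (by norm_num) ⟨x, hx1⟩
  rw [eq_span_singleton_of_finrank_eq_one hL hxL hx0]
  exact (span_singleton_le_iff_mem x U).2 hxU

theorem le_of_forall_tendsto_infDist_pow {g : V ≃ₗ[ℝ] V} {L S U : Submodule ℝ V}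
    (hL : finrank ℝ L = 1)
    (hattr : ∀ w ∉ S,
      Tendsto (fun n : ℕ => infDist (‖(g ^ n) w‖⁻¹ • (g ^ n) w) (L : Set V)) atTop (𝓝 0))
    {m : ℕ} (hm : 0 < m) (hU : U.map ((g ^ m : V ≃ₗ[ℝ] V) : V →ₗ[ℝ] V) = U)
    {w : V} (hwU : w ∈ U) (hwS : w ∉ S) : L ≤ U := by
  have hw0 : w ≠ 0 := fun h => hwS (h ▸ S.zero_mem)
  refine le_of_tendsto_infDist_normalize (v := fun n => (g ^ (m * n)) w) hL
    (fun n => ?_) (fun n => (LinearEquiv.map_ne_zero_iff _).2 hw0)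
    ((hattr w hwS).comp (strictMono_mul_left_of_pos hm).tendsto_atTop)
  rw [pow_mul]
  exact pow_apply_mem_of_map_eq hU n hwU

end Submodule

namespace IsBiproximal

variable {V : Type*} [NormedAddCommGroup V] [NormedSpace ℝ V] [FiniteDimensional ℝ V]
  {g : V ≃ₗ[ℝ] V} {Lp Lm W U : Submodule ℝ V}

theorem lp_le_of_mem (hg : IsBiproximal g Lp Lm W) {m : ℕ} (hm : 0 < m)
    (hU : U.map ((g ^ m : V ≃ₗ[ℝ] V) : V →ₗ[ℝ] V) = U) {w : V} (hwU : w ∈ U)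
    (hw : w ∉ Lm ⊔ W) : Lp ≤ U :=
  Submodule.le_of_forall_tendsto_infDist_pow hg.finrank_Lp hg.attract hm hU hwU hw

theorem lm_le_of_mem (hg : IsBiproximal g Lp Lm W) {m : ℕ} (hm : 0 < m)
    (hU : U.map ((g ^ m : V ≃ₗ[ℝ] V) : V →ₗ[ℝ] V) = U) {w : V} (hwU : w ∈ U)
    (hw : w ∉ Lp ⊔ W) : Lm ≤ U :=
  Submodule.le_of_forall_tendsto_infDist_pow hg.finrank_Lm hg.repel hm
    (by rw [inv_pow]; exact Submodule.map_inv_eq_of_map_eq hU) hwU hw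

theorem lp_le_or_lm_le (hg : IsBiproximal g Lp Lm W) {m : ℕ} (hm : 0 < m)
    (hU : U.map ((g ^ m : V ≃ₗ[ℝ] V) : V →ₗ[ℝ] V) = U) {w : V} (hwU : w ∈ U) (hwW : w ∉ W) :
    Lp ≤ U ∨ Lm ≤ U := by
  have hsep : (Lp ⊔ W) ⊓ (Lm ⊔ W) = W :=
    sup_inf_sup_eq_right_of_inf_eq_bot hg.inf_lines hg.inf_W
  by_cases hwp : w ∈ Lp ⊔ W
  · exact .inl (hg.lp_le_of_mem hm hU hwU fun hwm => hwW (hsep ▸ ⟨hwp, hwm⟩))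
  · exact .inr (hg.lm_le_of_mem hm hU hwU hwp)

theorem lp_le_and_lm_le (hg : IsBiproximal g Lp Lm W) {m : ℕ} (hm : 0 < m)
    (hU : U.map ((g ^ m : V ≃ₗ[ℝ] V) : V →ₗ[ℝ] V) = U) {L : Submodule ℝ V}
    (hL : finrank ℝ L = 1) (hLU : L ≤ U) (hLp : ¬ L ≤ Lp ⊔ W) (hLm : ¬ L ≤ Lm ⊔ W) :
    Lp ≤ U ∧ Lm ≤ U := by
  obtain ⟨v, hvL, hvp⟩ := SetLike.not_le_iff_exists.1 hLp
  have hv0 : v ≠ 0 := fun h => hvp (h ▸ zero_mem _)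
  have hvm : v ∉ Lm ⊔ W := fun h => hLm <| by
    rw [Submodule.eq_span_singleton_of_finrank_eq_one hL hvL hv0]
    exact (Submodule.span_singleton_le_iff_mem v _).2 h
  exact ⟨hg.lp_le_of_mem hm hU (hLU hvL) hvm, hg.lm_le_of_mem hm hU (hLU hvL) hvp⟩

end IsBiproximal

/-- Lemma 4.5: biproximal elements `γ₁, …, γ_k` satisfying conditions (a), (b), (c)
generate a group acting strongly irreducibly on `V`. -/
theorem lemma_4_5 {V : Type*} [NormedAddCommGroup V] [NormedSpace ℝ V]
    [FiniteDimensional ℝ V]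
    (k : ℕ) (hk : 2 ≤ k) (γ : Fin k → (V ≃ₗ[ℝ] V))
    (Lp Lm W : Fin k → Submodule ℝ V)
    (hbi : ∀ i, IsBiproximal (γ i) (Lp i) (Lm i) (W i))
    (hspan : (⨆ i, Lp i ⊔ Lm i) = ⊤)
    (hW : (⨅ i, W i) = ⊥)
    (hpos : ∀ i j, i ≠ j → ∀ α β : Bool,
      ¬ (if α then Lp i else Lm i) ≤ (if β then Lp j else Lm j) ⊔ W j) :
    ∀ Γ₁ : Subgroup (V ≃ₗ[ℝ] V), Γ₁ ≤ Subgroup.closure (Set.range γ) →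
      Γ₁.relIndex (Subgroup.closure (Set.range γ)) ≠ 0 →
      ∀ U : Submodule ℝ V, U ≠ ⊥ → U ≠ ⊤ →
        ∃ g ∈ Γ₁, U.map (g : V →ₗ[ℝ] V) ≠ U := by
  intro Γ₁ _ hrel U hUbot hUtop
  by_contra! hinv
  have hpow : ∀ i, ∃ m, 0 < m ∧ U.map ((γ i ^ m : V ≃ₗ[ℝ] V) : V →ₗ[ℝ] V) = U := by
    intro i
    obtain ⟨m, hm, -, hmem, -⟩ := Subgroup.exists_pow_mem_of_relIndex_ne_zero hrel
      (Subgroup.subset_closure (Set.mem_range_self i))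
    exact ⟨m, hm, hinv _ hmem⟩
  have hspread : ∀ i j, i ≠ j → ∀ α : Bool, (if α then Lp i else Lm i) ≤ U →
      Lp j ≤ U ∧ Lm j ≤ U := fun i j hij α hαU => by
    obtain ⟨m, hm, hU⟩ := hpow j
    refine (hbi j).lp_le_and_lm_le hm hU ?_ hαU (hpos i j hij α true) (hpos i j hij α false)
    cases α
    exacts [(hbi i).finrank_Lm, (hbi i).finrank_Lp]
  obtain ⟨i₀, α₀, h₀⟩ : ∃ i, ∃ α : Bool, (if α then Lp i else Lm i) ≤ U := by
    obtain ⟨u, huU, hu0⟩ := Submodule.exists_mem_ne_zero_of_ne_bot hUbot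
    obtain ⟨i, hi⟩ : ∃ i, u ∉ W i := by
      by_contra! h
      exact hu0 (by simpa [hW] using (Submodule.mem_iInf W).2 h)
    obtain ⟨m, hm, hU⟩ := hpow i
    rcases (hbi i).lp_le_or_lm_le hm hU huU hi with h | h
    exacts [⟨i, true, h⟩, ⟨i, false, h⟩]
  have hall : ∀ j, Lp j ≤ U ∧ Lm j ≤ U := fun j => by
    rcases eq_or_ne j i₀ with rfl | hj
    · have := Fin.nontrivial_iff_two_le.2 hk
      obtain ⟨j', hj'⟩ := exists_ne j
      exact hspread j' j hj' true (hspread j j' hj'.symm α₀ h₀).1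
    · exact hspread i₀ j hj.symm α₀ h₀
  exact hUtop (top_le_iff.1 (hspan ▸ iSup_le fun j => sup_le (hall j).1 (hall j).2))
end

section
/- Let V be a finite-dimensional real inner product space, let x ∈ V with ‖x‖ = 1, and let U be a compact subset of the unit sphere of V with U = −U which is a neighbourhood of x within the unit sphere. Let (g_n) be a sequence in GL(V) such that sup_{u ∈ U} dist(g_n u / ‖g_n u‖, {x, −x}) → 0 as n → ∞. Then for every h ∈ End(V) which is the limit of g_{n_k}/‖g_{n_k}‖ along some subsequence (where ‖·‖ is the operator norm on End(V)), the map h has rank one, its range is the line ℝ·x, and h(u) ≠ 0 for every u in the interior of U relative to the unit sphere. (Fact 4.8, stated with the projective convergence hypothesis and the accumulation points in P(End(V)) expressed via normalized vectors and normalized operators.) -/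
/-!
Along the subsequence `gₙ u / ‖gₙ‖ → h u`, so if `h u ≠ 0` the direction of `h u` is a limit of
the directions of `gₙ u`, i.e. it is `±x`. Hence `h` maps `U`, and so its span `V`, into `ℝ x`,
and `h ≠ 0` because `‖h‖ = 1`. For large `n` the functional `⟪x, gₙ ·⟫` has no zero on `U`, as
`gₙ w` points nearly along `±x`. If `h u = 0` at an interior point `u` of `U`, the functionals
`⟪x, gₙ ·⟫ / ‖gₙ‖ → ⟪x, h ·⟫ ≠ 0` have zeros on a line through `u` converging to `u`, which after
normalization lie in `U` for large `n`.
-/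

open Filter Topology Metric NormedSpace RealInnerProductSpace

theorem Submodule.eq_span_singleton_of_le_of_ne_bot {K M : Type*} [DivisionRing K]
    [AddCommGroup M] [Module K M] {p : Submodule K M} {x : M} (hp : p ≤ K ∙ x)
    (hp0 : p ≠ ⊥) : p = K ∙ x := by
  obtain ⟨y, hy, hy0⟩ := p.exists_mem_ne_zero_of_ne_bot hp0
  obtain ⟨c, rfl⟩ := Submodule.mem_span_singleton.1 (hp hy)
  have hc : c ≠ 0 := by rintro rfl; simp at hy0
  refine le_antisymm hp ((Submodule.span_singleton_le_iff_mem _ _).2 ?_)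
  simpa [smul_smul, inv_mul_cancel₀ hc] using p.smul_mem c⁻¹ hy

theorem LinearMap.range_eq_span_singleton_of_span_eq_top {K M N : Type*} [DivisionRing K]
    [AddCommGroup M] [Module K M] [AddCommGroup N] [Module K N] {f : M →ₗ[K] N} {U : Set M}
    {x : N} (hU : Submodule.span K U = ⊤) (hf : f ≠ 0) (hfU : ∀ u ∈ U, f u ∈ K ∙ x) :
    LinearMap.range f = K ∙ x := by
  refine Submodule.eq_span_singleton_of_le_of_ne_bot ?_ (by rwa [Ne, LinearMap.range_eq_bot])
  rw [LinearMap.range_eq_map, ← hU, Submodule.map_span, Submodule.span_le]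
  rintro _ ⟨u, hu, rfl⟩
  exact hfU u hu

section Normalize

variable {V : Type*} [NormedAddCommGroup V] [NormedSpace ℝ V] {ι : Type*} {l : Filter ι} [l.NeBot]

theorem NormedSpace.continuousAt_normalize {x : V} (hx : x ≠ 0) : ContinuousAt normalize x :=
  (continuous_norm.continuousAt.inv₀ (norm_ne_zero_iff.2 hx)).smul continuousAt_id

theorem NormedSpace.tendsto_normalize_nhdsWithin_sphere {x : V} (hx : ‖x‖ = 1) :
    Tendsto normalize (𝓝 x) (𝓝[sphere 0 1] x) := by
  have hx0 : x ≠ 0 := norm_ne_zero_iff.1 (by simp [hx])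
  refine tendsto_nhdsWithin_iff.2 ⟨?_, ?_⟩
  · simpa [normalize_eq_self_of_norm_eq_one hx] using (continuousAt_normalize hx0).tendsto
  · filter_upwards [isOpen_ne.mem_nhds hx0] with w hw
    simpa using norm_normalize hw

theorem Submodule.span_eq_top_of_mem_nhdsWithin_sphere {U : Set V} {x : V} (hx : ‖x‖ = 1)
    (hU : U ∈ 𝓝[sphere 0 1] x) : Submodule.span ℝ U = ⊤ := by
  refine Submodule.eq_top_of_nonempty_interior' _ ⟨x, mem_interior_iff_mem_nhds.2 ?_⟩
  filter_upwards [tendsto_normalize_nhdsWithin_sphere hx hU] with w hw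
  rw [← norm_smul_normalize w]
  exact Submodule.smul_mem _ _ (Submodule.subset_span hw)

theorem NormedSpace.normalize_mem_of_tendsto_of_infDist {y : ι → V} {y₀ : V} {S : Set V}
    (hS : IsClosed S) (hSne : S.Nonempty) (hy : Tendsto y l (𝓝 y₀)) (hy₀ : y₀ ≠ 0)
    (hclose : ∀ ε > 0, ∀ᶠ i in l, infDist (normalize (y i)) S ≤ ε) :
    normalize y₀ ∈ S := by
  have hlim : Tendsto (fun i => infDist (normalize (y i)) S) l
      (𝓝 (infDist (normalize y₀) S)) :=
    (continuous_infDist_pt S).continuousAt.tendsto.comp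
      ((continuousAt_normalize hy₀).tendsto.comp hy)
  refine (hS.mem_iff_infDist_zero hSne).2 (le_antisymm ?_ infDist_nonneg)
  refine le_of_forall_pos_le_add fun ε hε => ?_
  simpa using le_of_tendsto hlim (hclose ε hε)

theorem NormedSpace.mem_span_singleton_of_tendsto_of_infDist_normalize {y : ι → V} {y₀ x : V}
    (hy : Tendsto y l (𝓝 y₀))
    (hclose : ∀ ε > 0, ∀ᶠ i in l, infDist (normalize (y i)) ({x, -x} : Set V) ≤ ε) :
    y₀ ∈ ℝ ∙ x := by
  by_cases hy₀ : y₀ = 0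
  · simp [hy₀]
  rw [← norm_smul_normalize y₀]
  refine Submodule.smul_mem _ _ ?_
  rcases normalize_mem_of_tendsto_of_infDist (Set.toFinite _).isClosed ⟨x, by simp⟩ hy hy₀ hclose
    with hx | hx <;> rw [hx]
  · exact Submodule.mem_span_singleton_self x
  · exact Submodule.neg_mem _ (Submodule.mem_span_singleton_self x)

theorem ContinuousLinearMap.apply_ne_zero_of_tendsto_of_forall_mem_ne_zero
    {ℓ : ι → V →L[ℝ] ℝ} {ℓ₀ : V →L[ℝ] ℝ} (hℓ : Tendsto ℓ l (𝓝 ℓ₀)) (hℓ₀ : ℓ₀ ≠ 0)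
    {U : Set V} (hU : ∀ᶠ i in l, ∀ w ∈ U, ℓ i w ≠ 0) {u : V} (hu : ‖u‖ = 1)
    (hUu : U ∈ 𝓝[sphere 0 1] u) : ℓ₀ u ≠ 0 := by
  intro hu0
  obtain ⟨v, hv⟩ := DFunLike.ne_iff.1 hℓ₀
  have happly : ∀ w, Tendsto (fun i => ℓ i w) l (𝓝 (ℓ₀ w)) := fun w =>
    ((ContinuousLinearMap.apply ℝ ℝ w).continuous.tendsto ℓ₀).comp hℓ
  -- `w i` is the zero of `ℓ i` on the line `u + ℝ v`; it tends to `u` because `ℓ₀ u = 0`.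
  set w : ι → V := fun i => u - (ℓ i u / ℓ i v) • v
  have hw : Tendsto w l (𝓝 u) := by
    simpa [hu0] using tendsto_const_nhds.sub
      (((happly u).div (happly v) hv).smul_const v)
  have hwU : ∀ᶠ i in l, normalize (w i) ∈ U :=
    (tendsto_normalize_nhdsWithin_sphere hu).comp hw hUu
  have hw0 : ∀ᶠ i in l, ℓ i (w i) = 0 := by
    filter_upwards [(happly v).eventually_ne hv] with i hi
    simp [w, div_mul_cancel₀ _ hi]
  obtain ⟨i, hiU, hwU, hw0⟩ := (hU.and (hwU.and hw0)).exists
  exact hiU _ hwU (by simp [NormedSpace.normalize, hw0])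

end Normalize

theorem inner_ne_zero_of_infDist_normalize_lt_norm {V : Type*} [NormedAddCommGroup V]
    [InnerProductSpace ℝ V] {x y : V} (hy : infDist (normalize y) ({x, -x} : Set V) < ‖x‖) :
    ⟪x, y⟫ ≠ 0 := by
  intro h0
  obtain ⟨z, hz, hyz⟩ := (infDist_lt_iff ⟨x, by simp⟩).1 hy
  replace h0 : ⟪x, normalize y⟫ = 0 := by
    rw [NormedSpace.normalize, inner_smul_right, h0, mul_zero]
  have hsq : ‖x‖ ^ 2 ≤ dist (normalize y) z ^ 2 := by
    rcases hz with rfl | rfl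
    · rw [dist_eq_norm, norm_sub_sq_real, real_inner_comm, h0]
      nlinarith [sq_nonneg ‖normalize y‖]
    · rw [dist_eq_norm, sub_neg_eq_add, norm_add_sq_real, real_inner_comm, h0]
      nlinarith [sq_nonneg ‖normalize y‖]
  nlinarith [dist_nonneg (x := normalize y) (y := z), norm_nonneg x]

theorem ContinuousLinearMap.apply_ne_zero_of_tendsto_of_infDist_normalize_lt
    {E V : Type*} [NormedAddCommGroup E] [NormedSpace ℝ E] [NormedAddCommGroup V]
    [InnerProductSpace ℝ V] {ι : Type*} {l : Filter ι} [l.NeBot] {B : ι → E →L[ℝ] V}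
    {h : E →L[ℝ] V} (hB : Tendsto B l (𝓝 h)) {x : V} (hx0 : x ≠ 0)
    (hx : x ∈ LinearMap.range (h : E →ₗ[ℝ] V)) {U : Set E}
    (hU : ∀ᶠ i in l, ∀ w ∈ U, infDist (normalize (B i w)) ({x, -x} : Set V) < ‖x‖)
    {u : E} (hu : ‖u‖ = 1) (hUu : U ∈ 𝓝[sphere 0 1] u) : h u ≠ 0 := by
  obtain ⟨v, hv⟩ : ∃ v, h v = x := LinearMap.mem_range.1 hx
  have hℓ : Tendsto (fun i => (innerSL ℝ x).comp (B i)) l (𝓝 ((innerSL ℝ x).comp h)) :=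
    ((ContinuousLinearMap.compL ℝ E V ℝ (innerSL ℝ x)).continuous.tendsto h).comp hB
  have hℓ₀ : (innerSL ℝ x).comp h ≠ 0 := DFunLike.ne_iff.2 ⟨v, by simpa [hv] using hx0⟩
  have hℓU : ∀ᶠ i in l, ∀ w ∈ U, (innerSL ℝ x).comp (B i) w ≠ 0 :=
    hU.mono fun i hi w hw => by simpa using inner_ne_zero_of_infDist_normalize_lt_norm (hi w hw)
  intro hhu
  simpa [hhu] using apply_ne_zero_of_tendsto_of_forall_mem_ne_zero hℓ hℓ₀ hℓU hu hUu

theorem fact_4_8_general {V : Type*} [NormedAddCommGroup V] [InnerProductSpace ℝ V]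
    (x : V) (hx : ‖x‖ = 1) (U : Set V)
    (hUnhd : U ∈ nhdsWithin x (Metric.sphere (0 : V) 1))
    (g : ℕ → (V ≃L[ℝ] V))
    (hconv : ∀ ε > (0 : ℝ), ∃ N : ℕ, ∀ n ≥ N, ∀ u ∈ U,
      Metric.infDist (‖(g n) u‖⁻¹ • (g n) u) ({x, -x} : Set V) ≤ ε)
    (h : V →L[ℝ] V) (φ : ℕ → ℕ) (hφ : StrictMono φ)
    (hlim : Tendsto
      (fun m : ℕ => ‖(g (φ m) : V →L[ℝ] V)‖⁻¹ • (g (φ m) : V →L[ℝ] V))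
      atTop (nhds h)) :
    Module.finrank ℝ (LinearMap.range (h : V →ₗ[ℝ] V)) = 1 ∧
    LinearMap.range (h : V →ₗ[ℝ] V) = Submodule.span ℝ {x} ∧
    ∀ u ∈ Metric.sphere (0 : V) 1,
      U ∈ nhdsWithin u (Metric.sphere (0 : V) 1) → h u ≠ 0 := by
  have hx0 : x ≠ 0 := norm_ne_zero_iff.1 (by simp [hx])
  have : Nontrivial V := nontrivial_of_ne x 0 hx0
  set A : ℕ → V →L[ℝ] V := fun n => ‖(g n : V →L[ℝ] V)‖⁻¹ • (g n : V →L[ℝ] V)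
  have hlimA : Tendsto (fun m => A (φ m)) atTop (𝓝 h) := hlim
  have hclose : ∀ ε > (0 : ℝ), ∀ᶠ m in atTop, ∀ u ∈ U,
      infDist (normalize (A (φ m) u)) ({x, -x} : Set V) ≤ ε := fun ε hε => by
    obtain ⟨N, hN⟩ := hconv ε hε
    filter_upwards [hφ.tendsto_atTop.eventually_ge_atTop N] with m hm u hu
    rw [show normalize (A (φ m) u) = normalize (g (φ m) u) from
      normalize_smul_of_pos (inv_pos.2 (g _).norm_pos) _]
    exact hN (φ m) hm u hu
  have hh0 : h ≠ 0 := ne_zero_of_mem_unit_sphere ⟨h, isClosed_sphere.mem_of_tendsto hlimA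
    (.of_forall fun m => by simp [A, norm_smul, (g _).norm_pos.ne'])⟩
  have hrange : LinearMap.range (h : V →ₗ[ℝ] V) = ℝ ∙ x :=
    LinearMap.range_eq_span_singleton_of_span_eq_top
      (Submodule.span_eq_top_of_mem_nhdsWithin_sphere hx hUnhd)
      (fun h0 => hh0 (ContinuousLinearMap.coe_injective h0)) fun u hu =>
        mem_span_singleton_of_tendsto_of_infDist_normalize
          (((ContinuousLinearMap.apply ℝ V u).continuous.tendsto h).comp hlimA)
          fun ε hε => (hclose ε hε).mono fun m hm => hm u hu
  refine ⟨by rw [hrange, finrank_span_singleton hx0], hrange, fun u hu hUu => ?_⟩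
  refine ContinuousLinearMap.apply_ne_zero_of_tendsto_of_infDist_normalize_lt hlimA hx0
    (hrange ▸ Submodule.mem_span_singleton_self x) ?_ (mem_sphere_zero_iff_norm.1 hu) hUu
  filter_upwards [hclose (1 / 2) (by norm_num)] with m hm w hw
  exact (hm w hw).trans_lt (by rw [hx]; norm_num)

/-- Fact 4.8: if a sequence `(gₙ)` in `GL(V)` sends a symmetric compact neighbourhood `U`
of `x` in the unit sphere, projectively, uniformly towards `±x`, then every accumulation
point `h` of the normalized sequence `gₙ/‖gₙ‖` in `End(V)` is a rank-one operator with
range `ℝ·x`, not vanishing on the relative interior of `U`. -/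
theorem fact_4_8 {V : Type*} [NormedAddCommGroup V] [InnerProductSpace ℝ V]
    [FiniteDimensional ℝ V]
    (x : V) (hx : ‖x‖ = 1) (U : Set V)
    (hUc : IsCompact U) (hUs : U ⊆ Metric.sphere (0 : V) 1) (hUsym : U = -U)
    (hUnhd : U ∈ nhdsWithin x (Metric.sphere (0 : V) 1))
    (g : ℕ → (V ≃L[ℝ] V))
    (hconv : ∀ ε > (0 : ℝ), ∃ N : ℕ, ∀ n ≥ N, ∀ u ∈ U,
      Metric.infDist (‖(g n) u‖⁻¹ • (g n) u) ({x, -x} : Set V) ≤ ε)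
    (h : V →L[ℝ] V) (φ : ℕ → ℕ) (hφ : StrictMono φ)
    (hlim : Tendsto
      (fun m : ℕ => ‖(g (φ m) : V →L[ℝ] V)‖⁻¹ • (g (φ m) : V →L[ℝ] V))
      atTop (nhds h)) :
    Module.finrank ℝ (LinearMap.range (h : V →ₗ[ℝ] V)) = 1 ∧
    LinearMap.range (h : V →ₗ[ℝ] V) = Submodule.span ℝ {x} ∧
    ∀ u ∈ Metric.sphere (0 : V) 1,
      U ∈ nhdsWithin u (Metric.sphere (0 : V) 1) → h u ≠ 0 :=
  fact_4_8_general x hx U hUnhd g hconv h φ hφ hlim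
end

section
/- Let E be a finite-dimensional real normed vector space, Ω ⊆ E a nonempty bounded open convex set, and d_Ω its Hilbert metric. Let c₁, c₂ : [0, ∞) → Ω be straight geodesics of speed 1 such that c₁(t) and c₂(t) converge, as t → ∞, to one and the same point ξ of the frontier of Ω. Then the function t ↦ d_Ω(c₁(t), c₂(t)) is non-increasing on [0, ∞). (Proposition 5.1(1), in the base-point form established in its proof: the Hilbert distance between two geodesics with the same forward endpoint is non-increasing.) -/
/-!
Parametrise the chord of `Ω` through a point of `Ω` and the boundary point `ξ` by `w ∈ (0, 1)`,
with `w = 0` at `ξ`; on it the Hilbert distance is `|logit w - logit w'| / 2`. Along a unit-speed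
straight geodesic tending to `ξ`, `logit w / 2` is therefore an isometric embedding of `[0, ∞)`
into `ℝ` tending to `-∞`, so it is `t ↦ const - t`: the geodesic runs monotonically into `ξ`,
and `c t = c s + λ • (ξ - c s)` with `λ ∈ (0, 1)` whenever `s < t`.

Now move `x, y ∈ Ω` toward `ξ` by the same Hilbert distance, to `x'` and `y'`. Central projection
from `ξ` maps the line `xy` onto the line `x'y'` and preserves cross-ratios; by convexity it sends
the ends of the chord through `x, y` to points of `closure Ω`, so the ends of the chord through
`x', y'` lie further out and `d x' y' ≤ d x y`. Moving both points the same distance is what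
places the projected points beyond `x'` and beyond `y'`.
-/

open Filter Topology Set

noncomputable def logit (w : ℝ) : ℝ := Real.log w - Real.log (1 - w)

lemma logit_one_sub (w : ℝ) : logit (1 - w) = -logit w := by
  rw [logit, logit, sub_sub_cancel]; ring

lemma logit_strictMonoOn : StrictMonoOn logit (Ioo 0 1) := fun a ha b hb hab => by
  have h1 := Real.log_lt_log ha.1 hab
  have h2 := Real.log_lt_log (sub_pos.2 hb.2) (by linarith : 1 - b < 1 - a)
  rw [logit, logit]
  linarith

lemma ray_isometry {g : ℝ → ℝ} (h : ∀ u ≥ (0 : ℝ), ∀ v ≥ (0 : ℝ), |g u - g v| = |u - v|) :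
    (∀ u ≥ (0 : ℝ), g u = g 0 + u) ∨ ∀ u ≥ (0 : ℝ), g u = g 0 - u := by
  have hsq : ∀ u ≥ (0 : ℝ), ∀ v ≥ (0 : ℝ), (g u - g v) ^ 2 = (u - v) ^ 2 := fun u hu v hv => by
    rw [← sq_abs, h u hu v hv, sq_abs]
  have h10 := hsq 1 zero_le_one 0 le_rfl
  -- the squared identities at `v = 0` and `v = 1` give `(g 1 - g 0) * (g u - g 0) = u`
  have hlin : ∀ u ≥ (0 : ℝ), g u = g 0 + (g 1 - g 0) * u := fun u hu => by
    linear_combination ((g 1 - g 0) / 2) * (hsq u hu 0 le_rfl - hsq u hu 1 zero_le_one + h10)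
      - (g u - g 0) * h10
  rcases (abs_eq zero_le_one).mp (by simpa using h 1 zero_le_one 0 le_rfl) with he | he
  · exact .inl fun u hu => by rw [hlin u hu, he, one_mul]
  · exact .inr fun u hu => by rw [hlin u hu, he]; ring

lemma strictAntiOn_of_abs_logit_sub {w : ℝ → ℝ} (hw : ∀ u ∈ Ici (0 : ℝ), w u ∈ Ioo 0 1)
    (hiso : ∀ u ∈ Ici (0 : ℝ), ∀ v ∈ Ici (0 : ℝ), |logit (w v) - logit (w u)| / 2 = |u - v|)
    (hlim : Tendsto w atTop (𝓝 0)) : StrictAntiOn w (Ici 0) := by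
  have hg : ∀ u ≥ (0 : ℝ), ∀ v ≥ (0 : ℝ), |logit (w u) / 2 - logit (w v) / 2| = |u - v| :=
    fun u hu v hv => by rw [← hiso u hu v hv, ← sub_div, abs_div, abs_two, abs_sub_comm]
  rcases ray_isometry hg with hplus | hminus
  · obtain ⟨u, hu, hsmall⟩ :=
      ((eventually_ge_atTop 0).and (hlim.eventually (gt_mem_nhds (hw 0 self_mem_Ici).1))).exists
    have hlogit : logit (w 0) ≤ logit (w u) := by linarith [hplus u hu]
    have := (logit_strictMonoOn.le_iff_le (hw 0 self_mem_Ici) (hw u hu)).mp hlogit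
    linarith
  · intro s hs t ht hst
    refine (logit_strictMonoOn.lt_iff_lt (hw t ht) (hw s hs)).mp ?_
    linarith [hminus s hs, hminus t ht]

/- With `K = exp (2 * δ)`, `h1` and `h2` say that `x` and `y` are moved a Hilbert distance `δ`
toward `ξ` (see `IsHilbertMetric.exp_two_mul_dist_add_smul_sub`), and `hC` is the convexity bound
`mul_le_exitParam_mul`. -/
lemma mul_sub_add_mul_one_sub_nonneg {l m σ τ K A : ℝ} (hσ : 0 ≤ σ) (hτ : 0 ≤ τ) (hK : 1 ≤ K)
    (h1 : K * (σ * (1 - l)) = l + σ) (h2 : K * (τ * (1 - m)) = m + τ)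
    (hC : A * τ ≤ σ * (1 + τ + A)) : 0 ≤ A * (l - m) + l * (1 - m) := by
  have hKσ : 0 < 1 + K * σ := by positivity
  have hKτ : 0 < 1 + K * τ := by positivity
  have hl : l = σ * (K - 1) / (1 + K * σ) := by
    rw [eq_div_iff hKσ.ne']
    linear_combination -h1
  have hm : m = τ * (K - 1) / (1 + K * τ) := by
    rw [eq_div_iff hKτ.ne']
    linear_combination -h2
  have key : A * (l - m) + l * (1 - m) =
      (K - 1) * (σ * (1 + τ + A) - A * τ) / ((1 + K * σ) * (1 + K * τ)) := by
    rw [hl, hm]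
    field_simp
    ring
  rw [key]
  exact div_nonneg (mul_nonneg (by linarith) (by linarith)) (by positivity)

section Chords

variable {E : Type*} [NormedAddCommGroup E] [NormedSpace ℝ E] {Ω : Set E} {x y ξ v : E}
  {r l m : ℝ}

-- Junk (`sSup` of an unbounded set) unless `Ω` is bounded and `v ≠ 0`.
noncomputable def exitParam (Ω : Set E) (x v : E) : ℝ :=
  sSup {r : ℝ | 0 ≤ r ∧ x + r • v ∈ closure Ω}

lemma bddAbove_exitParam_set (hbd : Bornology.IsBounded Ω) (hv : v ≠ 0) :
    BddAbove {r : ℝ | 0 ≤ r ∧ x + r • v ∈ closure Ω} := by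
  obtain ⟨C, hC⟩ := hbd.closure.exists_norm_le
  refine ⟨(C + ‖x‖) / ‖v‖, fun r hr' => ?_⟩
  obtain ⟨hr, hmem⟩ := hr'
  rw [le_div_iff₀ (norm_pos_iff.mpr hv)]
  calc r * ‖v‖ = ‖(x + r • v) - x‖ := by
        rw [add_sub_cancel_left, norm_smul, Real.norm_of_nonneg hr]
    _ ≤ ‖x + r • v‖ + ‖x‖ := norm_sub_le _ _
    _ ≤ C + ‖x‖ := by linarith [hC _ hmem]

lemma le_exitParam (hbd : Bornology.IsBounded Ω) (hv : v ≠ 0) (hr : 0 ≤ r)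
    (h : x + r • v ∈ closure Ω) : r ≤ exitParam Ω x v :=
  le_csSup (bddAbove_exitParam_set hbd hv) ⟨hr, h⟩

lemma exitParam_nonneg (hbd : Bornology.IsBounded Ω) (hx : x ∈ Ω) (hv : v ≠ 0) :
    0 ≤ exitParam Ω x v :=
  le_exitParam hbd hv le_rfl (by simpa using subset_closure hx)

lemma add_smul_mem_of_lt_exitParam (hop : IsOpen Ω) (hconv : Convex ℝ Ω) (hx : x ∈ Ω)
    (hr : 0 ≤ r) (hlt : r < exitParam Ω x v) : x + r • v ∈ Ω := by
  obtain ⟨r', ⟨-, hr'⟩, hrr'⟩ :=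
    exists_lt_of_lt_csSup (s := {r : ℝ | 0 ≤ r ∧ x + r • v ∈ closure Ω})
      ⟨0, le_rfl, by simpa using subset_closure hx⟩ hlt
  have hr'pos : 0 < r' := hr.trans_lt hrr'
  have hcomb : x + r • v = (1 - r / r') • x + (r / r') • (x + r' • v) := by
    rw [smul_add, smul_smul, div_mul_cancel₀ r hr'pos.ne']
    module
  rw [hcomb, ← hop.interior_eq]
  exact hconv.combo_interior_closure_mem_interior (hop.interior_eq.symm ▸ hx) hr'
    (by rw [sub_pos, div_lt_one hr'pos]; exact hrr') (by positivity) (by ring)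

lemma add_exitParam_smul_mem_frontier (hbd : Bornology.IsBounded Ω) (hop : IsOpen Ω)
    (hx : x ∈ Ω) (hv : v ≠ 0) : x + exitParam Ω x v • v ∈ frontier Ω := by
  have hclosed : IsClosed {r : ℝ | 0 ≤ r ∧ x + r • v ∈ closure Ω} :=
    isClosed_Ici.inter (isClosed_closure.preimage (by fun_prop))
  have hmem : exitParam Ω x v ∈ {r : ℝ | 0 ≤ r ∧ x + r • v ∈ closure Ω} :=
    hclosed.csSup_mem ⟨0, le_rfl, by simpa using subset_closure hx⟩
      (bddAbove_exitParam_set hbd hv)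
  rw [hop.frontier_eq]
  refine ⟨hmem.2, fun hΩ => ?_⟩
  obtain ⟨ε, hε, hball⟩ := Metric.isOpen_iff.mp
    (hop.preimage (by fun_prop : Continuous fun r : ℝ => x + r • v)) _ hΩ
  have hfar : exitParam Ω x v + ε / 2 ≤ exitParam Ω x v :=
    le_exitParam hbd hv (by linarith [hmem.1]) <| subset_closure <| hball <| by
      rw [Metric.mem_ball, Real.dist_eq, add_sub_cancel_left, abs_of_pos (half_pos hε)]
      exact half_lt_self hε
  linarith

lemma exitParam_pos (hbd : Bornology.IsBounded Ω) (hop : IsOpen Ω) (hx : x ∈ Ω) (hv : v ≠ 0) :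
    0 < exitParam Ω x v := by
  refine (exitParam_nonneg hbd hx hv).lt_of_ne fun h => ?_
  have := add_exitParam_smul_mem_frontier hbd hop hx hv
  rw [← h, zero_smul, add_zero, hop.frontier_eq] at this
  exact this.2 hx

lemma eq_exitParam_of_mem_frontier (hbd : Bornology.IsBounded Ω) (hop : IsOpen Ω)
    (hconv : Convex ℝ Ω) (hx : x ∈ Ω) (hv : v ≠ 0) (hr : 0 ≤ r)
    (h : x + r • v ∈ frontier Ω) : r = exitParam Ω x v := by
  refine (le_exitParam hbd hv hr (frontier_subset_closure h)).antisymm (not_lt.mp fun hlt => ?_)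
  rw [hop.frontier_eq] at h
  exact h.2 (add_smul_mem_of_lt_exitParam hop hconv hx hr hlt)

lemma Convex.pos_of_add_smul_sub_mem (hconv : Convex ℝ Ω) (hop : IsOpen Ω) {a b : E} {w : ℝ}
    (ha : a ∈ frontier Ω) (hb : b ∈ closure Ω) (h : a + w • (b - a) ∈ Ω) : 0 < w := by
  by_contra! hw
  have hw1 : 0 < 1 - w := by linarith
  have hcomb : a = (1 / (1 - w)) • (a + w • (b - a)) + (-w / (1 - w)) • b := by
    match_scalars <;> field_simp <;> ring
  rw [hop.frontier_eq] at ha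
  refine ha.2 ?_
  rw [hcomb, ← hop.interior_eq]
  exact hconv.combo_interior_closure_mem_interior (hop.interior_eq.symm ▸ h) hb
    (by positivity) (div_nonneg (by linarith) hw1.le) (by field_simp; ring)

lemma Convex.add_smul_sub_mem_of_mem_closure (hconv : Convex ℝ Ω) (hop : IsOpen Ω)
    (hx : x ∈ Ω) (hξ : ξ ∈ closure Ω) (hl : l ∈ Ico (0 : ℝ) 1) : x + l • (ξ - x) ∈ Ω := by
  have h := hconv.add_smul_sub_mem_interior' hξ (hop.interior_eq.symm ▸ hx)
    (t := 1 - l) ⟨by linarith [hl.2], by linarith [hl.1]⟩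
  rw [hop.interior_eq] at h
  convert h using 1
  module

-- The segment joining the chord ends `x + A • (x - y)` and `y + τ • (y - ξ)` meets the ray
-- from `x` away from `ξ`.
lemma mul_le_exitParam_mul (hbd : Bornology.IsBounded Ω) (hconv : Convex ℝ Ω) {A τ : ℝ}
    (hxξ : x - ξ ≠ 0) (hA : 0 ≤ A) (hτ : 0 ≤ τ) (ha : x + A • (x - y) ∈ closure Ω)
    (hb : y + τ • (y - ξ) ∈ closure Ω) : A * τ ≤ exitParam Ω x (x - ξ) * (1 + τ + A) := by
  have hpos : 0 < 1 + τ + A := by positivity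
  have hcomb : x + (A * τ / (1 + τ + A)) • (x - ξ) =
      (1 - A / (1 + τ + A)) • (x + A • (x - y)) + (A / (1 + τ + A)) • (y + τ • (y - ξ)) := by
    match_scalars <;> field_simp <;> ring
  have hmem : x + (A * τ / (1 + τ + A)) • (x - ξ) ∈ closure Ω := by
    rw [hcomb]
    exact hconv.closure ha hb (by rw [sub_nonneg, div_le_one hpos]; linarith) (by positivity)
      (by ring)
  rw [← div_le_iff₀ hpos]
  exact le_exitParam hbd hxξ (by positivity) hmem

lemma one_sub_mul_one_add_inv_exitParam_le (hbd : Bornology.IsBounded Ω) (hconv : Convex ℝ Ω)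
    {A : ℝ} (hξ : ξ ∈ closure Ω) (hA : 0 < A) (ha : x + A • (x - y) ∈ closure Ω)
    (hl : l < 1) (hm : m < 1) (hkey : 0 ≤ A * (l - m) + l * (1 - m))
    (hne : x + l • (ξ - x) - (y + m • (ξ - y)) ≠ 0) :
    (1 - l) * (1 + (exitParam Ω (x + l • (ξ - x)) (x + l • (ξ - x) - (y + m • (ξ - y))))⁻¹) ≤
      (1 - m) * (1 + A⁻¹) := by
  set α := exitParam Ω (x + l • (ξ - x)) (x + l • (ξ - x) - (y + m • (ξ - y)))
  set D := A * (l - m) + (1 - m)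
  have hD : 0 < D := by nlinarith
  have hα₀ : 0 < (1 - l) * A / D := div_pos (mul_pos (by linarith) hA) hD
  -- the projection from `ξ` of the chord end `x + A • (x - y)` onto the line `x'y'`
  have hcomb : x + l • (ξ - x) + ((1 - l) * A / D) • (x + l • (ξ - x) - (y + m • (ξ - y))) =
      (1 - (1 - l) * (1 - m) / D) • ξ + ((1 - l) * (1 - m) / D) • (x + A • (x - y)) := by
    match_scalars <;> field_simp <;> ring
  have hα : (1 - l) * A / D ≤ α := by
    refine le_exitParam hbd hne hα₀.le ?_
    rw [hcomb]
    refine hconv.closure hξ ha ?_ (div_nonneg (mul_nonneg (by linarith) (by linarith)) hD.le)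
      (by ring)
    rw [sub_nonneg, div_le_one hD]
    linarith
  calc (1 - l) * (1 + α⁻¹) ≤ (1 - l) * (1 + ((1 - l) * A / D)⁻¹) := by gcongr
    _ = (1 - m) * (1 + A⁻¹) := by
        have : 1 - l ≠ 0 := by linarith
        field_simp
        ring

lemma exists_sub_eq_smul_of_tendsto {c : ℝ → E}
    (hline : ∃ p q : E, ∀ t ∈ Ici (0 : ℝ), ∃ r : ℝ, c t = p + r • q)
    (hlim : Tendsto c atTop (𝓝 ξ)) (h0 : c 0 ≠ ξ) {u : ℝ} (hu : 0 ≤ u) :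
    ∃ κ : ℝ, c u - ξ = κ • (c 0 - ξ) := by
  obtain ⟨p, q, hpq⟩ := hline
  have hmem : ∀ t ∈ Ici (0 : ℝ), c t - p ∈ ℝ ∙ q := fun t ht => by
    obtain ⟨r, hr⟩ := hpq t ht
    rw [hr, add_sub_cancel_left]
    exact Submodule.smul_mem _ r (Submodule.mem_span_singleton_self q)
  have hξ : ξ - p ∈ ℝ ∙ q := (Submodule.closed_of_finiteDimensional _).mem_of_tendsto
    (hlim.sub_const p) ((eventually_ge_atTop 0).mono hmem)
  have hcoef : ∀ t ∈ Ici (0 : ℝ), ∃ a : ℝ, c t - ξ = a • q := fun t ht => by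
    obtain ⟨a, ha⟩ := Submodule.mem_span_singleton.mp (Submodule.sub_mem _ (hmem t ht) hξ)
    exact ⟨a, by rw [ha]; abel⟩
  obtain ⟨a, ha⟩ := hcoef u hu
  obtain ⟨b, hb⟩ := hcoef 0 self_mem_Ici
  have hb0 : b ≠ 0 := by
    rintro rfl
    rw [zero_smul, sub_eq_zero] at hb
    exact h0 hb
  exact ⟨a / b, by rw [ha, hb, smul_smul, div_mul_cancel₀ a hb0]⟩

lemma tendsto_zero_of_eq_add_smul {c : ℝ → E} {w : ℝ → ℝ} (hv : v ≠ 0)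
    (hcw : ∀ᶠ u in atTop, c u = ξ + w u • v)
    (hlim : Tendsto c atTop (𝓝 ξ)) : Tendsto w atTop (𝓝 0) := by
  rw [tendsto_zero_iff_norm_tendsto_zero]
  have h : Tendsto (fun u => ‖c u - ξ‖ / ‖v‖) atTop (𝓝 0) := by
    simpa using ((tendsto_iff_norm_sub_tendsto_zero.mp hlim).div_const ‖v‖)
  refine h.congr' (hcw.mono fun u hu => ?_)
  rw [hu, add_sub_cancel_left, norm_smul, mul_div_cancel_right₀ _ (norm_ne_zero_iff.mpr hv)]

end Chords

structure IsHilbertMetric {E : Type*} [NormedAddCommGroup E] [NormedSpace ℝ E]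
    (Ω : Set E) (d : E → E → ℝ) : Prop where
  dist_self : ∀ x ∈ Ω, d x x = 0
  dist_eq : ∀ x ∈ Ω, ∀ y ∈ Ω, x ≠ y → ∀ a ∈ frontier Ω, ∀ b ∈ frontier Ω,
    (∃ s > (0 : ℝ), a = x + s • (x - y)) → (∃ t > (0 : ℝ), b = y + t • (y - x)) →
    d x y = (1 / 2) * Real.log ((‖y - a‖ * ‖x - b‖) / (‖x - a‖ * ‖y - b‖))

namespace IsHilbertMetric

variable {E : Type*} [NormedAddCommGroup E] [NormedSpace ℝ E] {Ω : Set E} {d : E → E → ℝ}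
  {x y ξ : E} {l m : ℝ}

lemma dist_eq_log_exitParam (hd : IsHilbertMetric Ω d) (hbd : Bornology.IsBounded Ω)
    (hop : IsOpen Ω) (hx : x ∈ Ω) (hy : y ∈ Ω) (hxy : x ≠ y) :
    d x y = Real.log ((1 + (exitParam Ω x (x - y))⁻¹) * (1 + (exitParam Ω y (y - x))⁻¹)) / 2 := by
  have hxy' : x - y ≠ 0 := sub_ne_zero.mpr hxy
  have hyx' : y - x ≠ 0 := sub_ne_zero.mpr hxy.symm
  set A := exitParam Ω x (x - y)
  set B := exitParam Ω y (y - x)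
  have hA : 0 < A := exitParam_pos hbd hop hx hxy'
  have hB : 0 < B := exitParam_pos hbd hop hy hyx'
  rw [hd.dist_eq x hx y hy hxy _ (add_exitParam_smul_mem_frontier hbd hop hx hxy') _
    (add_exitParam_smul_mem_frontier hbd hop hy hyx') ⟨A, hA, rfl⟩ ⟨B, hB, rfl⟩]
  have e1 : y - (x + A • (x - y)) = (1 + A) • (y - x) := by module
  have e2 : x - (y + B • (y - x)) = (1 + B) • (x - y) := by module
  have e3 : x - (x + A • (x - y)) = A • (y - x) := by module
  have e4 : y - (y + B • (y - x)) = B • (x - y) := by module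
  have hn : 0 < ‖x - y‖ := norm_pos_iff.mpr hxy'
  rw [e1, e2, e3, e4, norm_smul, norm_smul, norm_smul, norm_smul, norm_sub_rev y x,
    Real.norm_of_nonneg hA.le, Real.norm_of_nonneg hB.le, Real.norm_of_nonneg (by linarith),
    Real.norm_of_nonneg (by linarith)]
  field_simp
  ring_nf

lemma dist_nonneg (hd : IsHilbertMetric Ω d) (hbd : Bornology.IsBounded Ω) (hop : IsOpen Ω)
    (hx : x ∈ Ω) (hy : y ∈ Ω) : 0 ≤ d x y := by
  rcases eq_or_ne x y with rfl | hxy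
  · exact (hd.dist_self x hx).ge
  rw [hd.dist_eq_log_exitParam hbd hop hx hy hxy]
  have hA := exitParam_pos hbd hop hx (sub_ne_zero.mpr hxy)
  have hB := exitParam_pos hbd hop hy (sub_ne_zero.mpr hxy.symm)
  have h1 : 1 ≤ (1 + (exitParam Ω x (x - y))⁻¹) * (1 + (exitParam Ω y (y - x))⁻¹) :=
    one_le_mul_of_one_le_of_one_le (by simp [hA.le]) (by simp [hB.le])
  exact div_nonneg (Real.log_nonneg h1) zero_le_two

lemma dist_add_smul_sub_of_lt (hd : IsHilbertMetric Ω d) (hbd : Bornology.IsBounded Ω)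
    (hop : IsOpen Ω) (hconv : Convex ℝ Ω) {a b : E} {w w' : ℝ} (ha : a ∈ frontier Ω)
    (hb : b ∈ frontier Ω) (hww' : w < w') (hx : a + w • (b - a) ∈ Ω)
    (hy : a + w' • (b - a) ∈ Ω) :
    d (a + w • (b - a)) (a + w' • (b - a)) = (logit w' - logit w) / 2 := by
  have hw : 0 < w := hconv.pos_of_add_smul_sub_mem hop ha (frontier_subset_closure hb) hx
  have hw' : 0 < 1 - w' := hconv.pos_of_add_smul_sub_mem hop hb (frontier_subset_closure ha)
    (by convert hy using 1; module)
  have hba : b - a ≠ 0 := by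
    intro h
    rw [h, smul_zero, add_zero] at hx
    exact (hop.frontier_eq ▸ ha).2 hx
  have hδ : 0 < w' - w := sub_pos.mpr hww'
  have hxy : a + w • (b - a) - (a + w' • (b - a)) ≠ 0 := by
    rw [add_sub_add_left_eq_sub, ← sub_smul]
    exact smul_ne_zero (by linarith) hba
  have hA : exitParam Ω (a + w • (b - a)) (a + w • (b - a) - (a + w' • (b - a))) =
      w / (w' - w) :=
    (eq_exitParam_of_mem_frontier hbd hop hconv hx hxy (by positivity)
      (by convert ha using 1; match_scalars <;> field_simp <;> ring)).symm
  have hB : exitParam Ω (a + w' • (b - a)) (a + w' • (b - a) - (a + w • (b - a))) =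
      (1 - w') / (w' - w) :=
    (eq_exitParam_of_mem_frontier hbd hop hconv hy (by rwa [← neg_sub, neg_ne_zero])
      (by positivity) (by convert hb using 1; match_scalars <;> field_simp <;> ring)).symm
  rw [hd.dist_eq_log_exitParam hbd hop hx hy (sub_ne_zero.mp hxy), hA, hB,
    show (1 + (w / (w' - w))⁻¹) * (1 + ((1 - w') / (w' - w))⁻¹) = w' / w * ((1 - w) / (1 - w'))
      by field_simp; ring,
    Real.log_mul (div_pos (by linarith) hw).ne' (div_pos (by linarith) hw').ne',
    Real.log_div (by linarith) hw.ne',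
    Real.log_div (by linarith) hw'.ne', logit, logit]
  ring

lemma dist_add_smul_sub (hd : IsHilbertMetric Ω d) (hbd : Bornology.IsBounded Ω)
    (hop : IsOpen Ω) (hconv : Convex ℝ Ω) {a b : E} {w w' : ℝ} (ha : a ∈ frontier Ω)
    (hb : b ∈ frontier Ω) (hx : a + w • (b - a) ∈ Ω) (hy : a + w' • (b - a) ∈ Ω) :
    d (a + w • (b - a)) (a + w' • (b - a)) = |logit w' - logit w| / 2 := by
  have hnonneg := hd.dist_nonneg hbd hop hx hy
  rcases lt_trichotomy w w' with hlt | rfl | hgt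
  · rw [hd.dist_add_smul_sub_of_lt hbd hop hconv ha hb hlt hx hy] at hnonneg ⊢
    rw [abs_of_nonneg (by linarith)]
  · rw [sub_self, abs_zero, zero_div, hd.dist_self _ hx]
  · have hflip : a + w • (b - a) = b + (1 - w) • (a - b) := by module
    have hflip' : a + w' • (b - a) = b + (1 - w') • (a - b) := by module
    rw [hflip] at hx
    rw [hflip'] at hy
    rw [hflip, hflip'] at hnonneg ⊢
    rw [hd.dist_add_smul_sub_of_lt hbd hop hconv hb ha (by linarith) hx hy, logit_one_sub,
      logit_one_sub] at hnonneg ⊢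
    rw [abs_of_nonpos (by linarith)]
    ring

lemma exists_eq_add_smul_sub_of_geodesic (hd : IsHilbertMetric Ω d)
    (hbd : Bornology.IsBounded Ω) (hop : IsOpen Ω) (hconv : Convex ℝ Ω) {c : ℝ → E} {ξ : E}
    (hcΩ : ∀ t ∈ Ici (0 : ℝ), c t ∈ Ω)
    (hline : ∃ p q : E, ∀ t ∈ Ici (0 : ℝ), ∃ r : ℝ, c t = p + r • q)
    (hgeo : ∀ s ∈ Ici (0 : ℝ), ∀ t ∈ Ici (0 : ℝ), d (c s) (c t) = |s - t|)
    (hξ : ξ ∈ frontier Ω) (hlim : Tendsto c atTop (𝓝 ξ)) {s t : ℝ} (hs : 0 ≤ s) (hst : s < t) :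
    ∃ l ∈ Ioo (0 : ℝ) 1, c t = c s + l • (ξ - c s) := by
  have hc0 : c 0 ∈ Ω := hcΩ 0 self_mem_Ici
  have hv : c 0 - ξ ≠ 0 := sub_ne_zero.mpr (ne_of_mem_of_not_mem hc0 (hop.frontier_eq ▸ hξ).2)
  set σ := exitParam Ω (c 0) (c 0 - ξ)
  have hσ : 0 < σ := exitParam_pos hbd hop hc0 hv
  have hb : c 0 + σ • (c 0 - ξ) ∈ frontier Ω := add_exitParam_smul_mem_frontier hbd hop hc0 hv
  have hbξ_eq : c 0 + σ • (c 0 - ξ) - ξ = (1 + σ) • (c 0 - ξ) := by module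
  have hbξ : c 0 + σ • (c 0 - ξ) - ξ ≠ 0 := hbξ_eq ▸ smul_ne_zero (by positivity) hv
  -- `w u` is the position of `c u` on the chord from `ξ` to the far end of the line
  have hcoord : ∀ u ∈ Ici (0 : ℝ), ∃ w : ℝ, c u = ξ + w • (c 0 + σ • (c 0 - ξ) - ξ) := by
    intro u hu
    obtain ⟨κ, hκ⟩ := exists_sub_eq_smul_of_tendsto hline hlim (sub_ne_zero.mp hv) hu
    refine ⟨κ / (1 + σ), ?_⟩
    rw [← sub_eq_iff_eq_add', hκ, hbξ_eq, smul_smul, div_mul_cancel₀ _ (by positivity)]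
  choose! w hw using hcoord
  have hwΩ : ∀ u ∈ Ici (0 : ℝ), w u ∈ Ioo 0 1 := fun u hu => by
    have hmem := hw u hu ▸ hcΩ u hu
    refine ⟨hconv.pos_of_add_smul_sub_mem hop hξ (frontier_subset_closure hb) hmem, ?_⟩
    have := hconv.pos_of_add_smul_sub_mem (w := 1 - w u) hop hb (frontier_subset_closure hξ)
      (by convert hmem using 1; module)
    linarith
  have hanti : StrictAntiOn w (Ici 0) := by
    refine strictAntiOn_of_abs_logit_sub hwΩ (fun u hu v hv => ?_)
      (tendsto_zero_of_eq_add_smul hbξ ((eventually_ge_atTop 0).mono hw) hlim)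
    rw [← hgeo u hu v hv, hw u hu, hw v hv, hd.dist_add_smul_sub hbd hop hconv hξ hb
      (hw u hu ▸ hcΩ u hu) (hw v hv ▸ hcΩ v hv)]
  have ht : t ∈ Ici (0 : ℝ) := hs.trans hst.le
  have hwt := hanti hs ht hst
  have hws := (hwΩ s hs).1
  refine ⟨1 - w t / w s, ⟨by rw [sub_pos, div_lt_one hws]; exact hwt,
    by linarith [div_pos (hwΩ t ht).1 hws]⟩, ?_⟩
  rw [hw t ht, hw s hs]
  match_scalars <;> field_simp <;> ring

lemma exp_two_mul_dist_add_smul_sub (hd : IsHilbertMetric Ω d)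
    (hbd : Bornology.IsBounded Ω) (hop : IsOpen Ω) (hconv : Convex ℝ Ω) (hx : x ∈ Ω)
    (hξ : ξ ∈ frontier Ω) (hl : l ∈ Ioo (0 : ℝ) 1) :
    Real.exp (2 * d x (x + l • (ξ - x))) * (exitParam Ω x (x - ξ) * (1 - l)) =
      l + exitParam Ω x (x - ξ) := by
  obtain ⟨hl0, hl1⟩ := hl
  have hx' := hconv.add_smul_sub_mem_of_mem_closure hop hx (frontier_subset_closure hξ)
    ⟨hl0.le, hl1⟩
  have hxξ : x - ξ ≠ 0 := sub_ne_zero.mpr (ne_of_mem_of_not_mem hx (hop.frontier_eq ▸ hξ).2)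
  set σ := exitParam Ω x (x - ξ)
  have hσ : 0 < σ := exitParam_pos hbd hop hx hxξ
  have hxx' : x - (x + l • (ξ - x)) = l • (x - ξ) := by module
  have hx'x : x + l • (ξ - x) - x ≠ 0 := by
    rw [add_sub_cancel_left]
    exact smul_ne_zero hl0.ne' (sub_ne_zero.mpr (sub_ne_zero.mp hxξ).symm)
  have hA : exitParam Ω x (x - (x + l • (ξ - x))) = σ / l := by
    rw [hxx']
    refine (eq_exitParam_of_mem_frontier hbd hop hconv hx (smul_ne_zero hl0.ne' hxξ)
      (by positivity) ?_).symm
    rw [smul_smul, div_mul_cancel₀ σ hl0.ne']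
    exact add_exitParam_smul_mem_frontier hbd hop hx hxξ
  have hB : exitParam Ω (x + l • (ξ - x)) (x + l • (ξ - x) - x) = (1 - l) / l :=
    (eq_exitParam_of_mem_frontier hbd hop hconv hx' hx'x (div_nonneg (by linarith) hl0.le)
      (by convert hξ using 1; match_scalars <;> field_simp <;> ring)).symm
  rw [hd.dist_eq_log_exitParam hbd hop hx hx' (sub_ne_zero.mp (hxx' ▸ smul_ne_zero hl0.ne' hxξ)),
    hA, hB, mul_div_cancel₀ _ two_ne_zero, Real.exp_log (by have := sub_pos.2 hl1; positivity)]
  field_simp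
  ring

lemma eq_of_dist_add_smul_sub_eq (hd : IsHilbertMetric Ω d) (hbd : Bornology.IsBounded Ω)
    (hop : IsOpen Ω) (hconv : Convex ℝ Ω) (hx : x ∈ Ω) (hξ : ξ ∈ frontier Ω)
    (hl : l ∈ Ioo (0 : ℝ) 1) (hm : m ∈ Ioo (0 : ℝ) 1)
    (heq : d x (x + l • (ξ - x)) = d x (x + m • (ξ - x))) : l = m := by
  have hσ := exitParam_pos hbd hop hx
    (sub_ne_zero.mpr (ne_of_mem_of_not_mem hx (hop.frontier_eq ▸ hξ).2))
  have h1 := hd.exp_two_mul_dist_add_smul_sub hbd hop hconv hx hξ hl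
  have h2 := hd.exp_two_mul_dist_add_smul_sub hbd hop hconv hx hξ hm
  rw [← heq] at h2
  have h : (l - m) * (1 + Real.exp (2 * d x (x + l • (ξ - x))) * exitParam Ω x (x - ξ)) = 0 := by
    linear_combination h2 - h1
  exact sub_eq_zero.mp ((mul_eq_zero.mp h).resolve_right (by positivity))

lemma one_sub_mul_one_add_inv_exitParam_le_of_dist_eq (hd : IsHilbertMetric Ω d)
    (hbd : Bornology.IsBounded Ω) (hop : IsOpen Ω) (hconv : Convex ℝ Ω) (hx : x ∈ Ω)
    (hy : y ∈ Ω) (hξ : ξ ∈ frontier Ω) (hl : l ∈ Ioo (0 : ℝ) 1) (hm : m ∈ Ioo (0 : ℝ) 1)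
    (heq : d x (x + l • (ξ - x)) = d y (y + m • (ξ - y))) (hxy : x ≠ y)
    (hne : x + l • (ξ - x) ≠ y + m • (ξ - y)) :
    (1 - l) * (1 + (exitParam Ω (x + l • (ξ - x)) (x + l • (ξ - x) - (y + m • (ξ - y))))⁻¹) ≤
      (1 - m) * (1 + (exitParam Ω x (x - y))⁻¹) := by
  have hξ' := frontier_subset_closure hξ
  have hx' := hconv.add_smul_sub_mem_of_mem_closure hop hx hξ' ⟨hl.1.le, hl.2⟩
  have hxξ : x - ξ ≠ 0 := sub_ne_zero.mpr (ne_of_mem_of_not_mem hx (hop.frontier_eq ▸ hξ).2)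
  have hyξ : y - ξ ≠ 0 := sub_ne_zero.mpr (ne_of_mem_of_not_mem hy (hop.frontier_eq ▸ hξ).2)
  have hσ := exitParam_pos hbd hop hx hxξ
  have hτ := exitParam_pos hbd hop hy hyξ
  have h1 := hd.exp_two_mul_dist_add_smul_sub hbd hop hconv hx hξ hl
  have h2 := hd.exp_two_mul_dist_add_smul_sub hbd hop hconv hy hξ hm
  rw [← heq] at h2
  have hK : 1 ≤ Real.exp (2 * d x (x + l • (ξ - x))) :=
    Real.one_le_exp (by linarith [hd.dist_nonneg hbd hop hx hx'])
  have hA := exitParam_pos hbd hop hx (sub_ne_zero.mpr hxy)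
  have ha := frontier_subset_closure
    (add_exitParam_smul_mem_frontier hbd hop hx (sub_ne_zero.mpr hxy))
  refine one_sub_mul_one_add_inv_exitParam_le hbd hconv hξ' hA ha hl.2 hm.2 ?_
    (sub_ne_zero.mpr hne)
  exact mul_sub_add_mul_one_sub_nonneg hσ.le hτ.le hK h1 h2
    (mul_le_exitParam_mul hbd hconv hxξ hA.le hτ.le ha
      (frontier_subset_closure (add_exitParam_smul_mem_frontier hbd hop hy hyξ)))

lemma dist_add_smul_sub_le (hd : IsHilbertMetric Ω d)
    (hbd : Bornology.IsBounded Ω) (hop : IsOpen Ω) (hconv : Convex ℝ Ω) (hx : x ∈ Ω)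
    (hy : y ∈ Ω) (hξ : ξ ∈ frontier Ω) (hl : l ∈ Ioo (0 : ℝ) 1) (hm : m ∈ Ioo (0 : ℝ) 1)
    (heq : d x (x + l • (ξ - x)) = d y (y + m • (ξ - y))) :
    d (x + l • (ξ - x)) (y + m • (ξ - y)) ≤ d x y := by
  have hξ' := frontier_subset_closure hξ
  have hx' := hconv.add_smul_sub_mem_of_mem_closure hop hx hξ' ⟨hl.1.le, hl.2⟩
  have hy' := hconv.add_smul_sub_mem_of_mem_closure hop hy hξ' ⟨hm.1.le, hm.2⟩
  rcases eq_or_ne x y with rfl | hxy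
  · obtain rfl := hd.eq_of_dist_add_smul_sub_eq hbd hop hconv hx hξ hl hm heq
    rw [hd.dist_self _ hx', hd.dist_self _ hx]
  rcases eq_or_ne (x + l • (ξ - x)) (y + m • (ξ - y)) with hx'y' | hx'y'
  · rw [hx'y', hd.dist_self _ hy']
    exact hd.dist_nonneg hbd hop hx hy
  have hα := hd.one_sub_mul_one_add_inv_exitParam_le_of_dist_eq hbd hop hconv hx hy hξ hl hm
    heq hxy hx'y'
  have hβ := hd.one_sub_mul_one_add_inv_exitParam_le_of_dist_eq hbd hop hconv hy hx hξ hm hl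
    heq.symm hxy.symm hx'y'.symm
  have hα₀ := exitParam_nonneg hbd hx' (sub_ne_zero.mpr hx'y')
  have hβ₀ := exitParam_nonneg hbd hy' (sub_ne_zero.mpr hx'y'.symm)
  have hA := exitParam_pos hbd hop hx (sub_ne_zero.mpr hxy)
  have hB := exitParam_pos hbd hop hy (sub_ne_zero.mpr hxy.symm)
  rw [hd.dist_eq_log_exitParam hbd hop hx' hy' hx'y', hd.dist_eq_log_exitParam hbd hop hx hy hxy]
  refine div_le_div_of_nonneg_right (Real.log_le_log (by positivity) ?_) zero_le_two
  have hl1 : 0 < 1 - l := sub_pos.mpr hl.2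
  have hm1 : 0 < 1 - m := sub_pos.mpr hm.2
  refine le_of_mul_le_mul_left ?_ (mul_pos hl1 hm1)
  convert mul_le_mul hα hβ (by positivity) (by positivity) using 1 <;> ring

end IsHilbertMetric

theorem prop_5_1_1_general {E : Type*} [NormedAddCommGroup E] [NormedSpace ℝ E]
    (Ω : Set E) (hbd : Bornology.IsBounded Ω)
    (hop : IsOpen Ω) (hconv : Convex ℝ Ω)
    (d : E → E → ℝ)
    (hd0 : ∀ x ∈ Ω, d x x = 0)
    (hd : ∀ x ∈ Ω, ∀ y ∈ Ω, x ≠ y → ∀ a ∈ frontier Ω, ∀ b ∈ frontier Ω,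
      (∃ s > (0 : ℝ), a = x + s • (x - y)) → (∃ t > (0 : ℝ), b = y + t • (y - x)) →
      d x y = (1 / 2) * Real.log ((‖y - a‖ * ‖x - b‖) / (‖x - a‖ * ‖y - b‖)))
    (c₁ c₂ : ℝ → E)
    (hc₁Ω : ∀ t ∈ Set.Ici (0 : ℝ), c₁ t ∈ Ω)
    (hc₂Ω : ∀ t ∈ Set.Ici (0 : ℝ), c₂ t ∈ Ω)
    (hline₁ : ∃ p q : E, ∀ t ∈ Set.Ici (0 : ℝ), ∃ r : ℝ, c₁ t = p + r • q)
    (hline₂ : ∃ p q : E, ∀ t ∈ Set.Ici (0 : ℝ), ∃ r : ℝ, c₂ t = p + r • q)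
    (hgeo₁ : ∀ s ∈ Set.Ici (0 : ℝ), ∀ t ∈ Set.Ici (0 : ℝ), d (c₁ s) (c₁ t) = |s - t|)
    (hgeo₂ : ∀ s ∈ Set.Ici (0 : ℝ), ∀ t ∈ Set.Ici (0 : ℝ), d (c₂ s) (c₂ t) = |s - t|)
    (ξ : E) (hξ : ξ ∈ frontier Ω)
    (hlim₁ : Tendsto c₁ atTop (nhds ξ)) (hlim₂ : Tendsto c₂ atTop (nhds ξ)) :
    ∀ s t : ℝ, 0 ≤ s → s ≤ t → d (c₁ t) (c₂ t) ≤ d (c₁ s) (c₂ s) := by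
  intro s t hs hst
  rcases hst.eq_or_lt with rfl | hlt
  · exact le_rfl
  have hH : IsHilbertMetric Ω d := ⟨hd0, hd⟩
  have ht : t ∈ Ici (0 : ℝ) := hs.trans hst
  obtain ⟨l, hl, h₁⟩ :=
    hH.exists_eq_add_smul_sub_of_geodesic hbd hop hconv hc₁Ω hline₁ hgeo₁ hξ hlim₁ hs hlt
  obtain ⟨m, hm, h₂⟩ :=
    hH.exists_eq_add_smul_sub_of_geodesic hbd hop hconv hc₂Ω hline₂ hgeo₂ hξ hlim₂ hs hlt
  rw [h₁, h₂]
  refine hH.dist_add_smul_sub_le hbd hop hconv (hc₁Ω s hs) (hc₂Ω s hs) hξ hl hm ?_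
  rw [← h₁, ← h₂, hgeo₁ s hs t ht, hgeo₂ s hs t ht]

/-- Proposition 5.1(1): the Hilbert distance between two unit-speed straight geodesics
`c₁, c₂ : [0, ∞) → Ω` converging to the same boundary point `ξ` is non-increasing. -/
theorem prop_5_1_1 {E : Type*} [NormedAddCommGroup E] [NormedSpace ℝ E]
    [FiniteDimensional ℝ E]
    (Ω : Set E) (hne : Ω.Nonempty) (hbd : Bornology.IsBounded Ω)
    (hop : IsOpen Ω) (hconv : Convex ℝ Ω)
    (d : E → E → ℝ)
    (hd0 : ∀ x ∈ Ω, d x x = 0)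
    (hd : ∀ x ∈ Ω, ∀ y ∈ Ω, x ≠ y → ∀ a ∈ frontier Ω, ∀ b ∈ frontier Ω,
      (∃ s > (0 : ℝ), a = x + s • (x - y)) → (∃ t > (0 : ℝ), b = y + t • (y - x)) →
      d x y = (1 / 2) * Real.log ((‖y - a‖ * ‖x - b‖) / (‖x - a‖ * ‖y - b‖)))
    (c₁ c₂ : ℝ → E)
    (hc₁Ω : ∀ t ∈ Set.Ici (0 : ℝ), c₁ t ∈ Ω)
    (hc₂Ω : ∀ t ∈ Set.Ici (0 : ℝ), c₂ t ∈ Ω)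
    (hline₁ : ∃ p q : E, ∀ t ∈ Set.Ici (0 : ℝ), ∃ r : ℝ, c₁ t = p + r • q)
    (hline₂ : ∃ p q : E, ∀ t ∈ Set.Ici (0 : ℝ), ∃ r : ℝ, c₂ t = p + r • q)
    (hgeo₁ : ∀ s ∈ Set.Ici (0 : ℝ), ∀ t ∈ Set.Ici (0 : ℝ), d (c₁ s) (c₁ t) = |s - t|)
    (hgeo₂ : ∀ s ∈ Set.Ici (0 : ℝ), ∀ t ∈ Set.Ici (0 : ℝ), d (c₂ s) (c₂ t) = |s - t|)
    (ξ : E) (hξ : ξ ∈ frontier Ω)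
    (hlim₁ : Tendsto c₁ atTop (nhds ξ)) (hlim₂ : Tendsto c₂ atTop (nhds ξ)) :
    ∀ s t : ℝ, 0 ≤ s → s ≤ t → d (c₁ t) (c₂ t) ≤ d (c₁ s) (c₂ s) :=
  prop_5_1_1_general Ω hbd hop hconv d hd0 hd c₁ c₂ hc₁Ω hc₂Ω hline₁ hline₂ hgeo₁ hgeo₂ ξ hξ hlim₁
    hlim₂
end

section
/- Let E be a finite-dimensional real normed vector space, Ω ⊆ E a nonempty bounded open convex set, and d_Ω its Hilbert metric. Let c₁, c₂ : ℝ → Ω be straight geodesics of speed 1 such that, as t → +∞, both c₁(t) and c₂(t) converge to a common boundary point ξ in the frontier of Ω, while as t → −∞, c₁(t) → a₁ and c₂(t) → a₂ with a₁ ≠ a₂, and c₁(0) ≠ c₂(0). Assume ξ is a smooth boundary point, i.e. there is a unique affine hyperplane H of E with ξ ∈ H and H ∩ Ω = ∅. Assume moreover that there exists a point p ∈ H lying both on the affine line through a₁ and a₂ and on the affine line through c₁(0) and c₂(0). Then d_Ω(c₁(t), c₂(t)) → 0 as t → +∞. (The strong stable manifold statement: Proposition 5.1(2) / the δ = 0 case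 of Lemma 5.3, expressed in an affine chart.) -/
/-!
Each geodesic `cᵢ` runs along a chord of `Ω` from `ξ` to `aᵢ`, and the cross-ratio formula
forces `cᵢ t = ξ + sigmoid (kᵢ - 2 t) • (aᵢ - ξ)`. Write the supporting hyperplane at `ξ` as
`H = {φ = cst}` with `Ω` above it. The lines `a₁a₂` and `c₁(0)c₂(0)` meet on `H` exactly when
`φ (a₁ - ξ) * exp k₁ = φ (a₂ - ξ) * exp k₂`, i.e. when the heights of `c₁ t` and `c₂ t` above
`H` are asymptotically equal; both points also approach `ξ` non-tangentially, so the line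
through them becomes parallel to `H`. As `ξ` is smooth, `∂Ω` is tangent to `H` at `ξ`: boundary
points near `ξ` have height `o(‖z - ξ‖)`. Hence the two boundary points on that line are far
away compared with `‖c₁ t - c₂ t‖`, and the cross ratio defining `d (c₁ t) (c₂ t)` tends to `1`.
-/

open Filter

def IsAffineHyperplane {E : Type*} [NormedAddCommGroup E] [NormedSpace ℝ E]
    (H : Set E) : Prop :=
  ∃ (φ : E →ₗ[ℝ] ℝ) (cst : ℝ), φ ≠ 0 ∧ H = {y | φ y = cst}

open Set Real Asymptotics Topology

section

theorem eq_add_mul_or_eq_sub_mul_of_abs_sub_eq {F : ℝ → ℝ} {k : ℝ}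
    (hF : ∀ s t, |F s - F t| = k * |s - t|) :
    (∀ t, F t = F 0 + k * t) ∨ (∀ t, F t = F 0 - k * t) := by
  have hk : 0 ≤ k := by simpa using (abs_nonneg _).trans_eq (hF 1 0)
  have habs : ∀ s t, |F s - F t| = |k * (s - t)| := fun s t => by
    rw [hF, abs_mul, abs_of_nonneg hk]
  have hF0 : ∀ t, F t - F 0 = k * t ∨ F t - F 0 = -(k * t) := fun t =>
    abs_eq_abs.mp (by rw [habs, sub_zero])
  -- a change of sign at `t` would force `|k (1 + t)| = |k (1 - t)|`, i.e. `k t = 0`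
  have hkt : ∀ t, |F 1 - F t| = |k * (1 + t)| → k * t = 0 := fun t h => by
    rcases abs_eq_abs.mp ((habs 1 t).symm.trans h) with h' | h'
    · linear_combination (-1 / 2 : ℝ) * h'
    · linear_combination (t / 2) * h'
  rcases hF0 1 with h1 | h1
  · refine Or.inl fun t => ?_
    rcases hF0 t with ht | ht
    · linarith
    · linarith [hkt t (by rw [show F 1 - F t = k * (1 + t) by linarith])]
  · refine Or.inr fun t => ?_
    rcases hF0 t with ht | ht
    · linarith [hkt t (by rw [show F 1 - F t = -(k * (1 + t)) by linarith, abs_neg])]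
    · linarith

theorem one_sub_sigmoid (x : ℝ) : 1 - sigmoid x = sigmoid x * exp (-x) := by
  rw [sigmoid_mul_rexp_neg, sigmoid_neg]

theorem isEquivalent_sigmoid_exp : sigmoid ~[atBot] exp := by
  refine isEquivalent_of_tendsto_one ?_
  have h : sigmoid / exp = fun x => (exp x + 1)⁻¹ := funext fun x => by
    simp only [Pi.div_apply, sigmoid_def, exp_neg]
    field_simp
  rw [h]
  simpa using (tendsto_exp_atBot.add_const 1).inv₀ (by norm_num)

theorem tendsto_sub_two_mul_atTop_atBot (k : ℝ) :
    Tendsto (fun t : ℝ => k - 2 * t) atTop atBot :=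
  tendsto_atBot.2 fun y => (eventually_ge_atTop ((k - y) / 2)).mono fun t ht => by linarith

variable {E : Type*} [NormedAddCommGroup E] [NormedSpace ℝ E] {Ω : Set E} {d : E → E → ℝ}

theorem IsAffineHyperplane.exists_lt_of_inter_eq_empty {H : Set E} (hH : IsAffineHyperplane H)
    (hconv : Convex ℝ Ω) (hHΩ : H ∩ Ω = ∅) :
    ∃ (φ : E →ₗ[ℝ] ℝ) (cst : ℝ), (∀ z ∈ Ω, cst < φ z) ∧ H = {y | φ y = cst} := by
  obtain ⟨φ, cst, -, rfl⟩ := hH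
  have hne : ∀ z ∈ Ω, φ z ≠ cst := fun z hz h => hHΩ.subset ⟨h, hz⟩
  by_cases hgt : ∀ z ∈ Ω, cst < φ z
  · exact ⟨φ, cst, hgt, rfl⟩
  simp only [not_forall, not_lt] at hgt
  obtain ⟨z₁, hz₁, h₁⟩ := hgt
  refine ⟨-φ, -cst, fun z hz => ?_, by ext; simp [neg_inj]⟩
  by_contra! h₂
  obtain ⟨z, hz, hφz⟩ : cst ∈ φ '' Ω := (convex_iff_ordConnected.mp (hconv.linear_image φ)).out
    (mem_image_of_mem φ hz₁) (mem_image_of_mem φ hz) ⟨h₁, by simpa using h₂⟩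
  exact hne z hz hφz

theorem Convex.exists_mem_iff_mem_Ioo (hconv : Convex ℝ Ω) (hop : IsOpen Ω)
    (hbd : Bornology.IsBounded Ω) {x v : E} (hx : x ∈ Ω) (hv : v ≠ 0) :
    ∃ m M : ℝ, (∀ e : ℝ, x + e • v ∈ Ω ↔ e ∈ Ioo m M) ∧
      x + m • v ∈ frontier Ω ∧ x + M • v ∈ frontier Ω := by
  set f : ℝ → E := fun e => x + e • v
  have hf : Continuous f := by fun_prop
  set S := f ⁻¹' Ω
  have hS0 : (0 : ℝ) ∈ S := by simpa [S, f] using hx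
  have hSconv : Convex ℝ S := by
    have : S = AffineMap.lineMap x (x + v) ⁻¹' Ω := by
      ext e; simp [S, f, AffineMap.lineMap_apply_module', add_comm]
    exact this ▸ hconv.affine_preimage _
  have hSbd : Bornology.IsBounded S := by
    refine AntilipschitzWith.isBounded_preimage
      (AntilipschitzWith.of_le_mul_dist (K := ‖v‖₊⁻¹) fun e₁ e₂ => le_of_eq ?_) hbd
    rw [dist_eq_norm, dist_eq_norm, show f e₁ - f e₂ = (e₁ - e₂) • v by simp [f]; module,
      norm_smul, NNReal.coe_inv, coe_nnnorm]
    field_simp [norm_ne_zero_iff.mpr hv]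
  have hSsub : S ⊆ Ioo (sInf S) (sSup S) := fun e he => by
    obtain ⟨ε, hε, hball⟩ := Metric.isOpen_iff.mp (hop.preimage hf) e he
    have h₁ : e - ε / 2 ∈ S := hball (by simp [abs_of_pos hε]; linarith)
    have h₂ : e + ε / 2 ∈ S := hball (by simp [abs_of_pos hε]; linarith)
    exact ⟨(csInf_le hSbd.bddBelow h₁).trans_lt (by linarith),
      (le_csSup hSbd.bddAbove h₂).trans_lt' (by linarith)⟩
  have hIoo : S = Ioo (sInf S) (sSup S) :=
    hSsub.antisymm (IsConnected.Ioo_csInf_csSup_subset ⟨⟨0, hS0⟩, hSconv.isPreconnected⟩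
      hSbd.bddBelow hSbd.bddAbove)
  have hfr : ∀ e ∈ closure S, e ∉ S → f e ∈ frontier Ω := fun e he heS => by
    rw [hop.frontier_eq]
    exact ⟨map_mem_closure hf he fun _ h => h, heS⟩
  refine ⟨sInf S, sSup S, fun e => by rw [← hIoo]; rfl, hfr _ (csInf_mem_closure ⟨0, hS0⟩
    hSbd.bddBelow) fun h => (hSsub h).1.false, hfr _ (csSup_mem_closure ⟨0, hS0⟩
    hSbd.bddAbove) fun h => (hSsub h).2.false⟩

def IsChord (Ω : Set E) (a b : E) : Prop :=
  ∀ θ : ℝ, a + θ • (b - a) ∈ Ω ↔ θ ∈ Ioo 0 1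

theorem IsChord.ne {a b : E} (h : IsChord Ω a b) : a ≠ b := by
  rintro rfl
  have h₀ := h 0
  have h₁ := h (1 / 2)
  simp only [sub_self, smul_zero, add_zero] at h₀ h₁
  exact (h₀.mp (h₁.mpr ⟨by norm_num, by norm_num⟩)).1.false

theorem IsChord.sigmoid_mem {a b : E} (h : IsChord Ω a b) (x : ℝ) :
    a + sigmoid x • (b - a) ∈ Ω :=
  (h _).mpr ⟨sigmoid_pos x, sigmoid_lt_one x⟩

theorem IsChord.symm {a b : E} (h : IsChord Ω a b) : IsChord Ω b a := fun θ => by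
  rw [show b + θ • (a - b) = a + (1 - θ) • (b - a) by module, h]
  constructor <;> rintro ⟨h₀, h₁⟩ <;> constructor <;> linarith

theorem Convex.exists_isChord (hconv : Convex ℝ Ω) (hop : IsOpen Ω) (hbd : Bornology.IsBounded Ω)
    {x v : E} (hx : x ∈ Ω) (hv : v ≠ 0) :
    ∃ a ∈ frontier Ω, ∃ b ∈ frontier Ω, IsChord Ω a b ∧
      ∀ e : ℝ, ∃ θ : ℝ, x + e • v = a + θ • (b - a) := by
  obtain ⟨m, M, hmem, hm, hM⟩ := hconv.exists_mem_iff_mem_Ioo hop hbd hx hv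
  have hmM : 0 < M - m := by
    obtain ⟨h₁, h₂⟩ := (hmem 0).mp (by simpa using hx)
    linarith
  refine ⟨_, hm, _, hM, fun θ => ?_, fun e => ⟨(e - m) / (M - m), ?_⟩⟩
  · rw [show x + m • v + θ • (x + M • v - (x + m • v)) = x + (m + θ * (M - m)) • v by module, hmem]
    constructor <;> rintro ⟨h₁, h₂⟩ <;> constructor <;> nlinarith
  · match_scalars
    · ring
    · field_simp; ring

theorem IsChord.linearIndependent {ξ a₁ a₂ : E} (h₁ : IsChord Ω ξ a₁) (h₂ : IsChord Ω ξ a₂)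
    (ha : a₁ ≠ a₂) : LinearIndependent ℝ ![a₁ - ξ, a₂ - ξ] := by
  rw [LinearIndependent.pair_iff' (sub_ne_zero.mpr h₁.ne.symm)]
  intro μ hμ
  have hiff : ∀ θ : ℝ, θ ∈ Ioo 0 1 ↔ θ * μ ∈ Ioo 0 1 := fun θ => by
    rw [← h₂ θ, ← h₁, ← hμ, smul_smul]
  have hμ₀ : 0 < μ := by
    have := ((hiff (1 / 2)).mp ⟨by norm_num, by norm_num⟩).1
    linarith
  have hμ₁ : 1 ≤ μ := by
    by_contra! h
    exact (((hiff 1).mpr ⟨by linarith, by linarith⟩).2).false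
  have hμ₁' : μ ≤ 1 := by
    by_contra! h
    have := (hiff μ⁻¹).not.mpr (by rw [inv_mul_cancel₀ hμ₀.ne']; exact fun h => h.2.false)
    exact this ⟨inv_pos.mpr hμ₀, inv_lt_one_of_one_lt₀ h⟩
  apply ha
  rw [← sub_left_inj (a := ξ), ← hμ, le_antisymm hμ₁' hμ₁, one_smul]

theorem IsChord.height_pos {φ : E →ₗ[ℝ] ℝ} {cst : ℝ} {ξ a : E} (h : IsChord Ω ξ a)
    (hφΩ : ∀ z ∈ Ω, cst < φ z) (hφξ : φ ξ = cst) : 0 < φ (a - ξ) := by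
  have := hφΩ _ ((h (1 / 2)).mpr ⟨by norm_num, by norm_num⟩)
  simp only [map_add, map_smul, smul_eq_mul, hφξ] at this
  linarith

structure IsHilbertDist (Ω : Set E) (d : E → E → ℝ) : Prop where
  dist_self : ∀ x ∈ Ω, d x x = 0
  dist_eq : ∀ x ∈ Ω, ∀ y ∈ Ω, x ≠ y → ∀ a ∈ frontier Ω, ∀ b ∈ frontier Ω,
    (∃ s > (0 : ℝ), a = x + s • (x - y)) → (∃ t > (0 : ℝ), b = y + t • (y - x)) →
    d x y = (1 / 2) * Real.log ((‖y - a‖ * ‖x - b‖) / (‖x - a‖ * ‖y - b‖))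

theorem IsHilbertDist.dist_eq_log (hd : IsHilbertDist Ω d) {x y : E} (hx : x ∈ Ω) (hy : y ∈ Ω)
    (hxy : x ≠ y) {s t : ℝ} (hs : 0 < s) (ht : 0 < t) (ha : x + s • (x - y) ∈ frontier Ω)
    (hb : y + t • (y - x) ∈ frontier Ω) :
    d x y = log ((1 + s⁻¹) * (1 + t⁻¹)) / 2 := by
  rw [hd.dist_eq x hx y hy hxy _ ha _ hb ⟨s, hs, rfl⟩ ⟨t, ht, rfl⟩,
    show y - (x + s • (x - y)) = -((1 + s) • (x - y)) by module,
    show x - (y + t • (y - x)) = (1 + t) • (x - y) by module,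
    show x - (x + s • (x - y)) = -(s • (x - y)) by module,
    show y - (y + t • (y - x)) = t • (x - y) by module]
  have hn : ‖x - y‖ ≠ 0 := norm_ne_zero_iff.mpr (sub_ne_zero.mpr hxy)
  simp only [norm_neg, norm_smul, Real.norm_eq_abs, abs_of_pos hs, abs_of_pos ht,
    abs_of_pos (by linarith : 0 < 1 + s), abs_of_pos (by linarith : 0 < 1 + t)]
  field_simp
  ring_nf

theorem add_sigmoid_neg_smul (a b : E) (x : ℝ) :
    b + sigmoid (-x) • (a - b) = a + sigmoid x • (b - a) := by
  rw [sigmoid_neg]; module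

theorem IsHilbertDist.two_mul_dist_sigmoid (hd : IsHilbertDist Ω d) {a b : E}
    (ha : a ∈ frontier Ω) (hb : b ∈ frontier Ω) (hab : IsChord Ω a b) (x y : ℝ) :
    2 * d (a + sigmoid x • (b - a)) (a + sigmoid y • (b - a)) = |x - y| := by
  wlog hxy : x < y generalizing a b x y with H
  · rcases (not_lt.mp hxy).eq_or_lt with rfl | hyx
    · simp [hd.dist_self _ (hab.sigmoid_mem y)]
    · have := H hb ha hab.symm (-x) (-y) (neg_lt_neg hyx)
      rwa [neg_sub_neg, abs_sub_comm, add_sigmoid_neg_smul, add_sigmoid_neg_smul] at this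
  have hσ : sigmoid x < sigmoid y := sigmoid_lt hxy
  have hσ₀ := sigmoid_pos x
  have hσ₁ := sigmoid_lt_one y
  have hsa : a + sigmoid x • (b - a) + (sigmoid x / (sigmoid y - sigmoid x)) •
      (a + sigmoid x • (b - a) - (a + sigmoid y • (b - a))) = a := by
    match_scalars <;> field_simp [(sub_pos.mpr hσ).ne'] <;> ring
  have htb : a + sigmoid y • (b - a) + ((1 - sigmoid y) / (sigmoid y - sigmoid x)) •
      (a + sigmoid y • (b - a) - (a + sigmoid x • (b - a))) = b := by
    match_scalars <;> field_simp [(sub_pos.mpr hσ).ne'] <;> ring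
  have hne : a + sigmoid x • (b - a) ≠ a + sigmoid y • (b - a) := fun h =>
    hσ.ne (smul_left_injective ℝ (sub_ne_zero.mpr hab.ne.symm) (add_left_cancel h))
  -- the cross ratio of the four points is `exp (y - x)`
  have hcross : (1 + (sigmoid x / (sigmoid y - sigmoid x))⁻¹) *
      (1 + ((1 - sigmoid y) / (sigmoid y - sigmoid x))⁻¹) = exp (y - x) := by
    rw [show y - x = -x - -y by ring, exp_sub]
    field_simp [(sub_pos.mpr hσ).ne', (sub_pos.mpr hσ₁).ne']
    linear_combination (sigmoid y * exp (-y)) * one_sub_sigmoid x -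
      (sigmoid x * exp (-x)) * one_sub_sigmoid y
  rw [hd.dist_eq_log (hab.sigmoid_mem x) (hab.sigmoid_mem y) hne
    (div_pos hσ₀ (sub_pos.mpr hσ)) (div_pos (sub_pos.mpr hσ₁) (sub_pos.mpr hσ))
    (by rwa [hsa]) (by rwa [htb]), hcross, log_exp, abs_of_neg (sub_neg.mpr hxy)]
  ring

theorem IsHilbertDist.exists_isChord_sigmoid (hd : IsHilbertDist Ω d) (hconv : Convex ℝ Ω)
    (hop : IsOpen Ω) (hbd : Bornology.IsBounded Ω) {c : ℝ → E} (hcΩ : ∀ t, c t ∈ Ω)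
    (hline : ∃ p q : E, ∀ t, ∃ r : ℝ, c t = p + r • q) (hgeo : ∀ s t, d (c s) (c t) = |s - t|) :
    ∃ a b : E, IsChord Ω a b ∧ ∃ k : ℝ, ∀ t, c t = a + sigmoid (k - 2 * t) • (b - a) := by
  obtain ⟨p, q, hpq⟩ := hline
  choose r hr using hpq
  have hq : q ≠ 0 := by
    rintro rfl
    have h := hgeo 0 1
    rw [show c 0 = c 1 by simp [hr], hd.dist_self _ (hcΩ 1)] at h
    norm_num at h
  obtain ⟨a, ha, b, hb, hab, hon⟩ := hconv.exists_isChord hop hbd (hcΩ 0) hq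
  have hsig : ∀ t, ∃ L, c t = a + sigmoid L • (b - a) := fun t => by
    obtain ⟨θ, hθ⟩ := hon (r t - r 0)
    have hct : c t = a + θ • (b - a) := by rw [← hθ, hr t, hr 0]; module
    obtain ⟨L, rfl⟩ : θ ∈ range sigmoid := by
      rw [range_sigmoid, ← hab θ, ← hct]
      exact hcΩ t
    exact ⟨L, hct⟩
  choose L hL using hsig
  have hiso : ∀ s t, |L s - L t| = 2 * |s - t| := fun s t => by
    rw [← hd.two_mul_dist_sigmoid ha hb hab, ← hL, ← hL, hgeo]
  rcases eq_add_mul_or_eq_sub_mul_of_abs_sub_eq hiso with h | h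
  · refine ⟨b, a, hab.symm, -L 0, fun t => ?_⟩
    rw [hL, h, ← add_sigmoid_neg_smul, neg_add']
  · exact ⟨a, b, hab, L 0, fun t => by rw [hL, h]⟩

theorem IsHilbertDist.isChord_of_tendsto (hd : IsHilbertDist Ω d) (hconv : Convex ℝ Ω)
    (hop : IsOpen Ω) (hbd : Bornology.IsBounded Ω) {c : ℝ → E} (hcΩ : ∀ t, c t ∈ Ω)
    (hline : ∃ p q : E, ∀ t, ∃ r : ℝ, c t = p + r • q) (hgeo : ∀ s t, d (c s) (c t) = |s - t|)
    {ξ a : E} (hξ : Tendsto c atTop (𝓝 ξ)) (ha : Tendsto c atBot (𝓝 a)) :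
    IsChord Ω ξ a ∧ ∃ k : ℝ, ∀ t, c t = ξ + sigmoid (k - 2 * t) • (a - ξ) := by
  obtain ⟨ξ', a', hch, k, hc⟩ := hd.exists_isChord_sigmoid hconv hop hbd hcΩ hline hgeo
  have hk : Tendsto (fun t : ℝ => k - 2 * t) atTop atBot := tendsto_sub_two_mul_atTop_atBot k
  have hk' : Tendsto (fun t : ℝ => k - 2 * t) atBot atTop :=
    tendsto_atTop.2 fun y => (eventually_le_atBot ((k - y) / 2)).mono fun t ht => by linarith
  have hξ' : Tendsto c atTop (𝓝 ξ') := by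
    simpa [funext hc] using ((tendsto_sigmoid_atBot.comp hk).smul_const (a' - ξ')).const_add ξ'
  have ha' : Tendsto c atBot (𝓝 a') := by
    simpa [funext hc] using ((tendsto_sigmoid_atTop.comp hk').smul_const (a' - ξ')).const_add ξ'
  obtain rfl := tendsto_nhds_unique hξ hξ'
  obtain rfl := tendsto_nhds_unique ha ha'
  exact ⟨hch, k, hc⟩

theorem apply_neg_of_setOf_eq_setOf {f g : E →ₗ[ℝ] ℝ} {u cst : ℝ}
    (hfg : {y | f y = u} = {y | g y = cst}) {ξ x₀ v : E} (hfξ : f ξ = u) (hgξ : g ξ = cst)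
    (hfx₀ : f x₀ < u) (hgx₀ : cst < g x₀) (hv : 0 < g v) : f v < 0 := by
  have hy : ξ + v - (g v / (g x₀ - cst)) • (x₀ - ξ) ∈ {y | g y = cst} := by
    rw [mem_ofPred_eq, map_sub, map_add, map_smul, map_sub, hgξ, smul_eq_mul]
    field_simp [(sub_pos.mpr hgx₀).ne']
    ring
  rw [← hfg, mem_ofPred_eq, map_sub, map_add, map_smul, map_sub, hfξ, smul_eq_mul] at hy
  have : 0 < g v / (g x₀ - cst) * (u - f x₀) :=
    mul_pos (div_pos hv (sub_pos.mpr hgx₀)) (by linarith)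
  linarith

section Height

variable {φ : E →ₗ[ℝ] ℝ} {cst : ℝ} {ξ : E}

theorem exists_pos_add_smul_mem_of_unique_support (hop : IsOpen Ω) (hconv : Convex ℝ Ω)
    {x₀ : E} (hx₀ : x₀ ∈ Ω) (hφΩ : ∀ z ∈ Ω, cst < φ z) (hξ : ξ ∈ closure Ω) (hφξ : φ ξ = cst)
    (huniq : ∀ H : Set E, IsAffineHyperplane H → ξ ∈ H → H ∩ Ω = ∅ → H = {y | φ y = cst})
    {v : E} (hv : 0 < φ v) : ∃ t : ℝ, 0 < t ∧ ξ + t • v ∈ Ω := by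
  -- otherwise a hyperplane `{f = u}` separating `Ω` from the ray `ξ + [0, ∞) • v` supports `Ω`
  -- at `ξ`, so it is `{φ = cst}`; then `f` and `φ` have opposite signs at `v`, yet `f v ≥ 0`
  by_contra! hray
  have hR : ∀ t : ℝ, AffineMap.lineMap ξ (ξ + v) t = ξ + t • v := fun t => by
    rw [AffineMap.lineMap_apply_module', add_sub_cancel_left, add_comm]
  have hdisj : Disjoint Ω (AffineMap.lineMap ξ (ξ + v) '' Ici (0 : ℝ)) := by
    rw [disjoint_right]
    rintro _ ⟨t, ht, rfl⟩ hmem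
    rw [hR] at hmem
    rcases (mem_Ici.mp ht).eq_or_lt with rfl | ht
    · exact (hφΩ ξ (by simpa using hmem)).ne' hφξ
    · exact hray t ht hmem
  obtain ⟨f, u, hfΩ, hfR⟩ :=
    geometric_hahn_banach_open hconv hop ((convex_Ici (0 : ℝ)).affine_image _) hdisj
  have hfξ : f ξ = u := le_antisymm
    (closure_minimal (fun y hy => (hfΩ y hy).le) (isClosed_le f.continuous continuous_const) hξ)
    (hfR ξ ⟨0, mem_Ici.mpr le_rfl, by simp⟩)
  have hfv : 0 ≤ f v := by
    have := hfR _ ⟨1, mem_Ici.mpr zero_le_one, rfl⟩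
    rw [hR, one_smul, map_add, hfξ] at this
    linarith
  have hf : (f : E →ₗ[ℝ] ℝ) ≠ 0 := fun h => by
    have := hfΩ x₀ hx₀
    rw [← hfξ, ← f.coe_coe, h] at this
    exact this.false
  have hH : {y | (f : E →ₗ[ℝ] ℝ) y = u} = {y | φ y = cst} := huniq _ ⟨f, u, hf, rfl⟩ hfξ
    (eq_empty_iff_forall_notMem.mpr fun y hy => (hfΩ y hy.2).ne hy.1)
  exact (apply_neg_of_setOf_eq_setOf hH hfξ hφξ (hfΩ x₀ hx₀) (hφΩ x₀ hx₀) hv).not_ge hfv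

theorem eventually_add_smul_mem (hop : IsOpen Ω) (hconv : Convex ℝ Ω) (hξ : ξ ∈ closure Ω)
    {t : ℝ} (ht : 0 < t) {v : E} (hv : ξ + t • v ∈ Ω) :
    ∀ᶠ w in 𝓝 v, ∀ ρ ∈ Ioo 0 t, ξ + ρ • w ∈ Ω := by
  have hcont : Continuous fun w : E => ξ + t • w := by fun_prop
  filter_upwards [hcont.continuousAt.preimage_mem_nhds (hop.mem_nhds hv)] with w hw ρ hρ
  have := hconv.combo_interior_closure_mem_interior (hop.interior_eq.symm ▸ hw) hξ
    (div_pos hρ.1 ht) (sub_nonneg.mpr ((div_le_one ht).mpr hρ.2.le)) (add_sub_cancel _ _)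
  rw [hop.interior_eq] at this
  convert this using 1
  match_scalars
  · field_simp; ring
  · field_simp

theorem eventually_height_le_mul_norm_sub [FiniteDimensional ℝ E] (hop : IsOpen Ω)
    (hconv : Convex ℝ Ω) {x₀ : E} (hx₀ : x₀ ∈ Ω) (hφΩ : ∀ z ∈ Ω, cst < φ z)
    (hξ : ξ ∈ closure Ω) (hφξ : φ ξ = cst)
    (huniq : ∀ H : Set E, IsAffineHyperplane H → ξ ∈ H → H ∩ Ω = ∅ → H = {y | φ y = cst})
    {c : ℝ} (hc : 0 < c) : ∀ᶠ z in 𝓝[frontier Ω] ξ, φ z - cst ≤ c * ‖z - ξ‖ := by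
  by_contra hbad
  set l := 𝓝[frontier Ω] ξ ⊓ 𝓟 {z | c * ‖z - ξ‖ < φ z - cst}
  have : l.NeBot := frequently_iff_neBot.mp ((not_eventually.mp hbad).mono fun z => not_le.mp)
  have hl : ∀ᶠ z in l, c * ‖z - ξ‖ < φ z - cst := mem_inf_of_right (mem_principal_self _)
  have hlξ : ∀ᶠ z in l, z ≠ ξ := hl.mono fun z hz h => by simp [h, hφξ] at hz
  -- the directions from `ξ` to the points of `l` cluster at some `w` with `φ w ≥ c`
  set u : E → E := fun z => ‖z - ξ‖⁻¹ • (z - ξ)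
  set K := Metric.sphere (0 : E) 1 ∩ {w | c ≤ φ w}
  have hK : IsCompact K := (isCompact_sphere 0 1).inter_right
    (isClosed_le continuous_const φ.continuous_of_finiteDimensional)
  have hu : map u l ≤ 𝓟 K := by
    rw [le_principal_iff, mem_map]
    filter_upwards [hl, hlξ] with z hz hzξ
    have hn : 0 < ‖z - ξ‖ := norm_pos_iff.mpr (sub_ne_zero.mpr hzξ)
    refine ⟨by simp [u, norm_smul, hn.ne'], ?_⟩
    simp only [u, mem_ofPred_eq, map_smul, map_sub, hφξ, smul_eq_mul]
    rw [le_inv_mul_iff₀ hn]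
    linarith
  obtain ⟨w, ⟨-, hw⟩, hclus⟩ := hK.exists_mapClusterPt hu
  obtain ⟨t, ht, hwt⟩ :=
    exists_pos_add_smul_mem_of_unique_support hop hconv hx₀ hφΩ hξ hφξ huniq (hc.trans_le hw)
  have hnear : ∀ᶠ z in l, z ∈ frontier Ω ∧ ‖z - ξ‖ < t ∧ z ≠ ξ := by
    have h₁ : ∀ᶠ z in 𝓝[frontier Ω] ξ, z ∈ frontier Ω ∧ ‖z - ξ‖ < t :=
      eventually_mem_nhdsWithin.and (nhdsWithin_le_nhds
        (Eventually.mono (Metric.ball_mem_nhds ξ ht) fun z hz => mem_ball_iff_norm.mp hz))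
    filter_upwards [h₁.filter_mono inf_le_left, hlξ] with z hz hzξ using ⟨hz.1, hz.2, hzξ⟩
  obtain ⟨z, hzΩ, hzfr, hzt, hzξ⟩ :=
    ((hclus.frequently (eventually_add_smul_mem hop hconv hξ ht hwt)).and_eventually hnear).exists
  have hn : 0 < ‖z - ξ‖ := norm_pos_iff.mpr (sub_ne_zero.mpr hzξ)
  have hz : ξ + ‖z - ξ‖ • u z = z := by
    rw [smul_inv_smul₀ hn.ne', add_sub_cancel]
  rw [hop.frontier_eq] at hzfr
  exact hzfr.2 (hz ▸ hzΩ _ ⟨hn, hzt⟩)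

theorem not_eventually_height_ge_and_norm_le
    (hflat : ∀ c > 0, ∀ᶠ z in 𝓝[frontier Ω] ξ, φ z - cst ≤ c * ‖z - ξ‖) {ι : Type*}
    {l : Filter ι} [l.NeBot] {a : ι → E} {ρ : ι → ℝ} (ha : ∀ i, a i ∈ frontier Ω)
    (hρ : ∀ i, 0 < ρ i) (hlim : Tendsto ρ l (𝓝 0)) {K : ℝ} (hK : 0 < K) :
    ¬ ∀ᶠ i in l, ρ i ≤ 2 * (φ (a i) - cst) ∧ ‖a i - ξ‖ ≤ K * ρ i := by
  intro hev
  have hfar : Tendsto a l (𝓝[frontier Ω] ξ) := by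
    refine tendsto_nhdsWithin_iff.mpr ⟨tendsto_iff_norm_sub_tendsto_zero.mpr ?_,
      Eventually.of_forall ha⟩
    refine squeeze_zero' (Eventually.of_forall fun _ => norm_nonneg _) (hev.mono fun _ h => h.2) ?_
    simpa using hlim.const_mul K
  obtain ⟨i, ⟨hlow, hnorm⟩, hup⟩ :=
    (hev.and (hfar.eventually (hflat (1 / (4 * K)) (by positivity)))).exists
  have := hρ i
  have : 1 / (4 * K) * ‖a i - ξ‖ ≤ ρ i / 4 := by
    rw [div_mul_eq_mul_div, one_mul, div_le_div_iff₀ (by positivity) (by norm_num)]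
    nlinarith
  linarith

theorem tendsto_atTop_of_height_isEquivalent {ι : Type*} {l : Filter ι}
    (hflat : ∀ c > 0, ∀ᶠ z in 𝓝[frontier Ω] ξ, φ z - cst ≤ c * ‖z - ξ‖)
    {x y : ι → E} {s : ι → ℝ} (hs : ∀ i, 0 ≤ s i) (hfr : ∀ i, x i + s i • (x i - y i) ∈ frontier Ω)
    (hpos : ∀ i, 0 < φ (x i) - cst) (hlim : Tendsto (fun i => φ (x i) - cst) l (𝓝 0))
    (hx : (fun i => x i - ξ) =O[l] fun i => φ (x i) - cst)
    (hy : (fun i => y i - ξ) =O[l] fun i => φ (y i) - cst)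
    (hxy : (fun i => φ (y i) - cst) ~[l] fun i => φ (x i) - cst) :
    Tendsto s l atTop := by
  refine tendsto_atTop.mpr fun M => ?_
  by_contra hM
  set B := |M| + 1
  have hB : 0 < B := by positivity
  set l' := l ⊓ 𝓟 {i | s i < B}
  have : l'.NeBot := frequently_iff_neBot.mp <| (not_eventually.mp hM).mono fun i hi =>
    (not_le.mp hi).trans_le ((le_abs_self M).trans (lt_add_one _).le)
  obtain ⟨K₂, hK₂, hxy'⟩ := ((hx.sub (hy.trans hxy.isBigO)).congr_left
    fun i => sub_sub_sub_cancel_right (x i) (y i) ξ).exists_pos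
  obtain ⟨K₁, hK₁, hx⟩ := hx.exists_pos
  set K := K₁ + B * K₂
  -- where `s < B`, the boundary point `x + s • (x - y)` is at least half as high as `x`, yet
  -- within `K` times that height of `ξ`
  have hev : ∀ᶠ i in l', φ (x i) - cst ≤ 2 * (φ (x i + s i • (x i - y i)) - cst) ∧
      ‖x i + s i • (x i - y i) - ξ‖ ≤ K * (φ (x i) - cst) := by
    filter_upwards [(hxy.isLittleO.def (by positivity : 0 < 1 / (2 * B))).filter_mono inf_le_left,
      hx.bound.filter_mono inf_le_left, hxy'.bound.filter_mono inf_le_left,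
      mem_inf_of_right (mem_principal_self _)] with i h₁ h₂ h₃ hsi
    have hρ := hpos i
    simp only [Pi.sub_apply, Real.norm_eq_abs, abs_of_pos hρ] at h₁ h₂ h₃
    have hsi : s i < B := hsi
    constructor
    · have := abs_le.mp h₁
      simp only [map_add, map_smul, map_sub, smul_eq_mul]
      rw [div_mul_eq_mul_div, one_mul, le_div_iff₀ (by positivity)] at this
      nlinarith [hs i]
    · calc ‖x i + s i • (x i - y i) - ξ‖ ≤ ‖x i - ξ‖ + ‖s i • (x i - y i)‖ := by
            rw [add_sub_right_comm]
            exact norm_add_le _ _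
        _ = ‖x i - ξ‖ + s i * ‖x i - y i‖ := by rw [norm_smul, Real.norm_of_nonneg (hs i)]
        _ ≤ K * (φ (x i) - cst) := by nlinarith [hs i, norm_nonneg (x i - y i)]
  exact not_eventually_height_ge_and_norm_le hflat (a := fun i => x i + s i • (x i - y i)) hfr hpos
    (hlim.mono_left inf_le_left) (by positivity) hev

theorem isBigO_sub_height {ι : Type*} {l : Filter ι} {w : E}
    (hφξ : φ ξ = cst) (hw : φ w ≠ 0) {c : ι → E} {σ : ι → ℝ} (hc : ∀ i, c i = ξ + σ i • w) :
    (fun i => c i - ξ) =O[l] fun i => φ (c i) - cst := by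
  refine IsBigO.of_bound (‖w‖ / |φ w|) (Eventually.of_forall fun i => le_of_eq ?_)
  rw [hc, add_sub_cancel_left, map_add, map_smul, hφξ, add_sub_cancel_left, norm_smul,
    smul_eq_mul, norm_mul, Real.norm_eq_abs, Real.norm_eq_abs]
  field_simp [abs_ne_zero.mpr hw]

theorem mul_exp_eq_of_collinear {w₁ w₂ v : E}
    (hind : LinearIndependent ℝ ![w₁, w₂]) {k₁ k₂ r r' : ℝ} (hv₁ : v = (1 - r) • w₁ + r • w₂)
    (hv₂ : v = (1 - r') • sigmoid k₁ • w₁ + r' • sigmoid k₂ • w₂) (hφv : φ v = 0) :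
    φ w₁ * exp k₁ = φ w₂ * exp k₂ := by
  obtain ⟨h₁, h₂⟩ := LinearIndependent.pair_iff.mp hind ((1 - r) - (1 - r') * sigmoid k₁)
    (r - r' * sigmoid k₂) (by rw [← sub_eq_zero.mpr (hv₁.symm.trans hv₂)]; module)
  have hφ : (1 - r) * φ w₁ + r * φ w₂ = 0 := by
    simpa only [hv₁, map_add, map_smul, smul_eq_mul] using hφv
  have hs : ∀ k, sigmoid k * (1 + exp (-k)) = 1 := fun k => by
    rw [sigmoid_def]; exact inv_mul_cancel₀ (by positivity)
  have he : (1 - r) * exp (-k₁) + r * exp (-k₂) = 0 := by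
    linear_combination (1 + exp (-k₁)) * h₁ + (1 + exp (-k₂)) * h₂ + (1 - r') * hs k₁ + r' * hs k₂
  -- `(1 - r, r) ≠ 0` is orthogonal to both `(φ w₁, φ w₂)` and `(exp (-k₁), exp (-k₂))`
  have key : φ w₁ * exp (-k₂) = φ w₂ * exp (-k₁) := by
    linear_combination exp (-k₂) * hφ - φ w₂ * he + φ w₁ * he - exp (-k₁) * hφ
  rw [exp_neg, exp_neg] at key
  field_simp at key
  linear_combination key

theorem height_sigmoid_ray {w : E} {k : ℝ} {c : ℝ → E}
    (hφξ : φ ξ = cst) (hw : 0 < φ w) (hc : ∀ t, c t = ξ + sigmoid (k - 2 * t) • w) :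
    (∀ t, 0 < φ (c t) - cst) ∧ Tendsto (fun t => φ (c t) - cst) atTop (𝓝 0) ∧
      (fun t => φ (c t) - cst) ~[atTop] fun t => φ w * exp k * exp (-(2 * t)) := by
  have hk := tendsto_sub_two_mul_atTop_atBot k
  have h : ∀ t, φ (c t) - cst = φ w * sigmoid (k - 2 * t) := fun t => by
    simp [hc, hφξ, mul_comm]
  simp only [h]
  refine ⟨fun t => mul_pos hw (sigmoid_pos _), by
    simpa using (tendsto_sigmoid_atBot.comp hk).const_mul (φ w), ?_⟩
  refine (IsEquivalent.refl (u := fun _ : ℝ => φ w) (l := atTop) |>.mul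
    (isEquivalent_sigmoid_exp.comp_tendsto hk)).congr_right (Eventually.of_forall fun t => ?_)
  simp only [Pi.mul_apply, Function.comp_apply, sub_eq_add_neg, exp_add]
  ring

theorem IsHilbertDist.tendsto_dist_sigmoid (hd : IsHilbertDist Ω d) (hconv : Convex ℝ Ω)
    (hop : IsOpen Ω) (hbd : Bornology.IsBounded Ω)
    (hflat : ∀ c > 0, ∀ᶠ z in 𝓝[frontier Ω] ξ, φ z - cst ≤ c * ‖z - ξ‖) (hφξ : φ ξ = cst)
    {w₁ w₂ : E} (hind : LinearIndependent ℝ ![w₁, w₂]) (hβ₁ : 0 < φ w₁) (hβ₂ : 0 < φ w₂)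
    {k₁ k₂ : ℝ} (hrel : φ w₁ * exp k₁ = φ w₂ * exp k₂) {c₁ c₂ : ℝ → E}
    (hc₁Ω : ∀ t, c₁ t ∈ Ω) (hc₂Ω : ∀ t, c₂ t ∈ Ω)
    (hc₁ : ∀ t, c₁ t = ξ + sigmoid (k₁ - 2 * t) • w₁)
    (hc₂ : ∀ t, c₂ t = ξ + sigmoid (k₂ - 2 * t) • w₂) :
    Tendsto (fun t => d (c₁ t) (c₂ t)) atTop (𝓝 0) := by
  have hne : ∀ t, c₁ t ≠ c₂ t := fun t h => by
    rw [hc₁, hc₂, add_right_inj] at h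
    exact (sigmoid_pos _).ne' (LinearIndependent.pair_iff.mp hind _ (-sigmoid (k₂ - 2 * t))
      (by rw [h, neg_smul, add_neg_cancel])).1
  have hexit : ∀ {x y : E}, x ∈ Ω → x ≠ y → ∃ s : ℝ, 0 < s ∧ x + s • (x - y) ∈ frontier Ω := by
    intro x y hx hxy
    obtain ⟨m, M, hmem, -, hM⟩ :=
      hconv.exists_mem_iff_mem_Ioo hop hbd hx (sub_ne_zero.mpr hxy)
    exact ⟨M, ((hmem 0).mp (by simpa using hx)).2, hM⟩
  choose s₁ hs₁ hs₁Ω using fun t => hexit (hc₁Ω t) (hne t)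
  choose s₂ hs₂ hs₂Ω using fun t => hexit (hc₂Ω t) (hne t).symm
  obtain ⟨hpos₁, hlim₁, hequiv₁⟩ := height_sigmoid_ray hφξ hβ₁ hc₁
  obtain ⟨hpos₂, hlim₂, hequiv₂⟩ := height_sigmoid_ray hφξ hβ₂ hc₂
  rw [hrel] at hequiv₁
  have hequiv : (fun t => φ (c₂ t) - cst) ~[atTop] fun t => φ (c₁ t) - cst :=
    hequiv₂.trans hequiv₁.symm
  have hO₁ := isBigO_sub_height (l := atTop) hφξ hβ₁.ne' hc₁
  have hO₂ := isBigO_sub_height (l := atTop) hφξ hβ₂.ne' hc₂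
  have hs₁top := tendsto_atTop_of_height_isEquivalent hflat (fun t => (hs₁ t).le) hs₁Ω
    hpos₁ hlim₁ hO₁ hO₂ hequiv
  have hs₂top := tendsto_atTop_of_height_isEquivalent hflat (fun t => (hs₂ t).le) hs₂Ω
    hpos₂ hlim₂ hO₂ hO₁ hequiv.symm
  have hdist : ∀ t, d (c₁ t) (c₂ t) = log ((1 + (s₁ t)⁻¹) * (1 + (s₂ t)⁻¹)) / 2 := fun t =>
    hd.dist_eq_log (hc₁Ω t) (hc₂Ω t) (hne t) (hs₁ t) (hs₂ t) (hs₁Ω t) (hs₂Ω t)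
  have hprod : Tendsto (fun t => (1 + (s₁ t)⁻¹) * (1 + (s₂ t)⁻¹)) atTop (𝓝 1) := by
    simpa using (hs₁top.inv_tendsto_atTop.const_add 1).mul (hs₂top.inv_tendsto_atTop.const_add 1)
  simpa [hdist] using ((continuousAt_log one_ne_zero).tendsto.comp hprod).div_const 2

end Height

end

theorem prop_5_1_2_general {E : Type*} [NormedAddCommGroup E] [NormedSpace ℝ E]
    [FiniteDimensional ℝ E]
    (Ω : Set E) (hbd : Bornology.IsBounded Ω)
    (hop : IsOpen Ω) (hconv : Convex ℝ Ω)
    (d : E → E → ℝ)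
    (hd0 : ∀ x ∈ Ω, d x x = 0)
    (hd : ∀ x ∈ Ω, ∀ y ∈ Ω, x ≠ y → ∀ a ∈ frontier Ω, ∀ b ∈ frontier Ω,
      (∃ s > (0 : ℝ), a = x + s • (x - y)) → (∃ t > (0 : ℝ), b = y + t • (y - x)) →
      d x y = (1 / 2) * Real.log ((‖y - a‖ * ‖x - b‖) / (‖x - a‖ * ‖y - b‖)))
    (c₁ c₂ : ℝ → E)
    (hc₁Ω : ∀ t : ℝ, c₁ t ∈ Ω) (hc₂Ω : ∀ t : ℝ, c₂ t ∈ Ω)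
    (hline₁ : ∃ p q : E, ∀ t : ℝ, ∃ r : ℝ, c₁ t = p + r • q)
    (hline₂ : ∃ p q : E, ∀ t : ℝ, ∃ r : ℝ, c₂ t = p + r • q)
    (hgeo₁ : ∀ s t : ℝ, d (c₁ s) (c₁ t) = |s - t|)
    (hgeo₂ : ∀ s t : ℝ, d (c₂ s) (c₂ t) = |s - t|)
    (ξ : E) (hξ : ξ ∈ frontier Ω)
    (hlim₁ : Tendsto c₁ atTop (nhds ξ)) (hlim₂ : Tendsto c₂ atTop (nhds ξ))
    (a₁ a₂ : E) (ha : a₁ ≠ a₂)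
    (hlim₁' : Tendsto c₁ atBot (nhds a₁)) (hlim₂' : Tendsto c₂ atBot (nhds a₂))
    (H : Set E) (hH : IsAffineHyperplane H) (hξH : ξ ∈ H) (hHΩ : H ∩ Ω = ∅)
    (huniq : ∀ H' : Set E, IsAffineHyperplane H' → ξ ∈ H' → H' ∩ Ω = ∅ → H' = H)
    (p : E) (hpH : p ∈ H)
    (hp₁ : ∃ r : ℝ, p = a₁ + r • (a₂ - a₁))
    (hp₂ : ∃ r : ℝ, p = c₁ 0 + r • (c₂ 0 - c₁ 0)) :
    Tendsto (fun t : ℝ => d (c₁ t) (c₂ t)) atTop (nhds 0) := by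
  obtain ⟨φ, cst, hφΩ, rfl⟩ := hH.exists_lt_of_inter_eq_empty hconv hHΩ
  have hφξ : φ ξ = cst := hξH
  have hΩd : IsHilbertDist Ω d := ⟨hd0, hd⟩
  obtain ⟨hch₁, k₁, hc₁⟩ := hΩd.isChord_of_tendsto hconv hop hbd hc₁Ω hline₁ hgeo₁ hlim₁ hlim₁'
  obtain ⟨hch₂, k₂, hc₂⟩ := hΩd.isChord_of_tendsto hconv hop hbd hc₂Ω hline₂ hgeo₂ hlim₂ hlim₂'
  have hind := hch₁.linearIndependent hch₂ ha
  obtain ⟨r, rfl⟩ := hp₁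
  obtain ⟨r', hr'⟩ := hp₂
  have hrel := mul_exp_eq_of_collinear (φ := φ) (v := a₁ + r • (a₂ - a₁) - ξ) (k₁ := k₁)
    (k₂ := k₂) (r := r) (r' := r') hind (by module)
    (by rw [hr', hc₁, hc₂, mul_zero, sub_zero, sub_zero]; module)
    (by rw [map_sub, show φ _ = cst from hpH, hφξ, sub_self])
  exact hΩd.tendsto_dist_sigmoid hconv hop hbd
    (fun _ hc => eventually_height_le_mul_norm_sub hop hconv (hc₁Ω 0) hφΩ hξ.1 hφξ huniq hc)
    hφξ hind (hch₁.height_pos hφΩ hφξ) (hch₂.height_pos hφΩ hφξ) hrel hc₁Ω hc₂Ω hc₁ hc₂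

/-- Proposition 5.1(2) (the strong stable manifold statement, in an affine chart):
two unit-speed straight geodesics with the same smooth forward endpoint `ξ`, whose
backward endpoints `a₁ ≠ a₂` and footpoints `c₁(0) ≠ c₂(0)` span lines meeting at a point
of the unique supporting hyperplane `H` at `ξ`, are forward asymptotic. -/
theorem prop_5_1_2 {E : Type*} [NormedAddCommGroup E] [NormedSpace ℝ E]
    [FiniteDimensional ℝ E]
    (Ω : Set E) (hne : Ω.Nonempty) (hbd : Bornology.IsBounded Ω)
    (hop : IsOpen Ω) (hconv : Convex ℝ Ω)
    (d : E → E → ℝ)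
    (hd0 : ∀ x ∈ Ω, d x x = 0)
    (hd : ∀ x ∈ Ω, ∀ y ∈ Ω, x ≠ y → ∀ a ∈ frontier Ω, ∀ b ∈ frontier Ω,
      (∃ s > (0 : ℝ), a = x + s • (x - y)) → (∃ t > (0 : ℝ), b = y + t • (y - x)) →
      d x y = (1 / 2) * Real.log ((‖y - a‖ * ‖x - b‖) / (‖x - a‖ * ‖y - b‖)))
    (c₁ c₂ : ℝ → E)
    (hc₁Ω : ∀ t : ℝ, c₁ t ∈ Ω) (hc₂Ω : ∀ t : ℝ, c₂ t ∈ Ω)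
    (hline₁ : ∃ p q : E, ∀ t : ℝ, ∃ r : ℝ, c₁ t = p + r • q)
    (hline₂ : ∃ p q : E, ∀ t : ℝ, ∃ r : ℝ, c₂ t = p + r • q)
    (hgeo₁ : ∀ s t : ℝ, d (c₁ s) (c₁ t) = |s - t|)
    (hgeo₂ : ∀ s t : ℝ, d (c₂ s) (c₂ t) = |s - t|)
    (ξ : E) (hξ : ξ ∈ frontier Ω)
    (hlim₁ : Tendsto c₁ atTop (nhds ξ)) (hlim₂ : Tendsto c₂ atTop (nhds ξ))
    (a₁ a₂ : E) (ha : a₁ ≠ a₂)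
    (hlim₁' : Tendsto c₁ atBot (nhds a₁)) (hlim₂' : Tendsto c₂ atBot (nhds a₂))
    (h0 : c₁ 0 ≠ c₂ 0)
    (H : Set E) (hH : IsAffineHyperplane H) (hξH : ξ ∈ H) (hHΩ : H ∩ Ω = ∅)
    (huniq : ∀ H' : Set E, IsAffineHyperplane H' → ξ ∈ H' → H' ∩ Ω = ∅ → H' = H)
    (p : E) (hpH : p ∈ H)
    (hp₁ : ∃ r : ℝ, p = a₁ + r • (a₂ - a₁))
    (hp₂ : ∃ r : ℝ, p = c₁ 0 + r • (c₂ 0 - c₁ 0)) :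
    Tendsto (fun t : ℝ => d (c₁ t) (c₂ t)) atTop (nhds 0) :=
  prop_5_1_2_general Ω hbd hop hconv d hd0 hd c₁ c₂ hc₁Ω hc₂Ω hline₁ hline₂ hgeo₁ hgeo₂ ξ hξ hlim₁
    hlim₂ a₁ a₂ ha hlim₁' hlim₂' H hH hξH hHΩ huniq p hpH hp₁ hp₂
end

section
/- Let V be a finite-dimensional real normed vector space and C ⊆ V a properly convex open cone. Let g ∈ GL(V) with g(C) = C, and suppose g is biproximal with attracting line L⁺ = ℝ·v⁺, repelling line L⁻ = ℝ·v⁻ and invariant complement W, where v⁺ and v⁻ are nonzero vectors lying in the closure of C. Then the following are equivalent: (i) the axis of g meets C, i.e. there exist s, t > 0 with s·v⁺ + t·v⁻ ∈ C; (ii) the boundary point [v⁺] is smooth, i.e. any two nonzero linear functionals φ, ψ : V → ℝ that are nonnegative on C and vanish at v⁺ are proportional. Moreover, when these hold, every nonzero linear functional φ : V → ℝ that is nonnegative on C and vanishes at v⁺ vanishes on all of L⁺ ⊕ W (so the unique supporting hyperplane at [v⁺] is the projectivization of ℝ·v⁺ ⊕ W). (Lemma 3.1, stated in the cone model of projective convex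 geometry.) -/
/-!
Let `ξ` be the functional with kernel `ℝ v⁺ ⊕ W` and `ξ v⁻ = 1`, and let `μ > 0` be the eigenvalue
of `g` at `v⁻`. Projecting along `ℝ v⁻` onto `ℝ v⁺ ⊕ W`, the repelling property of `g⁻¹` turns into
`μⁿ ‖g⁻ⁿ y‖ → 0` for every `y ∈ ℝ v⁺ ⊕ W`. Hence `μⁿ g⁻ⁿ x → ξ(x) v⁻` for `x ∈ C`, so `ξ ≥ 0` on
`C`: it is a supporting functional at `v⁺` that does not vanish at `v⁻`.

If `s v⁺ + t v⁻ ∈ C`, a ball of radius `δ` around it lies in `C`, and applying `gⁿ` to it shows that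
every supporting functional `φ` at `v⁺` satisfies `δ |φ y| ≤ t φ(v⁻) μⁿ ‖g⁻ⁿ y‖ → 0` on
`ℝ v⁺ ⊕ W`; so `φ` is determined by `φ(v⁻)` and `[v⁺]` is smooth. Conversely, if `v⁺ + v⁻ ∉ C`,
a functional separating it from `C` supports `C` at both `v⁺` and `v⁻`, hence is not proportional
to `ξ`.
-/

open Filter Topology

/-- `C` is a properly convex open cone in `V`. -/
def IsProperlyConvexOpenCone {V : Type*} [NormedAddCommGroup V] [NormedSpace ℝ V]
    (C : Set V) : Prop :=
  C.Nonempty ∧ IsOpen C ∧ Convex ℝ C ∧ (∀ c ∈ C, ∀ t : ℝ, 0 < t → t • c ∈ C) ∧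
    closure C ∩ (-closure C) ⊆ {0}

theorem nonpos_and_nonneg_of_forall_pos_mul_lt {x y : ℝ} (h : ∀ t : ℝ, 0 < t → t * x < y) :
    x ≤ 0 ∧ 0 ≤ y := by
  have hy : 0 ≤ y := by
    by_contra! hy
    have hx : x < y := by simpa using h 1 one_pos
    have := h (y / (2 * x)) (div_pos_of_neg_of_neg hy (by linarith))
    rw [div_mul_eq_mul_div, mul_div_mul_right _ _ (by linarith : x ≠ 0)] at this
    linarith
  refine ⟨?_, hy⟩
  by_contra! hx
  have := h ((y + 1) / x) (by positivity)
  rw [div_mul_cancel₀ _ hx.ne'] at this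
  linarith

theorem tendsto_zero_of_le_mul_add {ι : Type*} {l : Filter ι} {a r : ι → ℝ} {K : ℝ}
    (ha : ∀ i, 0 ≤ a i) (har : ∀ i, a i ≤ r i * (K + a i)) (hr : Tendsto r l (𝓝 0)) :
    Tendsto a l (𝓝 0) := by
  have hbd : ∀ᶠ i in l, a i ≤ 2 * K * r i := by
    filter_upwards [hr.eventually (gt_mem_nhds one_half_pos)] with i hi
    nlinarith [ha i, har i]
  have hlim : Tendsto (fun i => 2 * K * r i) l (𝓝 0) := by simpa using hr.const_mul (2 * K)
  exact squeeze_zero' (Eventually.of_forall ha) hbd hlim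

theorem LinearMap.mul_abs_apply_le_of_nonneg_on_closedBall {E : Type*} [NormedAddCommGroup E]
    [NormedSpace ℝ E] (φ : E →ₗ[ℝ] ℝ) {c : E} {δ : ℝ} (hδ : 0 < δ)
    (hφ : ∀ x ∈ Metric.closedBall c δ, 0 ≤ φ x) (z : E) : δ * |φ z| ≤ φ c * ‖z‖ := by
  rcases eq_or_ne z 0 with rfl | hz
  · simp
  have hz' : 0 < ‖z‖ := norm_pos_iff.2 hz
  have hmem : ∀ ε : ℝ, |ε| = 1 → c + (ε * (δ / ‖z‖)) • z ∈ Metric.closedBall c δ := by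
    intro ε hε
    rw [Metric.mem_closedBall, dist_eq_norm, add_sub_cancel_left, norm_smul, Real.norm_eq_abs,
      abs_mul, hε, abs_of_pos (by positivity), one_mul, div_mul_cancel₀ _ hz'.ne']
  have h₁ := hφ _ (hmem 1 abs_one)
  have h₂ := hφ _ (hmem (-1) (by simp))
  simp only [map_add, map_smul, smul_eq_mul] at h₁ h₂
  have key : δ / ‖z‖ * |φ z| ≤ φ c := by
    rcases abs_cases (φ z) with ⟨h, -⟩ | ⟨h, -⟩ <;> rw [h] <;> linarith
  calc δ * |φ z| = δ / ‖z‖ * |φ z| * ‖z‖ := by field_simp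
    _ ≤ φ c * ‖z‖ := by gcongr

theorem ContinuousLinearMap.norm_apply_le_mul_infDist_inv_norm_smul {E F : Type*}
    [NormedAddCommGroup E] [NormedSpace ℝ E] [FiniteDimensional ℝ E] [NormedAddCommGroup F]
    [NormedSpace ℝ F] (π : E →L[ℝ] F) {p : Submodule ℝ E} (hπ : ∀ z ∈ p, π z = 0) (x : E) :
    ‖π x‖ ≤ ‖π‖ * Metric.infDist (‖x‖⁻¹ • x) p * ‖x‖ := by
  have hdist : ∀ z, ‖π z‖ ≤ ‖π‖ * Metric.infDist z p := by
    intro z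
    obtain ⟨k, hk, hkz⟩ :=
      p.closed_of_finiteDimensional.exists_infDist_eq_dist ⟨0, p.zero_mem⟩ z
    rw [hkz, dist_eq_norm]
    calc ‖π z‖ = ‖π (z - k)‖ := by rw [map_sub, hπ k hk, sub_zero]
      _ ≤ ‖π‖ * ‖z - k‖ := π.le_opNorm _
  rcases eq_or_ne x 0 with rfl | hx
  · simp
  have := hdist (‖x‖⁻¹ • x)
  rw [map_smul, norm_smul, norm_inv, norm_norm, inv_mul_le_iff₀ (norm_pos_iff.2 hx)] at this
  linarith

theorem LinearMap.ext_of_codisjoint_span {R M N : Type*} [Semiring R] [AddCommMonoid M]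
    [Module R M] [AddCommMonoid N] [Module R N] {v : M} {U : Submodule R M}
    (hU : Codisjoint (Submodule.span R {v}) U) {f g : M →ₗ[R] N} (hv : f v = g v)
    (hfg : ∀ u ∈ U, f u = g u) : f = g := by
  refine LinearMap.ext_on (s := insert v U) ?_ ?_
  · rw [Submodule.span_insert, Submodule.span_eq, ← codisjoint_iff]
    exact hU
  · rintro x (rfl | hx)
    exacts [hv, hfg x hx]

theorem LinearMap.exists_eq_smul_of_codisjoint_span {K M : Type*} [Field K] [AddCommGroup M]
    [Module K M] {v : M} {U : Submodule K M} (hU : Codisjoint (Submodule.span K {v}) U)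
    {φ ψ : M →ₗ[K] K} (hφ : φ ≠ 0) (hφU : ∀ u ∈ U, φ u = 0) (hψU : ∀ u ∈ U, ψ u = 0) :
    ∃ r : K, ψ = r • φ := by
  have hφv : φ v ≠ 0 := fun h => hφ (ext_of_codisjoint_span hU h fun u hu => hφU u hu)
  refine ⟨ψ v / φ v, ext_of_codisjoint_span hU ?_ fun u hu => ?_⟩
  · simp [div_mul_cancel₀ _ hφv]
  · simp [hφU u hu, hψU u hu]

theorem Submodule.exists_coord_of_isCompl {R M : Type*} [Ring R] [IsDomain R] [AddCommGroup M]
    [Module R M] [Module.IsTorsionFree R M] {v : M} (hv : v ≠ 0) {U : Submodule R M}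
    (hU : IsCompl (span R {v}) U) :
    ∃ ξ : M →ₗ[R] R, ξ v = 1 ∧ (∀ u ∈ U, ξ u = 0) ∧ ∀ x, x - ξ x • v ∈ U := by
  refine ⟨(LinearEquiv.coord R M v hv).toLinearMap ∘ₗ (span R {v}).projectionOnto U hU,
    ?_, fun u hu => ?_, fun x => ?_⟩
  · simpa [projectionOnto_apply_of_mem_left hU (mem_span_singleton_self v)]
      using LinearEquiv.coord_self R M v hv
  · simp [projectionOnto_apply_of_mem_right hU hu]
  · simpa [LinearEquiv.coord_apply_smul] using sub_projection_mem hU x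

namespace LinearEquiv

variable {R M : Type*} [Semiring R] [AddCommMonoid M] [Module R M] {g : M ≃ₗ[R] M}

theorem exists_apply_eq_smul_of_map_span {v : M}
    (h : (Submodule.span R {v}).map (g : M →ₗ[R] M) = Submodule.span R {v}) :
    ∃ μ : R, g v = μ • v := by
  have : g v ∈ Submodule.span R {v} :=
    h ▸ Submodule.mem_map_of_mem (Submodule.mem_span_singleton_self v)
  obtain ⟨μ, hμ⟩ := Submodule.mem_span_singleton.1 this
  exact ⟨μ, hμ.symm⟩

theorem pow_apply_of_apply_eq_smul {v : M} {μ : R} (h : g v = μ • v) (n : ℕ) :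
    (g ^ n) v = μ ^ n • v := by
  induction n with
  | zero => simp
  | succ n ih => rw [pow_succ, mul_apply, h, map_smul, ih, smul_smul, pow_succ']

theorem inv_pow_apply_of_apply_eq_smul {K V : Type*} [DivisionRing K] [AddCommGroup V]
    [Module K V] {g : V ≃ₗ[K] V} {v : V} {μ : K} (hμ : μ ≠ 0) (h : g v = μ • v) (n : ℕ) :
    (g⁻¹ ^ n) v = μ⁻¹ ^ n • v := by
  refine (g⁻¹).pow_apply_of_apply_eq_smul ?_ n
  rw [coe_inv, symm_apply_eq, map_smul, h, smul_smul, inv_mul_cancel₀ hμ, one_smul]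

theorem image_inv_eq {s : Set M} (h : g '' s = s) : ⇑g⁻¹ '' s = s := by
  conv_lhs => rw [← h]
  rw [coe_inv, ← Set.image_comp]
  simp

theorem mapsTo_pow_of_image_eq {s : Set M} (h : g '' s = s) (n : ℕ) : Set.MapsTo ⇑(g ^ n) s s := by
  rw [coe_pow]
  exact (h ▸ Set.mapsTo_image g s).iterate n

theorem pow_apply_inv_pow_apply (n : ℕ) (x : M) : (g ^ n) ((g⁻¹ ^ n) x) = x := by
  rw [← mul_apply, inv_pow, mul_inv_cancel]
  rfl

end LinearEquiv

namespace IsProperlyConvexOpenCone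

variable {V : Type*} [NormedAddCommGroup V] [NormedSpace ℝ V] {C : Set V}

theorem smul_mem_closure (hC : IsProperlyConvexOpenCone C) {t : ℝ} (ht : 0 < t) {x : V}
    (hx : x ∈ closure C) : t • x ∈ closure C :=
  Set.MapsTo.closure (fun c hc => hC.2.2.2.1 c hc t ht) (continuous_const_smul t) hx

theorem nonneg_of_smul_mem_closure (hC : IsProperlyConvexOpenCone C) {v : V}
    (hv : v ∈ closure C) (hv0 : v ≠ 0) {a : ℝ} (ha : a • v ∈ closure C) : 0 ≤ a := by
  by_contra! ha0
  have hneg : -v ∈ closure C := by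
    have := hC.smul_mem_closure (inv_pos.2 (neg_pos.2 ha0)) ha
    rwa [smul_smul, inv_neg, neg_mul, inv_mul_cancel₀ ha0.ne, neg_smul, one_smul] at this
  exact hv0 (hC.2.2.2.2 ⟨hv, Set.mem_neg.2 hneg⟩)

theorem exists_nonneg_of_notMem (hC : IsProperlyConvexOpenCone C) {m : V} (hm : m ∉ C) :
    ∃ φ : V →ₗ[ℝ] ℝ, φ ≠ 0 ∧ (∀ c ∈ C, 0 ≤ φ c) ∧ φ m ≤ 0 := by
  obtain ⟨⟨c₀, hc₀⟩, hopen, hconv, hcone, -⟩ := hC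
  obtain ⟨f, hf⟩ := geometric_hahn_banach_open_point hconv hopen hm
  have hsign : ∀ c ∈ C, f c ≤ 0 ∧ 0 ≤ f m := fun c hc =>
    nonpos_and_nonneg_of_forall_pos_mul_lt fun t ht => by simpa using hf _ (hcone c hc t ht)
  refine ⟨-(f : V →ₗ[ℝ] ℝ), fun h0 => ?_, fun c hc => by simpa using (hsign c hc).1,
    by simpa using (hsign c₀ hc₀).2⟩
  have := hf c₀ hc₀
  have h₀ := LinearMap.congr_fun h0 c₀
  have hm' := LinearMap.congr_fun h0 m
  simp only [LinearMap.neg_apply, ContinuousLinearMap.coe_coe, LinearMap.zero_apply,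
    neg_eq_zero] at h₀ hm'
  linarith

theorem eigenvalue_pos [FiniteDimensional ℝ V] (hC : IsProperlyConvexOpenCone C)
    {g : V ≃ₗ[ℝ] V} (hgC : ⇑g '' C = C) {v : V} (hv : v ∈ closure C) (hv0 : v ≠ 0) {μ : ℝ}
    (hgv : g v = μ • v) : 0 < μ := by
  have hμv : μ • v ∈ closure C :=
    hgv ▸ (hgC ▸ Set.mapsTo_image g C).closure g.toContinuousLinearEquiv.continuous hv
  refine (hC.nonneg_of_smul_mem_closure hv hv0 hμv).lt_of_ne' fun hμ => hv0 ?_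
  rwa [hμ, zero_smul, LinearEquiv.map_eq_zero_iff] at hgv

end IsProperlyConvexOpenCone

theorem LinearMap.nonneg_of_mem_closure {V : Type*} [NormedAddCommGroup V] [NormedSpace ℝ V]
    [FiniteDimensional ℝ V] {C : Set V} (φ : V →ₗ[ℝ] ℝ) (hφ : ∀ c ∈ C, 0 ≤ φ c) {x : V}
    (hx : x ∈ closure C) : 0 ≤ φ x :=
  closure_minimal hφ (isClosed_le continuous_const φ.continuous_of_finiteDimensional) hx

theorem tendsto_pow_mul_norm_inv_pow_apply_of_tendsto_infDist {V : Type*} [NormedAddCommGroup V]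
    [NormedSpace ℝ V] [FiniteDimensional ℝ V] {g : V ≃ₗ[ℝ] V} {v y : V} {μ : ℝ} (hμ : 0 < μ)
    (hgv : g v = μ • v) {ξ : V →ₗ[ℝ] ℝ} (hξv : ξ v = 1) (hy : ∀ n : ℕ, ξ ((g⁻¹ ^ n) y) = 0)
    (hrep : Tendsto (fun n : ℕ => Metric.infDist (‖(g⁻¹ ^ n) (v + y)‖⁻¹ • (g⁻¹ ^ n) (v + y))
      (Submodule.span ℝ {v} : Set V)) atTop (𝓝 0)) :
    Tendsto (fun n : ℕ => μ ^ n * ‖(g⁻¹ ^ n) y‖) atTop (𝓝 0) := by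
  -- `π` projects onto `ker ξ` along `ℝ v`
  let π : V →L[ℝ] V := LinearMap.toContinuousLinearMap (LinearMap.id - ξ.smulRight v)
  have hπ : ∀ z, π z = z - ξ z • v := fun z => rfl
  have hπv : ∀ z ∈ Submodule.span ℝ {v}, π z = 0 := by
    intro z hz
    obtain ⟨a, rfl⟩ := Submodule.mem_span_singleton.1 hz
    simp [hπ, hξv]
  have hgv' := LinearEquiv.inv_pow_apply_of_apply_eq_smul hμ.ne' hgv
  have hπy : ∀ n : ℕ, π ((g⁻¹ ^ n) (v + y)) = (g⁻¹ ^ n) y := by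
    intro n
    rw [map_add, map_add, hgv', hπv _ (Submodule.mem_span_singleton.2 ⟨_, rfl⟩), zero_add, hπ,
      hy n, zero_smul, sub_zero]
  set r : ℕ → ℝ := fun n => ‖π‖ * Metric.infDist (‖(g⁻¹ ^ n) (v + y)‖⁻¹ • (g⁻¹ ^ n) (v + y))
    (Submodule.span ℝ {v} : Set V)
  refine tendsto_zero_of_le_mul_add (r := r) (K := ‖v‖) (fun n => by positivity) (fun n => ?_)
    (by simpa only [mul_zero] using hrep.const_mul ‖π‖)
  have hle := π.norm_apply_le_mul_infDist_inv_norm_smul hπv ((g⁻¹ ^ n) (v + y))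
  rw [hπy] at hle
  have hnorm : ‖(g⁻¹ ^ n) (v + y)‖ ≤ (μ ^ n)⁻¹ * ‖v‖ + ‖(g⁻¹ ^ n) y‖ := by
    rw [map_add, hgv', ← inv_pow]
    refine (norm_add_le _ _).trans_eq ?_
    rw [norm_smul, Real.norm_of_nonneg (by positivity)]
  have hr : 0 ≤ r n := mul_nonneg (norm_nonneg _) Metric.infDist_nonneg
  calc μ ^ n * ‖(g⁻¹ ^ n) y‖ ≤ μ ^ n * (r n * ((μ ^ n)⁻¹ * ‖v‖ + ‖(g⁻¹ ^ n) y‖)) := by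
        gcongr; exact hle.trans (mul_le_mul_of_nonneg_left hnorm hr)
    _ = r n * (‖v‖ + μ ^ n * ‖(g⁻¹ ^ n) y‖) := by field_simp

namespace IsBiproximal

variable {V : Type*} [NormedAddCommGroup V] [NormedSpace ℝ V] {g : V ≃ₗ[ℝ] V}

theorem isCompl {Lp Lm W : Submodule ℝ V} (hbi : IsBiproximal g Lp Lm W) : IsCompl Lm (Lp ⊔ W) where
  disjoint := (disjoint_iff.2 hbi.inf_lines).symm.disjoint_sup_right_of_disjoint_sup_left
    (sup_comm Lp Lm ▸ disjoint_iff.2 hbi.inf_W)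
  codisjoint := by rw [codisjoint_iff, ← hbi.sup_top, sup_left_comm, sup_assoc]

theorem mapsTo_inv_pow_sup {Lp Lm W : Submodule ℝ V} (hbi : IsBiproximal g Lp Lm W) (n : ℕ) :
    Set.MapsTo ⇑(g⁻¹ ^ n) (Lp ⊔ W : Submodule ℝ V) (Lp ⊔ W : Submodule ℝ V) := by
  have h : ⇑g '' (Lp ⊔ W : Submodule ℝ V) = (Lp ⊔ W : Submodule ℝ V) := by
    rw [← LinearEquiv.coe_coe, ← Submodule.map_coe, Submodule.map_sup, hbi.map_Lp, hbi.map_W]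
  exact (g⁻¹).mapsTo_pow_of_image_eq (g.image_inv_eq h) n

variable [FiniteDimensional ℝ V] {vp vm : V} {W : Submodule ℝ V}

theorem tendsto_pow_mul_norm_inv_pow_apply
    (hbi : IsBiproximal g (Submodule.span ℝ {vp}) (Submodule.span ℝ {vm}) W) (hvm : vm ≠ 0)
    {μ : ℝ} (hμ : 0 < μ) (hgvm : g vm = μ • vm) {y : V} (hy : y ∈ Submodule.span ℝ {vp} ⊔ W) :
    Tendsto (fun n : ℕ => μ ^ n * ‖(g⁻¹ ^ n) y‖) atTop (𝓝 0) := by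
  obtain ⟨ξ, hξvm, hξ, -⟩ := Submodule.exists_coord_of_isCompl hvm hbi.isCompl
  have hvy : vm + y ∉ Submodule.span ℝ {vp} ⊔ W := fun h => by
    simpa [hξvm, hξ y hy] using hξ _ h
  exact tendsto_pow_mul_norm_inv_pow_apply_of_tendsto_infDist hμ hgvm hξvm
    (fun n => hξ _ (hbi.mapsTo_inv_pow_sup n hy)) (hbi.repel _ hvy)

variable {C : Set V}

theorem exists_nonneg_coord (hC : IsProperlyConvexOpenCone C) (hgC : ⇑g '' C = C)
    (hbi : IsBiproximal g (Submodule.span ℝ {vp}) (Submodule.span ℝ {vm}) W) (hvm : vm ≠ 0)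
    (hvmC : vm ∈ closure C) :
    ∃ ξ : V →ₗ[ℝ] ℝ, (∀ c ∈ C, 0 ≤ ξ c) ∧ ξ vm = 1 ∧ ∀ u ∈ Submodule.span ℝ {vp} ⊔ W, ξ u = 0 := by
  obtain ⟨μ, hgvm⟩ := g.exists_apply_eq_smul_of_map_span hbi.map_Lm
  have hμ := hC.eigenvalue_pos hgC hvmC hvm hgvm
  obtain ⟨ξ, hξvm, hξ, hdec⟩ := Submodule.exists_coord_of_isCompl hvm hbi.isCompl
  refine ⟨ξ, fun x hx => ?_, hξvm, hξ⟩
  have hgvm' := LinearEquiv.inv_pow_apply_of_apply_eq_smul hμ.ne' hgvm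
  have hsplit : ∀ n : ℕ, μ ^ n • (g⁻¹ ^ n) x - ξ x • vm = μ ^ n • (g⁻¹ ^ n) (x - ξ x • vm) := by
    intro n
    rw [map_sub, map_smul, hgvm', smul_sub, smul_smul, smul_smul, mul_right_comm, ← mul_pow,
      mul_inv_cancel₀ hμ.ne', one_pow, one_mul]
  have hlim : Tendsto (fun n : ℕ => μ ^ n • (g⁻¹ ^ n) x) atTop (𝓝 (ξ x • vm)) := by
    rw [tendsto_iff_norm_sub_tendsto_zero]
    simp_rw [hsplit, norm_smul, Real.norm_of_nonneg (pow_pos hμ _).le]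
    exact hbi.tendsto_pow_mul_norm_inv_pow_apply hvm hμ hgvm (hdec x)
  have hmem : ξ x • vm ∈ closure C := mem_closure_of_tendsto hlim <| Eventually.of_forall
    fun n => hC.2.2.2.1 _ ((g⁻¹).mapsTo_pow_of_image_eq (g.image_inv_eq hgC) n hx) _ (pow_pos hμ n)
  exact hC.nonneg_of_smul_mem_closure hvmC hvm hmem

theorem apply_eq_zero_of_smul_add_smul_mem (hC : IsProperlyConvexOpenCone C) (hgC : ⇑g '' C = C)
    (hbi : IsBiproximal g (Submodule.span ℝ {vp}) (Submodule.span ℝ {vm}) W) (hvm : vm ≠ 0)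
    (hvmC : vm ∈ closure C) {s t : ℝ} (hc : s • vp + t • vm ∈ C) {φ : V →ₗ[ℝ] ℝ}
    (hφC : ∀ c ∈ C, 0 ≤ φ c) (hφvp : φ vp = 0) {u : V} (hu : u ∈ Submodule.span ℝ {vp} ⊔ W) :
    φ u = 0 := by
  obtain ⟨δ, hδ, hball⟩ := Metric.nhds_basis_closedBall.mem_iff.1 (hC.2.1.mem_nhds hc)
  obtain ⟨l, hgvp⟩ := g.exists_apply_eq_smul_of_map_span hbi.map_Lp
  obtain ⟨μ, hgvm⟩ := g.exists_apply_eq_smul_of_map_span hbi.map_Lm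
  have hμ := hC.eigenvalue_pos hgC hvmC hvm hgvm
  have hbound : ∀ n : ℕ, δ * |φ u| ≤ t * φ vm * (μ ^ n * ‖(g⁻¹ ^ n) u‖) := by
    intro n
    have hnn : ∀ x ∈ Metric.closedBall (s • vp + t • vm) δ, 0 ≤ (φ ∘ₗ ↑(g ^ n)) x :=
      fun x hx => hφC _ (g.mapsTo_pow_of_image_eq hgC n (hball hx))
    have := (φ ∘ₗ ↑(g ^ n)).mul_abs_apply_le_of_nonneg_on_closedBall hδ hnn ((g⁻¹ ^ n) u)
    simp only [LinearMap.comp_apply, LinearEquiv.coe_coe, LinearEquiv.pow_apply_inv_pow_apply,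
      map_add, map_smul, g.pow_apply_of_apply_eq_smul hgvp, g.pow_apply_of_apply_eq_smul hgvm,
      hφvp, smul_eq_mul, mul_zero, zero_add] at this
    linarith
  have hlim : Tendsto (fun n : ℕ => t * φ vm * (μ ^ n * ‖(g⁻¹ ^ n) u‖)) atTop (𝓝 0) := by
    simpa only [mul_zero] using
      (hbi.tendsto_pow_mul_norm_inv_pow_apply hvm hμ hgvm hu).const_mul (t * φ vm)
  have h0 : δ * |φ u| ≤ 0 := ge_of_tendsto' hlim hbound
  exact abs_eq_zero.1 (le_antisymm (nonpos_of_mul_nonpos_right h0 hδ) (abs_nonneg _))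

end IsBiproximal

theorem lemma_3_1_general {V : Type*} [NormedAddCommGroup V] [NormedSpace ℝ V]
    [FiniteDimensional ℝ V]
    (C : Set V) (hC : IsProperlyConvexOpenCone C)
    (g : V ≃ₗ[ℝ] V) (hgC : (g : V → V) '' C = C)
    (vp vm : V) (hvm : vm ≠ 0)
    (hvpC : vp ∈ closure C) (hvmC : vm ∈ closure C)
    (W : Submodule ℝ V)
    (hbi : IsBiproximal g (Submodule.span ℝ {vp}) (Submodule.span ℝ {vm}) W) :
    ((∃ s > (0 : ℝ), ∃ t > (0 : ℝ), s • vp + t • vm ∈ C) ↔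
      (∀ φ ψ : V →ₗ[ℝ] ℝ, φ ≠ 0 → (∀ c ∈ C, 0 ≤ φ c) → φ vp = 0 →
        ψ ≠ 0 → (∀ c ∈ C, 0 ≤ ψ c) → ψ vp = 0 → ∃ r : ℝ, ψ = r • φ)) ∧
    ((∃ s > (0 : ℝ), ∃ t > (0 : ℝ), s • vp + t • vm ∈ C) →
      ∀ φ : V →ₗ[ℝ] ℝ, φ ≠ 0 → (∀ c ∈ C, 0 ≤ φ c) → φ vp = 0 →
        ∀ w ∈ Submodule.span ℝ {vp} ⊔ W, φ w = 0) := by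
  have hvanish {s t : ℝ} (hc : s • vp + t • vm ∈ C) {φ : V →ₗ[ℝ] ℝ} (hφC : ∀ c ∈ C, 0 ≤ φ c)
      (hφvp : φ vp = 0) : ∀ w ∈ Submodule.span ℝ {vp} ⊔ W, φ w = 0 :=
    fun _ => hbi.apply_eq_zero_of_smul_add_smul_mem hC hgC hvm hvmC hc hφC hφvp
  refine ⟨⟨fun ⟨_, _, _, _, hc⟩ φ ψ hφ hφC hφvp _ hψC hψvp => ?_, fun hsmooth => ?_⟩,
    fun ⟨_, _, _, _, hc⟩ φ _ hφC hφvp => hvanish hc hφC hφvp⟩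
  · exact LinearMap.exists_eq_smul_of_codisjoint_span hbi.isCompl.codisjoint hφ
      (hvanish hc hφC hφvp) (hvanish hc hψC hψvp)
  · obtain ⟨ξ, hξC, hξvm, hξ⟩ := hbi.exists_nonneg_coord hC hgC hvm hvmC
    refine ⟨1, one_pos, 1, one_pos, ?_⟩
    by_contra hnot
    obtain ⟨φ, hφ, hφC, hφm⟩ := hC.exists_nonneg_of_notMem hnot
    have hφvp := φ.nonneg_of_mem_closure hφC hvpC
    have hφvm := φ.nonneg_of_mem_closure hφC hvmC
    rw [one_smul, one_smul, map_add] at hφm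
    have hξvp := hξ vp (Submodule.mem_sup_left (Submodule.mem_span_singleton_self vp))
    obtain ⟨r, hr⟩ := hsmooth φ ξ hφ hφC (by linarith) (fun h => by simp [h] at hξvm) hξC hξvp
    have := LinearMap.congr_fun hr vm
    rw [LinearMap.smul_apply, hξvm, show φ vm = 0 by linarith, smul_zero] at this
    exact one_ne_zero this

/-- Lemma 3.1 (cone model): for a biproximal automorphism `g` of a properly convex open
cone `C`, the axis of `g` meets `C` if and only if the attracting fixed point `[v⁺]` is a
smooth boundary point; moreover, in that case the unique supporting hyperplane at `[v⁺]`
is the projectivization of `ℝ·v⁺ ⊕ W`. -/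
theorem lemma_3_1 {V : Type*} [NormedAddCommGroup V] [NormedSpace ℝ V]
    [FiniteDimensional ℝ V]
    (C : Set V) (hC : IsProperlyConvexOpenCone C)
    (g : V ≃ₗ[ℝ] V) (hgC : (g : V → V) '' C = C)
    (vp vm : V) (hvp : vp ≠ 0) (hvm : vm ≠ 0)
    (hvpC : vp ∈ closure C) (hvmC : vm ∈ closure C)
    (W : Submodule ℝ V)
    (hbi : IsBiproximal g (Submodule.span ℝ {vp}) (Submodule.span ℝ {vm}) W) :
    ((∃ s > (0 : ℝ), ∃ t > (0 : ℝ), s • vp + t • vm ∈ C) ↔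
      (∀ φ ψ : V →ₗ[ℝ] ℝ, φ ≠ 0 → (∀ c ∈ C, 0 ≤ φ c) → φ vp = 0 →
        ψ ≠ 0 → (∀ c ∈ C, 0 ≤ ψ c) → ψ vp = 0 → ∃ r : ℝ, ψ = r • φ)) ∧
    ((∃ s > (0 : ℝ), ∃ t > (0 : ℝ), s • vp + t • vm ∈ C) →
      ∀ φ : V →ₗ[ℝ] ℝ, φ ≠ 0 → (∀ c ∈ C, 0 ≤ φ c) → φ vp = 0 →
        ∀ w ∈ Submodule.span ℝ {vp} ⊔ W, φ w = 0) :=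
  lemma_3_1_general C hC g hgC vp vm hvm hvpC hvmC W hbi
end

section
/- Let V₁ and V₂ be finite-dimensional real normed vector spaces with dim V₁ ≥ 1, dim V₂ ≥ 1 and dim V₁ + dim V₂ ≥ 3. For i = 1, 2 let C_i ⊆ V_i be a properly convex open cone, and let C = C₁ × C₂ ⊆ V₁ × V₂ (the decomposable cone C₁ + C₂ in V₁ ⊕ V₂). Then for every nonzero vector x in (closure C) \ C, there exists y in (closure C) \ C which is not a scalar multiple of x and such that the whole segment [x, y] = {t·x + (1 − t)·y : t ∈ [0, 1]} is contained in (closure C) \ C. (This is the first claim in the proof of the Lemma of Section 2.7: the boundary of a decomposable properly convex open set contains no strongly extremal point; hence reducible compact convex projective manifolds are higher-rank.) -/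
/-!
A boundary point `x = (x₁, x₂)` of `C₁ × C₂` has a coordinate outside its cone, say `x₁ ∉ C₁`.
Then `{x₁} × closure C₂` lies in the boundary, and moving `x₂` inside `closure C₂` gives a
segment that is projectively nontrivial as soon as `x₁ ≠ 0`. If `x₁ = 0` and `x₂ ∉ C₂`, the
roles of the factors are exchanged. The remaining case is `x = (0, x₂)` with `x₂ ∈ C₂`; one
factor has dimension at least two, hence a nonzero boundary point `z`, and `y = (z, x₂)` (the
ray through `z` misses `C₁`) or `y = (0, z)` (`z` is not a multiple of the interior point `x₂`)
does the job.
-/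

open Set Topology

lemma tendsto_smul_nhdsGT_zero {V : Type*} [AddCommGroup V] [Module ℝ V] [TopologicalSpace V]
    [ContinuousSMul ℝ V] (v : V) : Filter.Tendsto (fun t : ℝ => t • v) (𝓝[>] 0) (𝓝 0) :=
  ((continuous_id.smul continuous_const).tendsto' 0 0 (zero_smul ℝ v)).mono_left
    nhdsWithin_le_nhds

namespace IsProperlyConvexOpenCone

variable {V : Type*} [NormedAddCommGroup V] [NormedSpace ℝ V] {C : Set V}

lemma isOpen (hC : IsProperlyConvexOpenCone C) : IsOpen C := hC.2.1

lemma convex (hC : IsProperlyConvexOpenCone C) : Convex ℝ C := hC.2.2.1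

lemma smul_mem (hC : IsProperlyConvexOpenCone C) {c : V} (hc : c ∈ C) {t : ℝ} (ht : 0 < t) :
    t • c ∈ C :=
  hC.2.2.2.1 c hc t ht

lemma eq_zero_of_mem_closure_of_neg_mem_closure (hC : IsProperlyConvexOpenCone C) {z : V}
    (hz : z ∈ closure C) (hz' : -z ∈ closure C) : z = 0 :=
  hC.2.2.2.2 ⟨hz, by simpa using hz'⟩

lemma smul_mem_iff (hC : IsProperlyConvexOpenCone C) {z : V} {t : ℝ} (ht : 0 < t) :
    t • z ∈ C ↔ z ∈ C := by
  refine ⟨fun h => ?_, fun h => hC.smul_mem h ht⟩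
  simpa [smul_smul, inv_mul_cancel₀ ht.ne'] using hC.smul_mem h (inv_pos.2 ht)

lemma mem_of_zero_mem (hC : IsProperlyConvexOpenCone C) (h0 : (0 : V) ∈ C) (v : V) : v ∈ C := by
  obtain ⟨t, htv, ht⟩ := (((tendsto_smul_nhdsGT_zero v).eventually (hC.isOpen.mem_nhds h0)).and
    self_mem_nhdsWithin).exists
  exact (hC.smul_mem_iff ht).1 htv

lemma zero_notMem [Nontrivial V] (hC : IsProperlyConvexOpenCone C) : (0 : V) ∉ C := fun h0 =>
  have ⟨v, hv⟩ := exists_ne (0 : V)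
  hv (hC.eq_zero_of_mem_closure_of_neg_mem_closure (subset_closure (hC.mem_of_zero_mem h0 v))
    (subset_closure (hC.mem_of_zero_mem h0 (-v))))

lemma zero_mem_closure (hC : IsProperlyConvexOpenCone C) : (0 : V) ∈ closure C :=
  have ⟨c, hc⟩ := hC.1
  mem_closure_of_tendsto (tendsto_smul_nhdsGT_zero c)
    (eventually_nhdsWithin_of_forall fun _ ht => hC.smul_mem hc ht)

lemma nontrivial_closure [Nontrivial V] (hC : IsProperlyConvexOpenCone C) :
    (closure C).Nontrivial := by
  obtain ⟨c, hc⟩ := hC.1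
  exact ⟨c, subset_closure hc, 0, hC.zero_mem_closure, fun h => hC.zero_notMem (h ▸ hc)⟩

lemma disjoint_segment_zero [Nontrivial V] (hC : IsProperlyConvexOpenCone C) {z : V}
    (hz : z ∉ C) : Disjoint (segment ℝ 0 z) C := by
  rw [Set.disjoint_left]
  rintro _ ⟨a, b, -, hb, -, rfl⟩
  rw [smul_zero, zero_add]
  rcases hb.eq_or_lt with rfl | hb
  · simpa using hC.zero_notMem
  · exact (hC.smul_mem_iff hb).not.2 hz

lemma ne_smul_of_mem_closure_diff (hC : IsProperlyConvexOpenCone C) {x z : V} (hx : x ∈ C)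
    (hz : z ∈ closure C \ C) (hz0 : z ≠ 0) (r : ℝ) : z ≠ r • x := by
  rintro rfl
  rcases lt_trichotomy r 0 with hr | rfl | hr
  · refine hz0 (hC.eq_zero_of_mem_closure_of_neg_mem_closure hz.1 (subset_closure ?_))
    simpa [neg_smul] using hC.smul_mem hx (neg_pos.2 hr)
  · exact hz0 (zero_smul ℝ x)
  · exact hz.2 (hC.smul_mem hx hr)

/-- In dimension at least two `V \ {0}` is connected, so it cannot be split by the open sets `C`
and `(closure C)ᶜ`; the second one is nonempty because it contains `-c` for any `c ∈ C`. -/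
lemma exists_mem_closure_diff_ne_zero (hC : IsProperlyConvexOpenCone C)
    (hV : 1 < Module.rank ℝ V) : ∃ z ∈ closure C \ C, z ≠ 0 := by
  have : Nontrivial V := (rank_pos_iff_nontrivial (R := ℝ)).1 (zero_lt_one.trans hV)
  obtain ⟨c, hc⟩ := hC.1
  have hc0 : c ≠ 0 := fun h => hC.zero_notMem (h ▸ hc)
  have hnc : -c ∉ closure C := fun h =>
    hc0 (hC.eq_zero_of_mem_closure_of_neg_mem_closure (subset_closure hc) (by simpa using h))
  by_contra! hno
  have hcover : ({0}ᶜ : Set V) ⊆ C ∪ (closure C)ᶜ := fun z hz => by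
    by_cases hzC : z ∈ C
    · exact Or.inl hzC
    · exact Or.inr fun hzcl => hz (hno z ⟨hzcl, hzC⟩)
  obtain ⟨w, -, hwC, hwC'⟩ := (isConnected_compl_singleton_of_one_lt_rank hV 0).isPreconnected
    C (closure C)ᶜ hC.isOpen isClosed_closure.isOpen_compl hcover ⟨c, hc0, hc⟩
    ⟨-c, neg_ne_zero.2 hc0, hnc⟩
  exact hwC' (subset_closure hwC)

end IsProperlyConvexOpenCone

section BoundarySegment

variable {E F : Type*} [AddCommGroup E] [Module ℝ E] [TopologicalSpace E]
  [AddCommGroup F] [Module ℝ F] [TopologicalSpace F]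

/-- The cone-model form of "`[x]` is not strongly extremal": `[x] ≠ [y]` in projective space and
the segment joining them lies in the boundary. -/
def LiesOnBoundarySegment (C : Set E) (x : E) : Prop :=
  ∃ y, (∀ r : ℝ, y ≠ r • x) ∧ segment ℝ x y ⊆ closure C \ C

lemma LiesOnBoundarySegment.image {C : Set E} {x : E} (e : E ≃L[ℝ] F)
    (h : LiesOnBoundarySegment C x) : LiesOnBoundarySegment (e '' C) (e x) := by
  obtain ⟨y, hyx, hseg⟩ := h
  refine ⟨e y, fun r hr => hyx r (e.injective (by rw [hr, map_smul])), ?_⟩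
  have hcl : closure (e '' C) = e '' closure C := (e.toHomeomorph.image_closure C).symm
  rw [hcl, ← image_sdiff e.injective]
  exact (image_segment ℝ (e : E →ₗ[ℝ] F).toAffineMap x y).symm.subset.trans (image_mono hseg)

lemma LiesOnBoundarySegment.swap {s : Set E} {t : Set F} {x : F × E}
    (h : LiesOnBoundarySegment (t ×ˢ s) x) : LiesOnBoundarySegment (s ×ˢ t) x.swap := by
  simpa [image_swap_prod] using h.image (ContinuousLinearEquiv.prodComm ℝ F E)

variable [IsTopologicalAddGroup E] [ContinuousSMul ℝ E] [IsTopologicalAddGroup F]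
  [ContinuousSMul ℝ F] {s : Set E} {t : Set F}

lemma segment_subset_closure_prod_diff (hs : Convex ℝ s) (ht : Convex ℝ t) {x y : E × F}
    (hx : x ∈ closure (s ×ˢ t)) (hy : y ∈ closure (s ×ˢ t))
    (h : Disjoint (segment ℝ x.1 y.1) s ∨ Disjoint (segment ℝ x.2 y.2) t) :
    segment ℝ x y ⊆ closure (s ×ˢ t) \ s ×ˢ t := by
  intro z hz
  refine ⟨(hs.prod ht).closure.segment_subset hx hy hz, fun hzst => ?_⟩
  obtain ⟨hz₁, hz₂⟩ := Prod.segment_subset x y hz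
  rcases h with h | h
  · exact h.notMem_of_mem_left hz₁ hzst.1
  · exact h.notMem_of_mem_left hz₂ hzst.2

lemma liesOnBoundarySegment_prod_of_fst_notMem_of_fst_ne_zero (hs : Convex ℝ s)
    (ht : Convex ℝ t) (ht' : (closure t).Nontrivial) {x : E × F} (hx : x ∈ closure (s ×ˢ t))
    (hx₁ : x.1 ∉ s) (hx₁0 : x.1 ≠ 0) : LiesOnBoundarySegment (s ×ˢ t) x := by
  obtain ⟨z, hz, hzx⟩ := ht'.exists_ne x.2
  have hy : (x.1, z) ∈ closure (s ×ˢ t) := by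
    rw [closure_prod_eq] at hx ⊢
    exact ⟨hx.1, hz⟩
  refine ⟨(x.1, z), fun r hr => hzx ?_, segment_subset_closure_prod_diff hs ht hx hy (Or.inl ?_)⟩
  · obtain ⟨hr₁, hr₂⟩ := Prod.ext_iff.1 hr
    have hr1 : r = 1 := smul_left_injective ℝ hx₁0 (by simpa using hr₁.symm)
    simpa [hr1] using hr₂
  · simpa [segment_same] using hx₁

end BoundarySegment

section DecomposableCone

variable {V₁ V₂ : Type*} [NormedAddCommGroup V₁] [NormedSpace ℝ V₁] [NormedAddCommGroup V₂]
  [NormedSpace ℝ V₂] {C₁ : Set V₁} {C₂ : Set V₂}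

lemma liesOnBoundarySegment_prod_zero_left [Nontrivial V₁] (hC₁ : IsProperlyConvexOpenCone C₁)
    (hC₂ : IsProperlyConvexOpenCone C₂) (hrank : 1 < Module.rank ℝ V₁ ∨ 1 < Module.rank ℝ V₂)
    {v : V₂} (hv : v ∈ C₂) : LiesOnBoundarySegment (C₁ ×ˢ C₂) (0, v) := by
  have hx : ((0 : V₁), v) ∈ closure (C₁ ×ˢ C₂) := by
    rw [closure_prod_eq]
    exact ⟨hC₁.zero_mem_closure, subset_closure hv⟩
  rcases hrank with h | h
  · obtain ⟨z, hz, hz0⟩ := hC₁.exists_mem_closure_diff_ne_zero h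
    have hy : (z, v) ∈ closure (C₁ ×ˢ C₂) := by
      rw [closure_prod_eq]
      exact ⟨hz.1, subset_closure hv⟩
    exact ⟨(z, v), fun r hr => hz0 (by simpa using congrArg Prod.fst hr),
      segment_subset_closure_prod_diff hC₁.convex hC₂.convex hx hy
        (Or.inl (hC₁.disjoint_segment_zero hz.2))⟩
  · obtain ⟨z, hz, hz0⟩ := hC₂.exists_mem_closure_diff_ne_zero h
    have hy : ((0 : V₁), z) ∈ closure (C₁ ×ˢ C₂) := by
      rw [closure_prod_eq]
      exact ⟨hC₁.zero_mem_closure, hz.1⟩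
    exact ⟨(0, z), fun r hr => hC₂.ne_smul_of_mem_closure_diff hv hz hz0 r (congrArg Prod.snd hr),
      segment_subset_closure_prod_diff hC₁.convex hC₂.convex hx hy
        (Or.inl (by simpa [segment_same] using hC₁.zero_notMem))⟩

lemma liesOnBoundarySegment_prod_of_fst_notMem [Nontrivial V₁] [Nontrivial V₂]
    (hC₁ : IsProperlyConvexOpenCone C₁) (hC₂ : IsProperlyConvexOpenCone C₂)
    (hrank : 1 < Module.rank ℝ V₁ ∨ 1 < Module.rank ℝ V₂) {x : V₁ × V₂}
    (hx : x ∈ closure (C₁ ×ˢ C₂)) (hx₁ : x.1 ∉ C₁) (hx0 : x ≠ 0) :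
    LiesOnBoundarySegment (C₁ ×ˢ C₂) x := by
  obtain ⟨x₁, x₂⟩ := x
  by_cases hx₁0 : x₁ = 0
  · subst hx₁0
    by_cases hx₂ : x₂ ∈ C₂
    · exact liesOnBoundarySegment_prod_zero_left hC₁ hC₂ hrank hx₂
    · have hx' : (x₂, (0 : V₁)) ∈ closure (C₂ ×ˢ C₁) := by
        rw [closure_prod_eq] at hx ⊢
        exact ⟨hx.2, hx.1⟩
      exact (liesOnBoundarySegment_prod_of_fst_notMem_of_fst_ne_zero hC₂.convex hC₁.convex
        hC₁.nontrivial_closure hx' hx₂ (by simpa using hx0)).swap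
  · exact liesOnBoundarySegment_prod_of_fst_notMem_of_fst_ne_zero hC₁.convex hC₂.convex
      hC₂.nontrivial_closure hx hx₁ hx₁0

lemma liesOnBoundarySegment_prod [Nontrivial V₁] [Nontrivial V₂]
    (hC₁ : IsProperlyConvexOpenCone C₁) (hC₂ : IsProperlyConvexOpenCone C₂)
    (hrank : 1 < Module.rank ℝ V₁ ∨ 1 < Module.rank ℝ V₂) {x : V₁ × V₂}
    (hx : x ∈ closure (C₁ ×ˢ C₂) \ C₁ ×ˢ C₂) (hx0 : x ≠ 0) :
    LiesOnBoundarySegment (C₁ ×ˢ C₂) x := by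
  rcases not_and_or.1 hx.2 with hx₁ | hx₂
  · exact liesOnBoundarySegment_prod_of_fst_notMem hC₁ hC₂ hrank hx.1 hx₁ hx0
  · have hx' : x.swap ∈ closure (C₂ ×ˢ C₁) := by
      rw [closure_prod_eq] at hx ⊢
      exact ⟨hx.1.2, hx.1.1⟩
    exact (liesOnBoundarySegment_prod_of_fst_notMem hC₂ hC₁ hrank.symm hx' hx₂
      (Prod.swap_injective.ne hx0)).swap

end DecomposableCone

theorem decomposable_no_strongly_extremal_general
    {V₁ V₂ : Type*} [NormedAddCommGroup V₁] [NormedSpace ℝ V₁]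
    [NormedAddCommGroup V₂] [NormedSpace ℝ V₂]
    (h1 : 1 ≤ Module.finrank ℝ V₁) (h2 : 1 ≤ Module.finrank ℝ V₂)
    (h3 : 3 ≤ Module.finrank ℝ V₁ + Module.finrank ℝ V₂)
    (C₁ : Set V₁) (C₂ : Set V₂)
    (hC₁ : IsProperlyConvexOpenCone C₁) (hC₂ : IsProperlyConvexOpenCone C₂) :
    ∀ x ∈ closure (C₁ ×ˢ C₂) \ (C₁ ×ˢ C₂), x ≠ 0 →
      ∃ y ∈ closure (C₁ ×ˢ C₂) \ (C₁ ×ˢ C₂), (∀ r : ℝ, y ≠ r • x) ∧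
        ∀ t ∈ Set.Icc (0 : ℝ) 1,
          t • x + (1 - t) • y ∈ closure (C₁ ×ˢ C₂) \ (C₁ ×ˢ C₂) := by
  have : Nontrivial V₁ := Module.nontrivial_of_finrank_pos h1
  have : Nontrivial V₂ := Module.nontrivial_of_finrank_pos h2
  have hrank : 1 < Module.rank ℝ V₁ ∨ 1 < Module.rank ℝ V₂ := by
    rcases (by omega : 1 < Module.finrank ℝ V₁ ∨ 1 < Module.finrank ℝ V₂) with h | h
    · exact Or.inl (Module.one_lt_rank_of_one_lt_finrank h)
    · exact Or.inr (Module.one_lt_rank_of_one_lt_finrank h)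
  intro x hx hx0
  obtain ⟨y, hyx, hseg⟩ := liesOnBoundarySegment_prod hC₁ hC₂ hrank hx hx0
  exact ⟨y, hseg (right_mem_segment ℝ x y), hyx,
    fun t ht => hseg ⟨t, 1 - t, ht.1, sub_nonneg.2 ht.2, add_sub_cancel t 1, rfl⟩⟩

/-- The first claim in the proof of the Lemma of Section 2.7: the boundary of a
decomposable properly convex cone `C = C₁ × C₂` contains no strongly extremal point:
every nonzero boundary vector `x` lies on a nontrivial boundary segment `[x, y]` with
`y` not a scalar multiple of `x`. -/
theorem decomposable_no_strongly_extremal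
    {V₁ V₂ : Type*} [NormedAddCommGroup V₁] [NormedSpace ℝ V₁] [FiniteDimensional ℝ V₁]
    [NormedAddCommGroup V₂] [NormedSpace ℝ V₂] [FiniteDimensional ℝ V₂]
    (h1 : 1 ≤ Module.finrank ℝ V₁) (h2 : 1 ≤ Module.finrank ℝ V₂)
    (h3 : 3 ≤ Module.finrank ℝ V₁ + Module.finrank ℝ V₂)
    (C₁ : Set V₁) (C₂ : Set V₂)
    (hC₁ : IsProperlyConvexOpenCone C₁) (hC₂ : IsProperlyConvexOpenCone C₂) :
    ∀ x ∈ closure (C₁ ×ˢ C₂) \ (C₁ ×ˢ C₂), x ≠ 0 →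
      ∃ y ∈ closure (C₁ ×ˢ C₂) \ (C₁ ×ˢ C₂), (∀ r : ℝ, y ≠ r • x) ∧
        ∀ t ∈ Set.Icc (0 : ℝ) 1,
          t • x + (1 - t) • y ∈ closure (C₁ ×ˢ C₂) \ (C₁ ×ˢ C₂) :=
  decomposable_no_strongly_extremal_general h1 h2 h3 C₁ C₂ hC₁ hC₂
end
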